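/- arXiv:2409.12340 — 10 statements merged into one kernel-verified Lean document; each statement's English description precedes it below -/
import Mathlib

section
/- For every integer k ≥ 4, the family of sets A_j = j + A (mod 3k+1) for 0 ≤ j < 3k+1, where A = {1, 8} ∪ {3i : 3 ≤ i ≤ k} ⊆ ℤ/(3k+1), is an intersecting family of k-element subsets of ℤ/(3k+1): any two translates A_i and A_j have nonempty intersection. -/
/-- For every integer `k ≥ 4`, the translates `A_j = j + A` of
`A = {1, 8} ∪ {3i : 3 ≤ i ≤ k} ⊆ ℤ/(3k+1)` form an intersecting family of
`k`-element subsets of `ℤ/(3k+1)`. -/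
theorem stmt0 (k : ℕ) (hk : 4 ≤ k)
    (A : Finset (ZMod (3 * k + 1)))
    (hA : A = insert (1 : ZMod (3 * k + 1)) (insert (8 : ZMod (3 * k + 1))
      ((Finset.Icc 3 k).image (fun i : ℕ => ((3 * i : ℕ) : ZMod (3 * k + 1)))))) :
    (∀ j : ZMod (3 * k + 1), (A.image (fun a => j + a)).card = k) ∧
    (∀ i j : ZMod (3 * k + 1),
      ((A.image (fun a => i + a)) ∩ (A.image (fun a => j + a))).Nonempty) := by
  haveI : NeZero (3 * k + 1) := ⟨by omega⟩
  have hcast : ∀ x y : ℕ, x < 3 * k + 1 → y < 3 * k + 1 →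
      ((x : ZMod (3 * k + 1)) = (y : ZMod (3 * k + 1)) ↔ x = y) := by
    intro x y hx hy
    constructor
    · intro h
      have := congrArg ZMod.val h
      rwa [ZMod.val_cast_of_lt hx, ZMod.val_cast_of_lt hy] at this
    · rintro rfl; rfl
  have hone : (1 : ZMod (3 * k + 1)) = ((1 : ℕ) : ZMod (3 * k + 1)) := by norm_cast
  have height : (8 : ZMod (3 * k + 1)) = ((8 : ℕ) : ZMod (3 * k + 1)) := by norm_cast
  have hmem1 : ((1 : ℕ) : ZMod (3 * k + 1)) ∈ A := by
    rw [hA, ← hone]; exact Finset.mem_insert_self _ _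
  have hmem8 : ((8 : ℕ) : ZMod (3 * k + 1)) ∈ A := by
    rw [hA, ← height]; exact Finset.mem_insert_of_mem (Finset.mem_insert_self _ _)
  have hmem3 : ∀ i : ℕ, 3 ≤ i → i ≤ k → ((3 * i : ℕ) : ZMod (3 * k + 1)) ∈ A := by
    intro i h3 hk'
    rw [hA]
    exact Finset.mem_insert_of_mem (Finset.mem_insert_of_mem
      (Finset.mem_image.mpr ⟨i, Finset.mem_Icc.mpr ⟨h3, hk'⟩, rfl⟩))
  have heq : ∀ v x y : ℕ, (v + y = x ∨ v + y = x + (3 * k + 1)) →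
      ((v : ZMod (3 * k + 1)) + (y : ℕ) = ((x : ℕ) : ZMod (3 * k + 1))) := by
    intro v x y h
    rcases h with h | h
    · rw [← h]; push_cast; ring
    · have h0 : ((3 * k + 1 : ℕ) : ZMod (3 * k + 1)) = 0 := ZMod.natCast_self _
      have h2 : ((v + y : ℕ) : ZMod (3 * k + 1)) =
          ((x : ℕ) : ZMod (3 * k + 1)) + ((3 * k + 1 : ℕ) : ZMod (3 * k + 1)) := by
        rw [← Nat.cast_add, h]
      rw [h0, add_zero] at h2
      rw [← h2]; push_cast; ring
  have hcardA : A.card = k := by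
    have hinj : Set.InjOn (fun i : ℕ => ((3 * i : ℕ) : ZMod (3 * k + 1))) (Finset.Icc 3 k) := by
      intro i hi j hj hij
      simp only [Finset.coe_Icc, Set.mem_Icc] at hi hj
      have := (hcast (3 * i) (3 * j) (by omega) (by omega)).mp hij
      omega
    have himg : ((Finset.Icc 3 k).image
        (fun i : ℕ => ((3 * i : ℕ) : ZMod (3 * k + 1)))).card = k - 2 := by
      rw [Finset.card_image_of_injOn hinj, Nat.card_Icc]; omega
    have h8not : (8 : ZMod (3 * k + 1)) ∉
        (Finset.Icc 3 k).image (fun i : ℕ => ((3 * i : ℕ) : ZMod (3 * k + 1))) := by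
      intro h
      obtain ⟨i, hi, hi8⟩ := Finset.mem_image.mp h
      simp only [Finset.mem_Icc] at hi
      rw [height] at hi8
      have := (hcast (3 * i) 8 (by omega) (by omega)).mp hi8
      omega
    have h1not : (1 : ZMod (3 * k + 1)) ∉ insert (8 : ZMod (3 * k + 1))
        ((Finset.Icc 3 k).image (fun i : ℕ => ((3 * i : ℕ) : ZMod (3 * k + 1)))) := by
      intro h
      rcases Finset.mem_insert.mp h with h | h
      · rw [hone, height] at h
        have := (hcast 1 8 (by omega) (by omega)).mp h
        omega
      · obtain ⟨i, hi, hi1⟩ := Finset.mem_image.mp h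
        simp only [Finset.mem_Icc] at hi
        rw [hone] at hi1
        have := (hcast (3 * i) 1 (by omega) (by omega)).mp hi1
        omega
    rw [hA, Finset.card_insert_of_notMem h1not, Finset.card_insert_of_notMem h8not, himg]
    omega
  have key : ∀ d : ZMod (3 * k + 1), ∃ a ∈ A, ∃ b ∈ A, d + b = a := by
    intro d
    have hv : d.val < 3 * k + 1 := ZMod.val_lt d
    have hd : ((d.val : ℕ) : ZMod (3 * k + 1)) = d := ZMod.natCast_rightInverse d
    set v := d.val with hvdef
    obtain ⟨m, r, hr, hv3⟩ : ∃ m r : ℕ, r < 3 ∧ v = 3 * m + r :=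
      ⟨v / 3, v % 3, by omega, by omega⟩
    interval_cases r
    · -- v = 3m
      by_cases h1 : m + 3 ≤ k
      · exact ⟨_, hmem3 (m + 3) (by omega) h1, _, hmem3 3 le_rfl (by omega),
          by rw [← hd]; exact heq v (3 * (m + 3)) (3 * 3) (by omega)⟩
      · by_cases h2 : m = k - 2
        · exact ⟨_, hmem1, _, hmem8, by rw [← hd]; exact heq v 1 8 (by omega)⟩
        · exact ⟨_, hmem8, _, hmem3 (k + 3 - m) (by omega) (by omega),
            by rw [← hd]; exact heq v 8 (3 * (k + 3 - m)) (by omega)⟩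
    · -- v = 3m + 1
      by_cases h1 : m + 3 ≤ k
      · exact ⟨_, hmem3 (m + 3) (by omega) h1, _, hmem8,
          by rw [← hd]; exact heq v (3 * (m + 3)) 8 (by omega)⟩
      · by_cases h2 : m = k - 1
        · exact ⟨_, hmem3 3 le_rfl (by omega), _, hmem3 4 (by omega) (by omega),
            by rw [← hd]; exact heq v (3 * 3) (3 * 4) (by omega)⟩
        · -- m = k - 2
          by_cases h3 : 5 ≤ k
          · exact ⟨_, hmem3 3 le_rfl (by omega), _, hmem3 5 (by omega) h3,
              by rw [← hd]; exact heq v (3 * 3) (3 * 5) (by omega)⟩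
          · -- k = 4, v = 7
            exact ⟨_, hmem8, _, hmem1, by rw [← hd]; exact heq v 8 1 (by omega)⟩
    · -- v = 3m + 2
      by_cases h1 : 2 ≤ m
      · exact ⟨_, hmem3 (m + 1) (by omega) (by omega), _, hmem1,
          by rw [← hd]; exact heq v (3 * (m + 1)) 1 (by omega)⟩
      · by_cases h2 : m = 0
        · exact ⟨_, hmem1, _, hmem3 k (by omega) le_rfl,
            by rw [← hd]; exact heq v 1 (3 * k) (by omega)⟩
        · -- m = 1
          exact ⟨_, hmem1, _, hmem3 (k - 1) (by omega) (by omega),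
            by rw [← hd]; exact heq v 1 (3 * (k - 1)) (by omega)⟩
  refine ⟨?_, ?_⟩
  · intro j
    rw [Finset.card_image_of_injective _ (add_right_injective j), hcardA]
  · intro i j
    obtain ⟨a, ha, b, hb, hab⟩ := key (j - i)
    refine ⟨i + a, Finset.mem_inter.mpr ⟨Finset.mem_image.mpr ⟨a, ha, rfl⟩,
      Finset.mem_image.mpr ⟨b, hb, ?_⟩⟩⟩
    rw [← hab]; ring
end

section
/- For every integer k ≥ 4, the difference set A − A = {a − a' : a, a' ∈ A} of the set A = {1, 8} ∪ {3i : 3 ≤ i ≤ k} in ℤ/(3k+1) is all of ℤ/(3k+1). -/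
/-- Helper: turn a natural-number identity into a `ZMod` subtraction identity. -/
lemma cast_sub_helper (N n p w : ℕ) (h : n + w = p + N ∨ n + w = p) :
    ((n : ℕ) : ZMod N) = (p : ZMod N) - (w : ZMod N) := by
  have h0 : ((N : ℕ) : ZMod N) = 0 := ZMod.natCast_self N
  rcases h with h | h
  · have hc := congrArg (fun t : ℕ => (t : ZMod N)) h
    push_cast at hc
    linear_combination hc + h0
  · have hc := congrArg (fun t : ℕ => (t : ZMod N)) h
    push_cast at hc
    linear_combination hc

/-- For every `k ≥ 4`, the difference set `A − A` of
`A = {1, 8} ∪ {3i : 3 ≤ i ≤ k}` in `ℤ/(3k+1)` is all of `ℤ/(3k+1)`. -/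
theorem stmt1 (k : ℕ) (hk : 4 ≤ k)
    (A : Finset (ZMod (3 * k + 1)))
    (hA : A = insert (1 : ZMod (3 * k + 1)) (insert (8 : ZMod (3 * k + 1))
      ((Finset.Icc 3 k).image (fun i : ℕ => ((3 * i : ℕ) : ZMod (3 * k + 1)))))) :
    ∀ x : ZMod (3 * k + 1), ∃ a ∈ A, ∃ a' ∈ A, x = a - a' := by
  rcases eq_or_lt_of_le hk with h4 | h5
  · -- k = 4 : decide in ZMod 13
    subst hA
    subst h4
    decide
  · -- k ≥ 5
    haveI : NeZero (3 * k + 1) := ⟨by omega⟩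
    have hmem3 : ∀ i : ℕ, 3 ≤ i → i ≤ k → ((3 * i : ℕ) : ZMod (3 * k + 1)) ∈ A := by
      intro i h1 h2
      rw [hA]
      exact Finset.mem_insert_of_mem (Finset.mem_insert_of_mem
        (Finset.mem_image.mpr ⟨i, Finset.mem_Icc.mpr ⟨h1, h2⟩, rfl⟩))
    have h1mem : ((1 : ℕ) : ZMod (3 * k + 1)) ∈ A := by
      rw [hA]; push_cast; exact Finset.mem_insert_self _ _
    have h8mem : ((8 : ℕ) : ZMod (3 * k + 1)) ∈ A := by
      rw [hA]; push_cast
      exact Finset.mem_insert_of_mem (Finset.mem_insert_self _ _)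
    intro x
    have hx : ((x.val : ℕ) : ZMod (3 * k + 1)) = x := ZMod.natCast_rightInverse x
    set n := x.val with hn
    have hlt : n < 3 * k + 1 := ZMod.val_lt x
    have hqr : 3 * (n / 3) + n % 3 = n := Nat.div_add_mod n 3
    have hd : n % 3 = 0 ∨ n % 3 = 1 ∨ n % 3 = 2 := by omega
    set q := n / 3 with hq
    rcases hd with h0 | h1 | h2
    · -- n = 3q
      by_cases hq0 : q = 0
      · exact ⟨_, h1mem, _, h1mem, by rw [← hx]; exact cast_sub_helper _ n 1 1 (by omega)⟩
      · by_cases hq3 : q ≤ k - 3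
        · refine ⟨_, hmem3 (q + 3) (by omega) (by omega), _, hmem3 3 (by omega) (by omega), ?_⟩
          rw [← hx]; exact cast_sub_helper _ n (3 * (q + 3)) (3 * 3) (by omega)
        · refine ⟨_, h8mem, _, hmem3 (k + 3 - q) (by omega) (by omega), ?_⟩
          rw [← hx]; exact cast_sub_helper _ n 8 (3 * (k + 3 - q)) (by omega)
    · -- n = 3q + 1
      by_cases hq3 : q ≤ k - 3
      · refine ⟨_, hmem3 (q + 3) (by omega) (by omega), _, h8mem, ?_⟩
        rw [← hx]; exact cast_sub_helper _ n (3 * (q + 3)) 8 (by omega)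
      · by_cases hq2 : q = k - 2
        · refine ⟨_, hmem3 3 (by omega) (by omega), _, hmem3 5 (by omega) (by omega), ?_⟩
          rw [← hx]; exact cast_sub_helper _ n (3 * 3) (3 * 5) (by omega)
        · refine ⟨_, hmem3 3 (by omega) (by omega), _, hmem3 4 (by omega) (by omega), ?_⟩
          rw [← hx]; exact cast_sub_helper _ n (3 * 3) (3 * 4) (by omega)
    · -- n = 3q + 2
      by_cases hq2 : 2 ≤ q
      · refine ⟨_, hmem3 (q + 1) (by omega) (by omega), _, h1mem, ?_⟩
        rw [← hx]; exact cast_sub_helper _ n (3 * (q + 1)) 1 (by omega)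
      · refine ⟨_, h1mem, _, hmem3 (k - q) (by omega) (by omega), ?_⟩
        rw [← hx]; exact cast_sub_helper _ n 1 (3 * (k - q)) (by omega)
end

section
/- For every integer k ≥ 3, the family of sets B_j = j + B (mod 3k+2) for 0 ≤ j < 3k+2, where B = {1, 3, 4, 8} ∪ {3i : 4 ≤ i ≤ k} ⊆ ℤ/(3k+2), is an intersecting family of (k+1)-element subsets of ℤ/(3k+2). -/
/-- For every integer `k ≥ 3`, the translates `B_j = j + B` of
`B = {1, 3, 4, 8} ∪ {3i : 4 ≤ i ≤ k} ⊆ ℤ/(3k+2)` form an intersecting family of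
`(k+1)`-element subsets of `ℤ/(3k+2)`. -/
theorem stmt2 (k : ℕ) (hk : 3 ≤ k)
    (B : Finset (ZMod (3 * k + 2)))
    (hB : B = insert (1 : ZMod (3 * k + 2)) (insert (3 : ZMod (3 * k + 2))
      (insert (4 : ZMod (3 * k + 2)) (insert (8 : ZMod (3 * k + 2))
      ((Finset.Icc 4 k).image (fun i : ℕ => ((3 * i : ℕ) : ZMod (3 * k + 2))))))) ) :
    (∀ j : ZMod (3 * k + 2), (B.image (fun b => j + b)).card = k + 1) ∧
    (∀ i j : ZMod (3 * k + 2),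
      ((B.image (fun b => i + b)) ∩ (B.image (fun b => j + b))).Nonempty) := by
  haveI : NeZero (3 * k + 2) := ⟨by omega⟩
  have cinj : ∀ a b : ℕ, a < 3 * k + 2 → b < 3 * k + 2 →
      ((a : ZMod (3 * k + 2)) = (b : ZMod (3 * k + 2))) → a = b := by
    intro a b ha hb h
    have := congrArg ZMod.val h
    rwa [ZMod.val_cast_of_lt ha, ZMod.val_cast_of_lt hb] at this
  have e1 : (1 : ZMod (3 * k + 2)) = ((1 : ℕ) : ZMod (3 * k + 2)) := by norm_cast
  have e3 : (3 : ZMod (3 * k + 2)) = ((3 : ℕ) : ZMod (3 * k + 2)) := by norm_cast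
  have e4 : (4 : ZMod (3 * k + 2)) = ((4 : ℕ) : ZMod (3 * k + 2)) := by norm_cast
  have e8 : (8 : ZMod (3 * k + 2)) = ((8 : ℕ) : ZMod (3 * k + 2)) := by norm_cast
  set S : Finset (ZMod (3 * k + 2)) :=
    (Finset.Icc 4 k).image (fun i : ℕ => ((3 * i : ℕ) : ZMod (3 * k + 2))) with hS
  have hnot : ∀ a : ℕ, a < 12 → ((a : ℕ) : ZMod (3 * k + 2)) ∉ S := by
    intro a ha hmem
    obtain ⟨i, hi, he⟩ := Finset.mem_image.mp hmem
    rw [Finset.mem_Icc] at hi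
    have := cinj _ _ (by omega) (by omega) he
    omega
  have hcard : B.card = k + 1 := by
    rw [hB, e1, e3, e4, e8]
    have h8 : ((8 : ℕ) : ZMod (3 * k + 2)) ∉ S := hnot 8 (by omega)
    have h4 : ((4 : ℕ) : ZMod (3 * k + 2)) ∉ insert ((8 : ℕ) : ZMod (3 * k + 2)) S := by
      simp only [Finset.mem_insert]
      rintro (h | h)
      · exact absurd (cinj _ _ (by omega) (by omega) h) (by omega)
      · exact hnot 4 (by omega) h
    have h3 : ((3 : ℕ) : ZMod (3 * k + 2)) ∉
        insert ((4 : ℕ) : ZMod (3 * k + 2)) (insert ((8 : ℕ) : ZMod (3 * k + 2)) S) := by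
      simp only [Finset.mem_insert]
      rintro (h | h | h)
      · exact absurd (cinj _ _ (by omega) (by omega) h) (by omega)
      · exact absurd (cinj _ _ (by omega) (by omega) h) (by omega)
      · exact hnot 3 (by omega) h
    have h1 : ((1 : ℕ) : ZMod (3 * k + 2)) ∉
        insert ((3 : ℕ) : ZMod (3 * k + 2)) (insert ((4 : ℕ) : ZMod (3 * k + 2))
          (insert ((8 : ℕ) : ZMod (3 * k + 2)) S)) := by
      simp only [Finset.mem_insert]
      rintro (h | h | h | h)
      · exact absurd (cinj _ _ (by omega) (by omega) h) (by omega)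
      · exact absurd (cinj _ _ (by omega) (by omega) h) (by omega)
      · exact absurd (cinj _ _ (by omega) (by omega) h) (by omega)
      · exact hnot 1 (by omega) h
    have hScard : S.card = k - 3 := by
      rw [hS, Finset.card_image_of_injOn, Nat.card_Icc]
      · omega
      · intro i hi j hj h
        rw [Finset.mem_coe, Finset.mem_Icc] at hi hj
        have := cinj _ _ (by omega) (by omega) h
        omega
    rw [Finset.card_insert_of_notMem h1, Finset.card_insert_of_notMem h3,
      Finset.card_insert_of_notMem h4, Finset.card_insert_of_notMem h8, hScard]
    omega
  -- membership helper
  have memB : ∀ a : ℕ,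
      (a = 1 ∨ a = 3 ∨ a = 4 ∨ a = 8 ∨ ∃ i, 4 ≤ i ∧ i ≤ k ∧ a = 3 * i) →
      ((a : ℕ) : ZMod (3 * k + 2)) ∈ B := by
    intro a h
    rw [hB]
    simp only [Finset.mem_insert]
    rcases h with h | h | h | h | ⟨i, hi1, hi2, h⟩
    · subst h; exact Or.inl e1.symm
    · subst h; exact Or.inr (Or.inl e3.symm)
    · subst h; exact Or.inr (Or.inr (Or.inl e4.symm))
    · subst h; exact Or.inr (Or.inr (Or.inr (Or.inl e8.symm)))
    · subst h
      exact Or.inr (Or.inr (Or.inr (Or.inr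
        (Finset.mem_image.mpr ⟨i, Finset.mem_Icc.mpr ⟨hi1, hi2⟩, rfl⟩))))
  have cover : ∀ d : ZMod (3 * k + 2), ∃ b ∈ B, ∃ b' ∈ B, b = d + b' := by
    intro d
    set v := d.val with hv
    have hvd : ((v : ℕ) : ZMod (3 * k + 2)) = d := by
      rw [hv, ZMod.natCast_val, ZMod.cast_id]
    have hvlt : v < 3 * k + 2 := ZMod.val_lt d
    have key : ∀ a b : ℕ, (a = v + b ∨ a + (3 * k + 2) = v + b) →
        ((a : ℕ) : ZMod (3 * k + 2)) = ((v : ℕ) : ZMod (3 * k + 2)) + ((b : ℕ) : ZMod (3 * k + 2)) := by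
      rintro a b (h | h)
      · rw [h, Nat.cast_add]
      · rw [← Nat.cast_add, ← h, Nat.cast_add, ZMod.natCast_self, add_zero]
    have P1 : (1 : ℕ) = 1 ∨ (1 : ℕ) = 3 ∨ (1 : ℕ) = 4 ∨ (1 : ℕ) = 8 ∨
        ∃ i, 4 ≤ i ∧ i ≤ k ∧ (1 : ℕ) = 3 * i := Or.inl rfl
    have P3 : (3 : ℕ) = 1 ∨ (3 : ℕ) = 3 ∨ (3 : ℕ) = 4 ∨ (3 : ℕ) = 8 ∨
        ∃ i, 4 ≤ i ∧ i ≤ k ∧ (3 : ℕ) = 3 * i := Or.inr (Or.inl rfl)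
    have P4 : (4 : ℕ) = 1 ∨ (4 : ℕ) = 3 ∨ (4 : ℕ) = 4 ∨ (4 : ℕ) = 8 ∨
        ∃ i, 4 ≤ i ∧ i ≤ k ∧ (4 : ℕ) = 3 * i := Or.inr (Or.inr (Or.inl rfl))
    have P8 : (8 : ℕ) = 1 ∨ (8 : ℕ) = 3 ∨ (8 : ℕ) = 4 ∨ (8 : ℕ) = 8 ∨
        ∃ i, 4 ≤ i ∧ i ≤ k ∧ (8 : ℕ) = 3 * i := Or.inr (Or.inr (Or.inr (Or.inl rfl)))
    have Pmul : ∀ i : ℕ, 4 ≤ i → i ≤ k → (3 * i = 1 ∨ 3 * i = 3 ∨ 3 * i = 4 ∨ 3 * i = 8 ∨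
        ∃ j, 4 ≤ j ∧ j ≤ k ∧ 3 * i = 3 * j) :=
      fun i h1 h2 => Or.inr (Or.inr (Or.inr (Or.inr ⟨i, h1, h2, rfl⟩)))
    have sel : ∃ a b : ℕ,
        (a = 1 ∨ a = 3 ∨ a = 4 ∨ a = 8 ∨ ∃ i, 4 ≤ i ∧ i ≤ k ∧ a = 3 * i) ∧
        (b = 1 ∨ b = 3 ∨ b = 4 ∨ b = 8 ∨ ∃ i, 4 ≤ i ∧ i ≤ k ∧ b = 3 * i) ∧
        (a = v + b ∨ a + (3 * k + 2) = v + b) := by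
      by_cases h0 : v = 0
      · exact ⟨1, 1, P1, P1, Or.inl (by omega)⟩
      by_cases h1 : v = 3
      · exact ⟨4, 1, P4, P1, Or.inl (by omega)⟩
      by_cases h2 : v = 1
      · exact ⟨4, 3, P4, P3, Or.inl (by omega)⟩
      by_cases h3 : v = 2
      · exact ⟨3, 1, P3, P1, Or.inl (by omega)⟩
      by_cases h4 : v = 5
      · exact ⟨8, 3, P8, P3, Or.inl (by omega)⟩
      by_cases h5 : v = 6
      · by_cases hk3 : k = 3
        · exact ⟨3, 8, P3, P8, Or.inr (by omega)⟩
        · exact ⟨4, 3 * k, P4, Pmul k (by omega) le_rfl, Or.inr (by omega)⟩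
      by_cases h6 : v = 3 * k
      · exact ⟨1, 3, P1, P3, Or.inr (by omega)⟩
      by_cases h7 : v = 3 * k + 1
      · exact ⟨3, 4, P3, P4, Or.inr (by omega)⟩
      by_cases h8 : v = 3 * k - 2
      · exact ⟨4, 8, P4, P8, Or.inr (by omega)⟩
      by_cases h9 : v = 3 * k - 5
      · exact ⟨1, 8, P1, P8, Or.inr (by omega)⟩
      by_cases h10 : v = 3 * k - 1
      · exact ⟨1, 4, P1, P4, Or.inr (by omega)⟩
      rcases (show v % 3 = 0 ∨ v % 3 = 1 ∨ v % 3 = 2 by omega) with h | h | h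
      · exact ⟨3 * (v / 3 + 1), 3, Pmul _ (by omega) (by omega), P3, Or.inl (by omega)⟩
      · exact ⟨3 * (v / 3 + 3), 8, Pmul _ (by omega) (by omega), P8, Or.inl (by omega)⟩
      · exact ⟨3 * (v / 3 + 2), 4, Pmul _ (by omega) (by omega), P4, Or.inl (by omega)⟩
    obtain ⟨a, b, ha, hb, hab⟩ := sel
    refine ⟨_, memB a ha, _, memB b hb, ?_⟩
    rw [← hvd]
    exact key a b hab
  refine ⟨?_, ?_⟩
  · intro j
    rw [Finset.card_image_of_injective _ (add_right_injective j), hcard]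
  · intro i j
    obtain ⟨b, hb, b', hb', he⟩ := cover (j - i)
    refine ⟨i + b, Finset.mem_inter.mpr
      ⟨Finset.mem_image.mpr ⟨b, hb, rfl⟩, Finset.mem_image.mpr ⟨b', hb', ?_⟩⟩⟩
    rw [he]
    ring
end

section
/- For every integer k ≥ 3, the difference set B − B of B = {1, 3, 4, 8} ∪ {3i : 4 ≤ i ≤ k} in ℤ/(3k+2) equals all of ℤ/(3k+2). -/
private lemma key_zmod (n v a c : ℕ) (h : v + c = a ∨ v + c = n + a) :
    (v : ZMod n) = (a : ZMod n) - (c : ZMod n) := by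
  rcases h with h | h
  · rw [eq_sub_iff_add_eq, ← Nat.cast_add, h]
  · rw [eq_sub_iff_add_eq, ← Nat.cast_add, h, Nat.cast_add, ZMod.natCast_self, zero_add]

/-- For every `k ≥ 3`, the difference set `B − B` of
`B = {1, 3, 4, 8} ∪ {3i : 4 ≤ i ≤ k}` in `ℤ/(3k+2)` is all of `ℤ/(3k+2)`. -/
theorem stmt3 (k : ℕ) (hk : 3 ≤ k)
    (B : Finset (ZMod (3 * k + 2)))
    (hB : B = insert (1 : ZMod (3 * k + 2)) (insert (3 : ZMod (3 * k + 2))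
      (insert (4 : ZMod (3 * k + 2)) (insert (8 : ZMod (3 * k + 2))
      ((Finset.Icc 4 k).image (fun i : ℕ => ((3 * i : ℕ) : ZMod (3 * k + 2))))))) ) :
    ∀ x : ZMod (3 * k + 2), ∃ b ∈ B, ∃ b' ∈ B, x = b - b' := by
  haveI : NeZero (3 * k + 2) := ⟨by omega⟩
  intro x
  obtain ⟨v, hv, rfl⟩ : ∃ v : ℕ, v < 3 * k + 2 ∧ (v : ZMod (3 * k + 2)) = x :=
    ⟨x.val, x.val_lt, ZMod.natCast_rightInverse x⟩
  have himg : ∀ i : ℕ, 4 ≤ i → i ≤ k → ((3 * i : ℕ) : ZMod (3 * k + 2)) ∈ B := by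
    intro i h1 h2
    rw [hB]
    exact Finset.mem_insert_of_mem <| Finset.mem_insert_of_mem <|
      Finset.mem_insert_of_mem <| Finset.mem_insert_of_mem <|
      Finset.mem_image_of_mem _ (Finset.mem_Icc.2 ⟨h1, h2⟩)
  have h1m : ((1 : ℕ) : ZMod (3 * k + 2)) ∈ B := by rw [hB]; push_cast; simp
  have h3m : ((3 : ℕ) : ZMod (3 * k + 2)) ∈ B := by rw [hB]; push_cast; simp
  have h4m : ((4 : ℕ) : ZMod (3 * k + 2)) ∈ B := by rw [hB]; push_cast; simp
  have h8m : ((8 : ℕ) : ZMod (3 * k + 2)) ∈ B := by rw [hB]; push_cast; simp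
  obtain ⟨m, r, hr, rfl⟩ : ∃ m r, r < 3 ∧ v = 3 * m + r :=
    ⟨v / 3, v % 3, Nat.mod_lt _ (by norm_num), (Nat.div_add_mod v 3).symm⟩
  interval_cases r
  · -- v = 3m
    by_cases h0 : m = 0
    · exact ⟨_, h1m, _, h1m, key_zmod _ _ 1 1 (by omega)⟩
    by_cases h1 : m = 1
    · exact ⟨_, h4m, _, h1m, key_zmod _ _ 4 1 (by omega)⟩
    by_cases h2 : m = 2
    · by_cases hk3 : k = 3
      · exact ⟨_, h3m, _, h8m, key_zmod _ _ 3 8 (by omega)⟩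
      · exact ⟨_, h4m, _, himg k (by omega) le_rfl, key_zmod _ _ 4 (3 * k) (by omega)⟩
    by_cases hkm : m = k
    · exact ⟨_, h1m, _, h3m, key_zmod _ _ 1 3 (by omega)⟩
    -- 3 ≤ m ≤ k - 1
    exact ⟨_, himg (m + 1) (by omega) (by omega), _, h3m,
      key_zmod _ _ (3 * (m + 1)) 3 (by omega)⟩
  · -- v = 3m + 1
    by_cases h0 : m = 0
    · exact ⟨_, h4m, _, h3m, key_zmod _ _ 4 3 (by omega)⟩
    by_cases hk2 : m = k - 2
    · exact ⟨_, h1m, _, h8m, key_zmod _ _ 1 8 (by omega)⟩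
    by_cases hk1 : m = k - 1
    · exact ⟨_, h4m, _, h8m, key_zmod _ _ 4 8 (by omega)⟩
    by_cases hkm : m = k
    · exact ⟨_, h3m, _, h4m, key_zmod _ _ 3 4 (by omega)⟩
    -- 1 ≤ m ≤ k - 3
    exact ⟨_, himg (m + 3) (by omega) (by omega), _, h8m,
      key_zmod _ _ (3 * (m + 3)) 8 (by omega)⟩
  · -- v = 3m + 2, here m ≤ k - 1
    by_cases h0 : m = 0
    · exact ⟨_, h3m, _, h1m, key_zmod _ _ 3 1 (by omega)⟩
    by_cases h1 : m = 1
    · exact ⟨_, h8m, _, h3m, key_zmod _ _ 8 3 (by omega)⟩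
    by_cases hk1 : m = k - 1
    · exact ⟨_, h1m, _, h4m, key_zmod _ _ 1 4 (by omega)⟩
    -- 2 ≤ m ≤ k - 2
    exact ⟨_, himg (m + 2) (by omega) (by omega), _, h4m,
      key_zmod _ _ (3 * (m + 2)) 4 (by omega)⟩
end

section
/- Let V have size 3k with d ≤ k, and consider the k-slice S. Let χ(x) = ∏_{i=1}^{d} (1_{2i−1 ∈ x} − 1_{2i ∈ x}). Let T_R be the operator (T_R g)(x) = E_{y∼R(x)} g(y), where R(x) is uniform over k-subsets disjoint from x. Then T_R χ = α_d χ with α_d = (−1)^d (2k−d)! k! / ((2k)! (k−d)!). -/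
open Finset in
private lemma stmt7_count_supersets (B C : Finset ℕ) (hC : C ⊆ B) (m : ℕ) (hm : C.card ≤ m) :
    ((B.powersetCard m).filter (fun y => C ⊆ y)).card
      = Nat.choose (B.card - C.card) (m - C.card) := by
  have hcard : ((B.powersetCard m).filter (fun y => C ⊆ y)).card
      = ((B \ C).powersetCard (m - C.card)).card := by
    apply Finset.card_bij' (fun y _ => y \ C) (fun z _ => z ∪ C)
    · intro y hy
      simp only [mem_filter, mem_powersetCard] at hy
      obtain ⟨⟨hyB, hyc⟩, hCy⟩ := hy
      simp only [mem_powersetCard]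
      exact ⟨sdiff_subset_sdiff hyB le_rfl, by rw [card_sdiff_of_subset hCy, hyc]⟩
    · intro z hz
      simp only [mem_powersetCard] at hz
      obtain ⟨hzB, hzc⟩ := hz
      have hdisj : Disjoint z C := (subset_sdiff.mp hzB).2
      simp only [mem_filter, mem_powersetCard]
      refine ⟨⟨union_subset ((subset_sdiff.mp hzB).1) hC, ?_⟩, subset_union_right⟩
      rw [card_union_of_disjoint hdisj, hzc]; omega
    · intro y hy
      simp only [mem_filter, mem_powersetCard] at hy
      exact sdiff_union_of_subset hy.2
    · intro z hz
      simp only [mem_powersetCard] at hz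
      exact union_sdiff_cancel_right (subset_sdiff.mp hz.1).2
  rw [hcard, Finset.card_powersetCard, Finset.card_sdiff_of_subset hC]

open Finset in
private lemma stmt7_mem_image_swap (a b c : ℕ) (y : Finset ℕ) :
    c ∈ y.image (Equiv.swap a b) ↔ Equiv.swap a b c ∈ y := by
  simp only [mem_image]
  constructor
  · rintro ⟨t, ht, rfl⟩; rwa [Equiv.swap_apply_self]
  · intro h; exact ⟨Equiv.swap a b c, h, Equiv.swap_apply_self _ _ _⟩

open Finset in
/-- the key swap-negation identity -/
private lemma stmt7_chi_swap (d : ℕ) (i : ℕ) (hi : i ∈ Finset.Icc 1 d) (y : Finset ℕ) :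
    (∏ j ∈ Finset.Icc 1 d,
      ((if 2 * j - 1 ∈ y.image (Equiv.swap (2*i-1) (2*i)) then (1:ℚ) else 0)
        - (if 2 * j ∈ y.image (Equiv.swap (2*i-1) (2*i)) then (1:ℚ) else 0)))
    = -(∏ j ∈ Finset.Icc 1 d,
      ((if 2 * j - 1 ∈ y then (1:ℚ) else 0) - (if 2 * j ∈ y then (1:ℚ) else 0))) := by
  have hii : 1 ≤ i ∧ i ≤ d := by simpa using hi
  rw [← Finset.mul_prod_erase _ _ hi, ← Finset.mul_prod_erase _ _ hi]
  have hrest : ∏ j ∈ (Finset.Icc 1 d).erase i,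
      ((if 2 * j - 1 ∈ y.image (Equiv.swap (2*i-1) (2*i)) then (1:ℚ) else 0)
        - (if 2 * j ∈ y.image (Equiv.swap (2*i-1) (2*i)) then (1:ℚ) else 0))
      = ∏ j ∈ (Finset.Icc 1 d).erase i,
      ((if 2 * j - 1 ∈ y then (1:ℚ) else 0) - (if 2 * j ∈ y then (1:ℚ) else 0)) := by
    apply Finset.prod_congr rfl
    intro j hj
    have hj' : j ≠ i ∧ 1 ≤ j ∧ j ≤ d := by
      simp only [mem_erase, Finset.mem_Icc] at hj; tauto
    have e1 : (2*j-1 ∈ y.image (Equiv.swap (2*i-1) (2*i))) = (2*j-1 ∈ y) := by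
      rw [stmt7_mem_image_swap, Equiv.swap_apply_of_ne_of_ne (by omega) (by omega)]
    have e2 : (2*j ∈ y.image (Equiv.swap (2*i-1) (2*i))) = (2*j ∈ y) := by
      rw [stmt7_mem_image_swap, Equiv.swap_apply_of_ne_of_ne (by omega) (by omega)]
    simp only [e1, e2]
  rw [hrest]
  have h1 : (2*i-1 ∈ y.image (Equiv.swap (2*i-1) (2*i))) ↔ 2*i ∈ y := by
    rw [stmt7_mem_image_swap, Equiv.swap_apply_left]
  have h2 : (2*i ∈ y.image (Equiv.swap (2*i-1) (2*i))) ↔ 2*i-1 ∈ y := by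
    rw [stmt7_mem_image_swap, Equiv.swap_apply_right]
  rw [show ((if 2 * i - 1 ∈ y.image (Equiv.swap (2*i-1) (2*i)) then (1:ℚ) else 0)
        - (if 2 * i ∈ y.image (Equiv.swap (2*i-1) (2*i)) then (1:ℚ) else 0))
      = -((if 2 * i - 1 ∈ y then (1:ℚ) else 0) - (if 2 * i ∈ y then (1:ℚ) else 0)) by
    simp only [h1, h2]; ring]
  ring

open Finset in
/-- on the `k`-slice of `V = {1,…,3k}`, the harmonic polynomial
`χ(x) = ∏_{i=1}^{d} (1_{2i−1 ∈ x} − 1_{2i ∈ x})` is an eigenfunction of the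
replacement operator `(T_R g)(x) = E_{y∼R(x)} g(y)` (with `R(x)` uniform over
`k`-subsets disjoint from `x`), with eigenvalue
`α_d = (−1)^d (2k−d)! k! / ((2k)! (k−d)!)`. -/
theorem stmt7 (k d : ℕ) (hd : d ≤ k) :
    let V : Finset ℕ := Finset.Icc 1 (3 * k)
    let S : Finset (Finset ℕ) := V.powerset.filter (fun x => x.card = k)
    let chi : Finset ℕ → ℚ := fun x =>
      ∏ i ∈ Finset.Icc 1 d,
        ((if 2 * i - 1 ∈ x then (1 : ℚ) else 0) - (if 2 * i ∈ x then (1 : ℚ) else 0))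
    let TR : (Finset ℕ → ℚ) → Finset ℕ → ℚ := fun h x =>
      (∑ y ∈ S.filter (fun y => Disjoint y x), h y) / (Nat.choose (2 * k) k : ℚ)
    let alpha : ℚ := (-1) ^ d * ((Nat.factorial (2 * k - d) * Nat.factorial k : ℕ) : ℚ)
      / ((Nat.factorial (2 * k) * Nat.factorial (k - d) : ℕ) : ℚ)
    ∀ x ∈ S, TR chi x = alpha * chi x := by
  intro V S chi TR alpha x hx
  have hxV : x ⊆ V := by
    simp only [S, mem_filter, mem_powerset] at hx; exact hx.1
  have hxk : x.card = k := by
    simp only [S, mem_filter, mem_powerset] at hx; exact hx.2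
  set A : Finset ℕ := V \ x with hA
  have hAcard : A.card = 2 * k := by
    rw [hA, card_sdiff_of_subset hxV, hxk]
    simp only [V, Nat.card_Icc]
    omega
  have hF : S.filter (fun y => Disjoint y x) = A.powersetCard k := by
    ext y
    simp only [S, mem_filter, mem_powerset, mem_powersetCard, hA, subset_sdiff]
    tauto
  have key : ∑ y ∈ S.filter (fun y => Disjoint y x), chi y
      = (-1 : ℚ) ^ d * (Nat.choose (2 * k - d) (k - d) : ℚ) * chi x := by
    by_cases hgood : ∀ i ∈ Finset.Icc 1 d, ((2*i-1 ∈ x) ↔ (2*i ∉ x))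
    · -- GOOD case: exactly one of each pair in x
      set c : ℕ → ℕ := fun i => if 2*i-1 ∈ x then 2*i else 2*i-1 with hc
      set C : Finset ℕ := (Finset.Icc 1 d).image c with hCdef
      -- pointwise identity
      have hpt : ∀ y ∈ S.filter (fun y => Disjoint y x),
          chi y = (-1 : ℚ) ^ d * chi x * (if C ⊆ y then (1:ℚ) else 0) := by
        intro y hy
        have hdisj : Disjoint y x := (mem_filter.mp hy).2
        have hfac : ∀ i ∈ Finset.Icc 1 d,
            ((if 2 * i - 1 ∈ y then (1:ℚ) else 0) - (if 2 * i ∈ y then (1:ℚ) else 0))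
            = (-1 : ℚ) * ((if 2 * i - 1 ∈ x then (1:ℚ) else 0)
              - (if 2 * i ∈ x then (1:ℚ) else 0)) * (if c i ∈ y then (1:ℚ) else 0) := by
          intro i hi
          by_cases h : 2 * i - 1 ∈ x
          · have h2 : 2 * i ∉ x := (hgood i hi).mp h
            have hny : 2 * i - 1 ∉ y := fun hm => (Finset.disjoint_left.mp hdisj hm) h
            by_cases hyy : 2 * i ∈ y <;> simp [hc, h, h2, hny, hyy]
          · have h2 : 2 * i ∈ x := by
              by_contra h2; exact h ((hgood i hi).mpr h2)
            have hny : 2 * i ∉ y := fun hm => (Finset.disjoint_left.mp hdisj hm) h2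
            by_cases hzz : 2 * i - 1 ∈ y <;> simp [hc, h, h2, hny, hzz]
        have : chi y = ∏ i ∈ Finset.Icc 1 d,
            ((-1 : ℚ) * ((if 2 * i - 1 ∈ x then (1:ℚ) else 0)
              - (if 2 * i ∈ x then (1:ℚ) else 0)) * (if c i ∈ y then (1:ℚ) else 0)) :=
          Finset.prod_congr rfl hfac
        rw [this, Finset.prod_mul_distrib, Finset.prod_mul_distrib, Finset.prod_const,
          Nat.card_Icc, Finset.prod_boole]
        have hCsub : (∀ i ∈ Finset.Icc 1 d, c i ∈ y) ↔ C ⊆ y := by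
          rw [hCdef, Finset.image_subset_iff]
        simp only [hCsub]
        simp only [chi]
        ring_nf
        simp [show d + 1 - 1 = d from rfl]
      rw [Finset.sum_congr rfl hpt]
      rw [← Finset.mul_sum, Finset.sum_boole]
      -- now count
      have hCA : C ⊆ A := by
        intro t ht
        rw [hCdef, Finset.mem_image] at ht
        obtain ⟨i, hi, rfl⟩ := ht
        have hi' : 1 ≤ i ∧ i ≤ d := by simpa using hi
        rw [hA, Finset.mem_sdiff]
        constructor
        · simp only [V, Finset.mem_Icc, hc]
          split <;> omega
        · by_cases h : 2*i-1 ∈ x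
          · have h2 : 2 * i ∉ x := (hgood i hi).mp h
            simp [hc, h, h2]
          · simp [hc, h]
      have hCcard : C.card = d := by
        rw [hCdef, Finset.card_image_of_injOn, Nat.card_Icc]
        · omega
        · intro i hi j hj hij
          have hi' : 1 ≤ i ∧ i ≤ d := by simpa using hi
          have hj' : 1 ≤ j ∧ j ≤ d := by simpa using hj
          have b1 : 2*i-1 ≤ c i ∧ c i ≤ 2*i := by simp only [hc]; split <;> omega
          have b2 : 2*j-1 ≤ c j ∧ c j ≤ 2*j := by simp only [hc]; split <;> omega
          omega
      rw [hF]
      rw [stmt7_count_supersets A C hCA k (by rw [hCcard]; exact hd), hAcard, hCcard]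
      ring
    · -- BAD case: some pair fully in or fully out of x
      obtain ⟨i, hi, hne⟩ : ∃ i ∈ Finset.Icc 1 d, ¬((2*i-1 ∈ x) ↔ (2*i ∉ x)) := by
        push_neg at hgood
        obtain ⟨i, hi, h⟩ := hgood
        exact ⟨i, hi, by tauto⟩
      have hiff : (2*i-1 ∈ x) ↔ (2*i ∈ x) := by tauto
      have hi' : 1 ≤ i ∧ i ≤ d := by simpa using hi
      have hchix : chi x = 0 := by
        apply Finset.prod_eq_zero hi
        by_cases h : 2*i-1 ∈ x
        · have h2 := hiff.mp h; simp [h, h2]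
        · have h2 : 2*i ∉ x := fun hh => h (hiff.mpr hh); simp [h, h2]
      rw [hchix, mul_zero]
      by_cases hin : 2*i-1 ∈ x
      · -- both in x: every term vanishes
        have h2 := hiff.mp hin
        apply Finset.sum_eq_zero
        intro y hy
        have hdisj : Disjoint y x := (mem_filter.mp hy).2
        apply Finset.prod_eq_zero hi
        have hny : 2 * i - 1 ∉ y := fun hm => (Finset.disjoint_left.mp hdisj hm) hin
        have hny2 : 2 * i ∉ y := fun hm => (Finset.disjoint_left.mp hdisj hm) h2
        simp [hny, hny2]
      · -- both out of x: involution by swapping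
        have h2 : 2*i ∉ x := fun hh => hin (hiff.mpr hh)
        apply Finset.sum_involution (fun y _ => y.image (Equiv.swap (2*i-1) (2*i)))
        · intro y hy
          have := stmt7_chi_swap d i hi y
          simp only [chi]
          rw [this]; ring
        · intro y hy hne' heq
          have := stmt7_chi_swap d i hi y
          rw [heq] at this
          apply hne'
          have : (2:ℚ) * chi y = 0 := by simp only [chi] at *; linarith
          linarith
        · intro y hy
          rw [Finset.image_image]
          have : (Equiv.swap (2*i-1) (2*i)) ∘ (Equiv.swap (2*i-1) (2*i)) = id := by
            funext t; simp [Equiv.swap_apply_self]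
          rw [this, Finset.image_id]
        · intro y hy
          simp only [mem_filter] at hy ⊢
          obtain ⟨hyS, hydisj⟩ := hy
          simp only [S, mem_filter, mem_powerset] at hyS ⊢
          obtain ⟨hyV, hyk⟩ := hyS
          refine ⟨⟨?_, ?_⟩, ?_⟩
          · intro t ht
            rw [stmt7_mem_image_swap] at ht
            by_cases h1 : t = 2*i-1
            · subst h1; simp only [V, Finset.mem_Icc]; omega
            · by_cases h3 : t = 2*i
              · subst h3; simp only [V, Finset.mem_Icc]; omega
              · rw [Equiv.swap_apply_of_ne_of_ne h1 h3] at ht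
                exact hyV ht
          · rw [Finset.card_image_of_injective _ (Equiv.injective _)]; exact hyk
          · rw [Finset.disjoint_left]
            intro t ht
            rw [stmt7_mem_image_swap] at ht
            by_cases h1 : t = 2*i-1
            · subst h1; exact hin
            · by_cases h3 : t = 2*i
              · subst h3; exact h2
              · rw [Equiv.swap_apply_of_ne_of_ne h1 h3] at ht
                exact Finset.disjoint_left.mp hydisj ht
  have hc : ((Nat.choose (2 * k) k : ℕ) : ℚ) ≠ 0 :=
    Nat.cast_ne_zero.mpr (Nat.choose_pos (show k ≤ 2 * k by omega)).ne'
  have halpha : alpha = (-1 : ℚ) ^ d * (Nat.choose (2 * k - d) (k - d) : ℚ)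
      / (Nat.choose (2 * k) k : ℚ) := by
    have h1 : Nat.choose (2 * k) k * Nat.factorial k * Nat.factorial k
        = Nat.factorial (2 * k) := by
      have := Nat.choose_mul_factorial_mul_factorial (show k ≤ 2 * k by omega)
      simpa [show 2 * k - k = k by omega] using this
    have h2 : Nat.choose (2 * k - d) (k - d) * Nat.factorial (k - d) * Nat.factorial k
        = Nat.factorial (2 * k - d) := by
      have := Nat.choose_mul_factorial_mul_factorial (show k - d ≤ 2 * k - d by omega)
      simpa [show 2 * k - d - (k - d) = k by omega] using this
    have e1 : ((Nat.factorial (2 * k) : ℕ) : ℚ)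
        = (Nat.choose (2 * k) k : ℚ) * (Nat.factorial k : ℚ) * (Nat.factorial k : ℚ) := by
      exact_mod_cast h1.symm
    have e2 : ((Nat.factorial (2 * k - d) : ℕ) : ℚ)
        = (Nat.choose (2 * k - d) (k - d) : ℚ) * (Nat.factorial (k - d) : ℚ)
          * (Nat.factorial k : ℚ) := by
      exact_mod_cast h2.symm
    have hf1 : ((Nat.factorial k : ℕ) : ℚ) ≠ 0 :=
      Nat.cast_ne_zero.mpr (Nat.factorial_pos k).ne'
    have hf2 : ((Nat.factorial (k - d) : ℕ) : ℚ) ≠ 0 :=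
      Nat.cast_ne_zero.mpr (Nat.factorial_pos (k - d)).ne'
    show (-1 : ℚ) ^ d * ((Nat.factorial (2 * k - d) * Nat.factorial k : ℕ) : ℚ)
      / ((Nat.factorial (2 * k) * Nat.factorial (k - d) : ℕ) : ℚ)
      = (-1 : ℚ) ^ d * (Nat.choose (2 * k - d) (k - d) : ℚ) / (Nat.choose (2 * k) k : ℚ)
    push_cast
    rw [e1, e2]
    field_simp
  show (∑ y ∈ S.filter (fun y => Disjoint y x), chi y) / (Nat.choose (2 * k) k : ℚ)
    = alpha * chi x
  rw [key, halpha]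
  field_simp
end

section
/- The eigenvalues α_d = (−1)^d C(2k−d, k−d)/C(2k,k) of the replacement operator on the k-slice of a 3k-set satisfy: α₀ = 1, the recursion α_d = −α_{d−1}(k−d+1)/(2k−d+1), and the bounds 0 ≤ α_{2i} ≤ 4^{−i} and −2^{−2i−1} ≤ α_{2i+1} ≤ 0 for all valid indices. -/
/-!
Pascal's rule `(m + 1) C(m, j) = (j + 1) C(m + 1, j + 1)` gives the recursion directly. Along it
the factor `(k - d + 1) / (2k - d + 1)` is at most `1/2`, so `|α_d| ≤ 2^{-d}`, and the sign of
`α_d` is `(-1)^d`.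
-/

namespace Nat

theorem two_mul_choose_le_choose_add_one {n j : ℕ} (h : 2 * (j + 1) ≤ n + 1) :
    2 * n.choose j ≤ (n + 1).choose (j + 1) := by
  refine Nat.le_of_mul_le_mul_right ?_ j.succ_pos
  calc 2 * n.choose j * (j + 1) = 2 * (j + 1) * n.choose j := by ring
    _ ≤ (n + 1) * n.choose j := Nat.mul_le_mul_right _ h
    _ = (n + 1).choose (j + 1) * (j + 1) := add_one_mul_choose_eq n j

theorem two_pow_mul_choose_sub_sub_le {n k d : ℕ} (hkn : 2 * k ≤ n) (hd : d ≤ k) :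
    2 ^ d * (n - d).choose (k - d) ≤ n.choose k := by
  induction d with
  | zero => simp
  | succ d ih =>
    have hn : n - d = n - (d + 1) + 1 := by omega
    have hk : k - d = k - (d + 1) + 1 := by omega
    calc 2 ^ (d + 1) * (n - (d + 1)).choose (k - (d + 1))
        = 2 ^ d * (2 * (n - (d + 1)).choose (k - (d + 1))) := by ring
      _ ≤ 2 ^ d * (n - d).choose (k - d) := by
        rw [hn, hk]
        exact Nat.mul_le_mul_left _ (two_mul_choose_le_choose_add_one (by omega))
      _ ≤ n.choose k := ih (by omega)

theorem choose_sub_sub_mul {n k d : ℕ} (hkn : k ≤ n) (hd : d < k) :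
    (n - d).choose (k - d) * (k - d) = (n - d) * (n - (d + 1)).choose (k - (d + 1)) := by
  have hn : n - d = n - (d + 1) + 1 := by omega
  have hk : k - d = k - (d + 1) + 1 := by omega
  rw [hn, hk, add_one_mul_choose_eq]

end Nat

theorem choose_sub_sub_div_choose_le {n k d : ℕ} (hkn : 2 * k ≤ n) (hd : d ≤ k) :
    ((n - d).choose (k - d) : ℚ) / n.choose k ≤ (1 / 2) ^ d := by
  have hpos : (0 : ℚ) < n.choose k := by exact_mod_cast Nat.choose_pos (by omega)
  have hle : (2 : ℚ) ^ d * (n - d).choose (k - d) ≤ n.choose k := by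
    exact_mod_cast Nat.two_pow_mul_choose_sub_sub_le hkn hd
  rw [div_le_iff₀ hpos, div_pow, one_pow, div_mul_eq_mul_div, one_mul,
    le_div_iff₀ (by positivity), mul_comm]
  exact hle

/-- The paper's `α_d`. -/
def sliceEigenvalue (k d : ℕ) : ℚ :=
  (-1) ^ d * ((2 * k - d).choose (k - d) : ℚ) / (2 * k).choose k

namespace sliceEigenvalue

theorem zero (k : ℕ) : sliceEigenvalue k 0 = 1 := by
  have : ((2 * k).choose k : ℚ) ≠ 0 := by exact_mod_cast (Nat.choose_pos (by omega)).ne'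
  simp [sliceEigenvalue, this]

theorem succ {k d : ℕ} (hd : d < k) :
    sliceEigenvalue k (d + 1) = -sliceEigenvalue k d * ((k : ℚ) - d) / (2 * k - d) := by
  have hrec : ((2 * k - d).choose (k - d) : ℚ) * ((k : ℚ) - d)
      = (2 * k - d) * (2 * k - (d + 1)).choose (k - (d + 1)) := by
    have h := congrArg (Nat.cast (R := ℚ)) (Nat.choose_sub_sub_mul (n := 2 * k) (by omega) hd)
    push_cast [Nat.cast_sub (by omega : d ≤ 2 * k), Nat.cast_sub hd.le] at h
    exact h
  have hden : (2 * k : ℚ) - d ≠ 0 := by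
    have : (d : ℚ) < k := by exact_mod_cast hd
    linarith
  have hnext : ((2 * k - (d + 1)).choose (k - (d + 1)) : ℚ)
      = (2 * k - d).choose (k - d) * ((k : ℚ) - d) / (2 * k - d) := by
    rw [hrec, mul_div_cancel_left₀ _ hden]
  unfold sliceEigenvalue
  rw [hnext, pow_succ]
  ring

theorem neg_one_pow_mul_nonneg (k d : ℕ) : 0 ≤ (-1) ^ d * sliceEigenvalue k d := by
  have hsq : ((-1 : ℚ) ^ d) * (-1) ^ d = 1 := by rw [← mul_pow]; norm_num
  unfold sliceEigenvalue
  rw [mul_div_assoc, ← mul_assoc, hsq, one_mul]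
  positivity

theorem abs_le {k d : ℕ} (hd : d ≤ k) : |sliceEigenvalue k d| ≤ (1 / 2) ^ d := by
  have habs : |sliceEigenvalue k d| = ((2 * k - d).choose (k - d) : ℚ) / (2 * k).choose k := by
    simp [sliceEigenvalue, abs_div]
  exact habs ▸ choose_sub_sub_div_choose_le le_rfl hd

end sliceEigenvalue

/-- the eigenvalues `α_d = (−1)^d C(2k−d,k−d)/C(2k,k)`
(equivalently `(−1)^d (2k−d)! k! / ((2k)! (k−d)!)`) of the replacement operator on
the `k`-slice of a `3k`-set satisfy `α₀ = 1`, the recursion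
`α_d = −α_{d−1}(k−d+1)/(2k−d+1)` for `1 ≤ d ≤ k`, and the bounds
`0 ≤ α_{2i} ≤ 4^{−i}` and `−2^{−2i−1} ≤ α_{2i+1} ≤ 0`. -/
theorem stmt8 (k : ℕ) :
    let alpha : ℕ → ℚ := fun d =>
      (-1) ^ d * ((Nat.choose (2 * k - d) (k - d) : ℕ) : ℚ) / ((Nat.choose (2 * k) k : ℕ) : ℚ)
    alpha 0 = 1 ∧
    (∀ d : ℕ, 1 ≤ d → d ≤ k →
      alpha d = -alpha (d - 1) * ((k : ℚ) - d + 1) / ((2 * k : ℚ) - d + 1)) ∧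
    (∀ i : ℕ, 2 * i ≤ k → 0 ≤ alpha (2 * i) ∧ alpha (2 * i) ≤ (1 / 4) ^ i) ∧
    (∀ i : ℕ, 2 * i + 1 ≤ k →
      -(1 / 2) * (1 / 4) ^ i ≤ alpha (2 * i + 1) ∧ alpha (2 * i + 1) ≤ 0) := by
  intro alpha
  have hα : alpha = sliceEigenvalue k := rfl
  simp only [hα]
  refine ⟨sliceEigenvalue.zero k, fun d hd1 hdk => ?_, fun i hi => ?_, fun i hi => ?_⟩
  · obtain ⟨e, rfl⟩ : ∃ e, d = e + 1 := ⟨d - 1, by omega⟩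
    rw [sliceEigenvalue.succ hdk, Nat.add_sub_cancel]
    push_cast
    ring_nf
  · have hsign := sliceEigenvalue.neg_one_pow_mul_nonneg k (2 * i)
    rw [pow_mul, neg_one_sq, one_pow, one_mul] at hsign
    have hbound := sliceEigenvalue.abs_le hi
    rw [pow_mul] at hbound
    exact ⟨hsign, (le_abs_self _).trans (by norm_num at hbound ⊢; exact hbound)⟩
  · have hsign := sliceEigenvalue.neg_one_pow_mul_nonneg k (2 * i + 1)
    rw [pow_succ, pow_mul, neg_one_sq, one_pow, one_mul, neg_one_mul] at hsign
    have hbound := sliceEigenvalue.abs_le hi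
    rw [pow_succ, pow_mul] at hbound
    constructor <;> norm_num at hbound ⊢ <;> linarith [neg_abs_le (sliceEigenvalue k (2 * i + 1))]
end

section
/- Let g : S → {0,1} be an egalitarian Boolean function on the k-slice S of a 3k-element set, with p = P_{x∼U(S)}(g(x)=1). Then the replacement stability Stab_R(g) = ⟨g, T_R g⟩ satisfies p² − (p − p²)/8 ≤ Stab_R(g) ≤ p² + (p − p²)/4. -/
/-!
Let `f = g - p` be the centred indicator of `g`, `A` the disjointness matrix of the slice
(`A = C(2k, k) • T_R`) and `V_d` the span of the juntas `χ_T = 1[T ⊆ x]` with `|T| ≤ d`.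
Counting the `k`-sets that avoid `x` and contain `T`, then applying inclusion–exclusion, gives
`A χ_T = C(2k - |T|, k - |T|) • Σ_{U ⊆ T} (-1)^|U| χ_U`. So `A - μ_d` maps `V_d` into `V_{d-1}`,
where `μ_d = (-1)^d C(2k - d, k - d)`, and `A` acts on the harmonic part of degree `d` as `μ_d`.
Moreover `|μ_d| ≤ C(2k, k) / 2^d`. Egalitarianism says exactly that `f ⊥ V_1`, hence
`-C(2k, k)/8 ⟨f, f⟩ ≤ ⟨f, A f⟩ ≤ C(2k, k)/4 ⟨f, f⟩`, and
`⟨f, f⟩ = |S| (p - p²)`, `⟨f, A f⟩ = |S| C(2k, k) (Stab_R(g) - p²)`.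
-/

variable {α : Type*} [DecidableEq α]

/-- The `k`-slice of `V`. -/
def kslice (V : Finset α) (k : ℕ) : Finset (Finset α) :=
  V.powerset.filter (fun x => x.card = k)

/-- A Boolean function on the `k`-slice is egalitarian if the conditional probability
that `g(x) = 1` given `i ∈ x` (for `x` uniform on the slice) is independent of
`i ∈ V`; equivalently the counts `#{x ∈ S : i ∈ x ∧ g x = 1}` agree for all `i ∈ V`. -/
def Egalitarian (V : Finset α) (k : ℕ) (g : Finset α → Bool) : Prop :=
  ∀ i ∈ V, ∀ j ∈ V,
    ((kslice V k).filter (fun x => i ∈ x ∧ g x = true)).card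
      = ((kslice V k).filter (fun x => j ∈ x ∧ g x = true)).card

open Finset Matrix

theorem Submodule.dotProduct_eq_zero_of_mem_span {R ι : Type*} [CommSemiring R] [Fintype ι]
    {s : Set (ι → R)} {f : ι → R} (h : ∀ w ∈ s, w ⬝ᵥ f = 0) {w : ι → R}
    (hw : w ∈ Submodule.span R s) : w ⬝ᵥ f = 0 := by
  induction hw using Submodule.span_induction with
  | mem w hw => exact h w hw
  | zero => exact zero_dotProduct f
  | add u v _ _ hu hv => rw [add_dotProduct, hu, hv, add_zero]
  | smul c u _ hu => rw [smul_dotProduct, hu, smul_zero]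

theorem Matrix.IsSymm.dotProduct_mulVec_comm {R ι : Type*} [CommSemiring R] [Fintype ι]
    {A : Matrix ι ι R} (hA : A.IsSymm) (v w : ι → R) : v ⬝ᵥ (A *ᵥ w) = (A *ᵥ v) ⬝ᵥ w := by
  rw [dotProduct_mulVec, ← mulVec_transpose, hA.eq, dotProduct_comm]

section OrderedField

variable {𝕜 ι : Type*} [Field 𝕜] [LinearOrder 𝕜] [IsStrictOrderedRing 𝕜] [Fintype ι]

theorem Submodule.exists_mem_forall_dotProduct_sub_eq_zero (W : Submodule 𝕜 (ι → 𝕜))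
    (f : ι → 𝕜) : ∃ h ∈ W, ∀ w ∈ W, w ⬝ᵥ (f - h) = 0 := by
  let B : LinearMap.BilinForm 𝕜 (ι → 𝕜) := dotProductBilin 𝕜 𝕜
  have hrefl : B.IsRefl := fun x y h => by simpa [B, dotProduct_comm] using h
  have hnd : (B.restrict W).Nondegenerate :=
    ⟨fun w hw => Subtype.ext (dotProduct_self_eq_zero.1 (hw w)),
     fun w hw => Subtype.ext (dotProduct_self_eq_zero.1 (hw w))⟩
  obtain ⟨h, hh, q, hq, rfl⟩ := Submodule.mem_sup.1
    ((LinearMap.BilinForm.isCompl_orthogonal_of_restrict_nondegenerate hrefl hnd).codisjoint.eq_top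
      ▸ Submodule.mem_top (x := f))
  exact ⟨h, hh, fun w hw => by simpa [B] using hq w hw⟩

theorem eq_zero_of_mem_of_forall_dotProduct_eq_zero {W : Submodule 𝕜 (ι → 𝕜)} {f : ι → 𝕜}
    (hf : f ∈ W) (horth : ∀ w ∈ W, w ⬝ᵥ f = 0) : f = 0 :=
  dotProduct_self_eq_zero.1 (horth f hf)

/-- Writing `f = h + q` with `h ∈ W (D - 1)` and `q ⊥ W (D - 1)`, the vector `A q - μ D • q`
lies in `W (D - 1)` and is orthogonal to it, so `q` is a `μ D`-eigenvector and induction applies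
to `h`. -/
theorem dotProduct_mulVec_bounds_of_triangular {A : Matrix ι ι 𝕜} (hA : A.IsSymm)
    {W : ℕ → Submodule 𝕜 (ι → 𝕜)} (hW : Monotone W) {μ : ℕ → 𝕜} {m D : ℕ} {a b : 𝕜}
    (htri : ∀ d, m < d → d ≤ D → ∀ f ∈ W d, A *ᵥ f - μ d • f ∈ W (d - 1))
    (hμ : ∀ d, m < d → d ≤ D → a ≤ μ d ∧ μ d ≤ b)
    {f : ι → 𝕜} (hf : f ∈ W D) (horth : ∀ w ∈ W m, w ⬝ᵥ f = 0) :
    a * (f ⬝ᵥ f) ≤ f ⬝ᵥ (A *ᵥ f) ∧ f ⬝ᵥ (A *ᵥ f) ≤ b * (f ⬝ᵥ f) := by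
  induction D generalizing f with
  | zero =>
    obtain rfl := eq_zero_of_mem_of_forall_dotProduct_eq_zero (hW (Nat.zero_le m) hf) horth
    simp
  | succ D ih =>
    by_cases hDm : D + 1 ≤ m
    · obtain rfl := eq_zero_of_mem_of_forall_dotProduct_eq_zero (hW hDm hf) horth
      simp
    obtain ⟨h, hhW, hq⟩ := (W D).exists_mem_forall_dotProduct_sub_eq_zero f
    set q := f - h
    have hAW : ∀ w ∈ W D, A *ᵥ w ∈ W D := fun w hw => by
      simpa using add_mem (htri (D + 1) (by omega) le_rfl w (hW D.le_succ hw))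
        (Submodule.smul_mem _ (μ (D + 1)) hw)
    have hAq : A *ᵥ q = μ (D + 1) • q := by
      have hr : A *ᵥ q - μ (D + 1) • q ∈ W D := by
        simpa using htri (D + 1) (by omega) le_rfl q (sub_mem hf (hW D.le_succ hhW))
      refine sub_eq_zero.1 (eq_zero_of_mem_of_forall_dotProduct_eq_zero hr fun w hw => ?_)
      rw [dotProduct_sub, dotProduct_smul, hA.dotProduct_mulVec_comm, hq _ (hAW w hw), hq w hw]
      simp
    have hhq : h ⬝ᵥ q = 0 := hq h hhW
    have hAhq : (A *ᵥ h) ⬝ᵥ q = 0 := hq _ (hAW h hhW)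
    have hff : f ⬝ᵥ f = h ⬝ᵥ h + q ⬝ᵥ q := by
      rw [show f = h + q by simp [q]]
      simp only [add_dotProduct, dotProduct_add, hhq, dotProduct_comm q h]
      ring
    have hfAf : f ⬝ᵥ (A *ᵥ f) = h ⬝ᵥ (A *ᵥ h) + μ (D + 1) * (q ⬝ᵥ q) := by
      rw [show f = h + q by simp [q]]
      simp only [mulVec_add, hAq, add_dotProduct, dotProduct_add, dotProduct_smul, hhq,
        dotProduct_comm q (A *ᵥ h), hAhq, smul_eq_mul]
      ring
    obtain ⟨hlo, hhi⟩ := ih (fun d hmd hdD => htri d hmd (by omega))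
      (fun d hmd hdD => hμ d hmd (by omega)) hhW fun w hw => by
        simpa [q, dotProduct_sub, horth w hw] using hq w (hW (by omega) hw)
    obtain ⟨hμlo, hμhi⟩ := hμ (D + 1) (by omega) le_rfl
    have hqq : 0 ≤ q ⬝ᵥ q := Finset.sum_nonneg fun i _ => mul_self_nonneg (q i)
    rw [hff, hfAf]
    constructor <;> nlinarith [mul_le_mul_of_nonneg_right hμlo hqq,
      mul_le_mul_of_nonneg_right hμhi hqq]

end OrderedField

theorem Nat.two_mul_choose_le_succ_choose_succ {n j : ℕ} (h : 2 * (j + 1) ≤ n + 1) :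
    2 * n.choose j ≤ (n + 1).choose (j + 1) := by
  refine Nat.le_of_mul_le_mul_right ?_ j.succ_pos
  calc 2 * n.choose j * (j + 1) = 2 * (j + 1) * n.choose j := by ring
    _ ≤ (n + 1) * n.choose j := Nat.mul_le_mul_right _ h
    _ = (n + 1).choose (j + 1) * (j + 1) := Nat.add_one_mul_choose_eq n j

theorem Nat.choose_sub_mul_two_pow_le {n k d : ℕ} (hn : 2 * k ≤ n) (hd : d ≤ k) :
    (n - d).choose (k - d) * 2 ^ d ≤ n.choose k := by
  induction d with
  | zero => simp
  | succ d ih =>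
    have hstep : 2 * (n - (d + 1)).choose (k - (d + 1)) ≤ (n - d).choose (k - d) := by
      have := Nat.two_mul_choose_le_succ_choose_succ (n := n - (d + 1)) (j := k - (d + 1))
        (by omega)
      rwa [show n - (d + 1) + 1 = n - d by omega, show k - (d + 1) + 1 = k - d by omega] at this
    calc (n - (d + 1)).choose (k - (d + 1)) * 2 ^ (d + 1)
        = 2 * (n - (d + 1)).choose (k - (d + 1)) * 2 ^ d := by ring
      _ ≤ (n - d).choose (k - d) * 2 ^ d := Nat.mul_le_mul_right _ hstep
      _ ≤ n.choose k := ih (by omega)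

/-- The eigenvalue of the disjointness matrix of the `k`-slice of an `n`-set on its harmonic
component of degree `d`. -/
def disjointnessEigenvalue (n k d : ℕ) : ℚ := (-1) ^ d * (n - k - d).choose (k - d)

theorem disjointnessEigenvalue_bounds {n k d : ℕ} (hn : 3 * k ≤ n) (hd : 2 ≤ d) (hdk : d ≤ k) :
    -((n - k).choose k : ℚ) / 8 ≤ disjointnessEigenvalue n k d ∧
      disjointnessEigenvalue n k d ≤ ((n - k).choose k : ℚ) / 4 := by
  have hc : ((n - k - d).choose (k - d) : ℚ) * 2 ^ d ≤ (n - k).choose k := by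
    exact_mod_cast Nat.choose_sub_mul_two_pow_le (n := n - k) (by omega) hdk
  have hc0 : (0 : ℚ) ≤ (n - k - d).choose (k - d) := Nat.cast_nonneg _
  rcases d.even_or_odd with he | ho
  · have h4 : (2 : ℚ) ^ 2 ≤ 2 ^ d := pow_le_pow_right₀ one_le_two hd
    rw [disjointnessEigenvalue, he.neg_one_pow, one_mul]
    constructor <;> nlinarith
  · have h8 : (2 : ℚ) ^ 3 ≤ 2 ^ d :=
      pow_le_pow_right₀ one_le_two (by obtain ⟨j, rfl⟩ := ho; omega)
    rw [disjointnessEigenvalue, ho.neg_one_pow, neg_one_mul]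
    constructor <;> nlinarith

section Slice

variable {β : Type*}

theorem mem_kslice {V x : Finset β} {k : ℕ} : x ∈ kslice V k ↔ x ⊆ V ∧ #x = k := by
  rw [kslice, mem_filter, mem_powerset]

theorem card_kslice (V : Finset β) (k : ℕ) : #(kslice V k) = (#V).choose k := by
  rw [kslice, ← powersetCard_eq_filter, card_powersetCard]

def sliceIndicator (V : Finset β) (k : ℕ) (Q : Finset β → Prop) [DecidablePred Q] :
    kslice V k → ℚ :=
  fun x => if Q x.1 then 1 else 0

theorem sum_sliceIndicator {V : Finset β} {k : ℕ} (Q : Finset β → Prop) [DecidablePred Q] :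
    ∑ x, sliceIndicator V k Q x = #{x ∈ kslice V k | Q x} := by
  rw [← sum_boole, ← sum_coe_sort (kslice V k)]
  rfl

theorem sliceIndicator_dotProduct {V : Finset β} {k : ℕ} (Q R : Finset β → Prop)
    [DecidablePred Q] [DecidablePred R] :
    sliceIndicator V k Q ⬝ᵥ sliceIndicator V k R = #{x ∈ kslice V k | Q x ∧ R x} := by
  rw [← sum_sliceIndicator]
  simp only [dotProduct, sliceIndicator, ite_zero_mul_ite_zero, mul_one]

def sliceDensity (V : Finset β) (k : ℕ) (g : Finset β → Bool) : ℚ :=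
  #{x ∈ kslice V k | g x = true} / #(kslice V k)

theorem card_filter_eq_sliceDensity_mul {V : Finset β} {k : ℕ} {g : Finset β → Bool} :
    (#{x ∈ kslice V k | g x = true} : ℚ) = sliceDensity V k g * #(kslice V k) := by
  refine (div_mul_cancel_of_imp fun hN => ?_).symm
  exact_mod_cast Nat.eq_zero_of_le_zero ((card_filter_le _ _).trans (by exact_mod_cast hN.le))

end Slice

section Counting

variable {β : Type*} [DecidableEq β]

theorem sum_card_filter_mem_and (V : Finset β) (k : ℕ) (Q : Finset β → Prop) [DecidablePred Q] :
    ∑ i ∈ V, #{x ∈ kslice V k | i ∈ x ∧ Q x} = k * #{x ∈ kslice V k | Q x} := by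
  have := sum_card_bipartiteAbove_eq_sum_card_bipartiteBelow (s := V)
    (t := {x ∈ kslice V k | Q x}) (r := fun i x => i ∈ x)
  simp only [bipartiteAbove, bipartiteBelow, filter_filter, and_comm (a := Q _)] at this
  rw [this, sum_const_nat fun x hx => ?_, mul_comm]
  obtain ⟨hxV, rfl⟩ := mem_kslice.1 (mem_filter.1 hx).1
  rw [filter_mem_eq_inter, inter_eq_right.2 hxV]

theorem card_mul_card_filter_mem_and_eq {V : Finset β} {k : ℕ} {Q : Finset β → Prop}
    [DecidablePred Q] {i : β}
    (hQ : ∀ j ∈ V, #{x ∈ kslice V k | j ∈ x ∧ Q x} = #{x ∈ kslice V k | i ∈ x ∧ Q x}) :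
    #V * #{x ∈ kslice V k | i ∈ x ∧ Q x} = k * #{x ∈ kslice V k | Q x} := by
  rw [← sum_card_filter_mem_and, sum_const_nat hQ]

theorem card_filter_disjoint_subset {V x T : Finset β} {k : ℕ} (hx : x ⊆ V) (hT : T ⊆ V)
    (hTk : #T ≤ k) :
    #{y ∈ kslice V k | Disjoint x y ∧ T ⊆ y}
      = if Disjoint T x then (#V - #x - #T).choose (k - #T) else 0 := by
  split_ifs with hTx
  · have hfilter : {y ∈ kslice V k | Disjoint x y ∧ T ⊆ y}
        = {y ∈ (V \ x).powersetCard k | T ⊆ y} := by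
      ext y
      simp only [mem_filter, mem_kslice, mem_powersetCard, subset_sdiff]
      tauto
    rw [hfilter, card_filter_powersetCard_subset T (V \ x) k (subset_sdiff.2 ⟨hT, hTx⟩) hTk,
      card_sdiff_of_subset hx]
  · refine card_eq_zero.2 (filter_eq_empty_iff.2 fun y _ ⟨hxy, hTy⟩ => hTx ?_)
    exact (hxy.mono_right hTy).symm

theorem card_filter_mem_kslice_eq {V : Finset β} {k : ℕ} {i j : β} (hi : i ∈ V) (hj : j ∈ V) :
    #{x ∈ kslice V k | i ∈ x} = #{x ∈ kslice V k | j ∈ x} := by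
  rcases Nat.eq_zero_or_pos k with rfl | hk
  · have h : ∀ l, #{x ∈ kslice V 0 | l ∈ x} = 0 := fun l => card_eq_zero.2
      (filter_eq_empty_iff.2 fun x hx hl => (card_pos.2 ⟨l, hl⟩).ne' (mem_kslice.1 hx).2)
    rw [h i, h j]
  · have h : ∀ l ∈ V, #{x ∈ kslice V k | l ∈ x} = (#V - 1).choose (k - 1) := fun l hl => by
      simpa using card_filter_disjoint_subset (k := k) (empty_subset V)
        (singleton_subset_iff.2 hl) (by rwa [card_singleton])
    rw [h i hi, h j hj]

theorem ite_disjoint_eq_sum_powerset {R : Type*} [CommRing R] (T x : Finset β) :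
    (if Disjoint T x then 1 else 0 : R)
      = ∑ U ∈ T.powerset, (-1) ^ #U * if U ⊆ x then 1 else 0 := by
  simp only [mul_ite, mul_one, mul_zero, ← sum_filter]
  have hfilter : {U ∈ T.powerset | U ⊆ x} = (T ∩ x).powerset := by
    ext U
    simp only [mem_filter, mem_powerset, subset_inter_iff]
  have := congrArg (Int.cast : ℤ → R) (sum_powerset_neg_one_pow_card (x := T ∩ x))
  push_cast at this
  rw [hfilter, this]
  exact if_congr disjoint_iff_inter_eq_empty rfl rfl

end Counting

section Disjointness

variable {β : Type*} [DecidableEq β] (V : Finset β) (k : ℕ)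

/-- `C(#V - k, k) • T_R`, with `T_R` the replacement operator. -/
def disjointnessMatrix : Matrix (kslice V k) (kslice V k) ℚ :=
  Matrix.of fun x y => if Disjoint x.1 y.1 then 1 else 0

/-- The functions of degree at most `d`: the sum of the harmonic components of degree `≤ d`. -/
def degLE (d : ℕ) : Submodule ℚ (kslice V k → ℚ) :=
  Submodule.span ℚ ((fun T => sliceIndicator V k (T ⊆ ·)) '' {T | T ⊆ V ∧ #T ≤ d})

variable {V k}

theorem disjointnessMatrix_isSymm : (disjointnessMatrix V k).IsSymm :=
  IsSymm.ext fun x y => by simp only [disjointnessMatrix, of_apply, disjoint_comm]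

theorem sliceIndicator_dotProduct_mulVec (Q R : Finset β → Prop) [DecidablePred Q]
    [DecidablePred R] :
    sliceIndicator V k Q ⬝ᵥ (disjointnessMatrix V k *ᵥ sliceIndicator V k R)
      = #{q ∈ {q ∈ kslice V k ×ˢ kslice V k | Disjoint q.1 q.2} | Q q.1 ∧ R q.2} := by
  rw [filter_filter, card_filter, sum_product]
  simp only [dotProduct, mulVec, disjointnessMatrix, sliceIndicator, of_apply, mul_sum]
  push_cast
  rw [← sum_coe_sort (kslice V k)]
  refine sum_congr rfl fun x _ => ?_
  rw [← sum_coe_sort (kslice V k)]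
  refine sum_congr rfl fun y _ => ?_
  split_ifs <;> simp_all

theorem sliceIndicator_subset_mem_degLE {T : Finset β} {d : ℕ} (hT : T ⊆ V) (hTd : #T ≤ d) :
    sliceIndicator V k (T ⊆ ·) ∈ degLE V k d :=
  Submodule.subset_span ⟨T, ⟨hT, hTd⟩, rfl⟩

theorem degLE_mono : Monotone (degLE V k) := fun _ _ hde =>
  Submodule.span_mono (Set.image_mono fun _ ⟨hT, hTd⟩ => ⟨hT, hTd.trans hde⟩)

theorem degLE_eq_top : degLE V k k = ⊤ := by
  refine eq_top_iff.2 fun f _ => ?_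
  rw [pi_eq_sum_univ f]
  refine Submodule.sum_mem _ fun x _ => Submodule.smul_mem _ _ ?_
  convert sliceIndicator_subset_mem_degLE (mem_kslice.1 x.2).1 (mem_kslice.1 x.2).2.le using 1
  funext y
  refine if_congr ⟨fun h => h ▸ subset_rfl, fun h => Subtype.ext ?_⟩ rfl rfl
  exact eq_of_subset_of_card_le h ((mem_kslice.1 y.2).2.trans (mem_kslice.1 x.2).2.symm).le

theorem disjointnessMatrix_mulVec_sliceIndicator_subset {T : Finset β} (hT : T ⊆ V)
    (hTk : #T ≤ k) :
    disjointnessMatrix V k *ᵥ sliceIndicator V k (T ⊆ ·)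
      = ((#V - k - #T).choose (k - #T) : ℚ) •
          ∑ U ∈ T.powerset, (-1 : ℚ) ^ #U • sliceIndicator V k (U ⊆ ·) := by
  funext x
  obtain ⟨hxV, hxk⟩ := mem_kslice.1 x.2
  have hcount := card_filter_disjoint_subset hxV hT hTk
  rw [hxk] at hcount
  calc (disjointnessMatrix V k *ᵥ sliceIndicator V k (T ⊆ ·)) x
      = #{y ∈ kslice V k | Disjoint x.1 y ∧ T ⊆ y} := by
        rw [← sum_sliceIndicator]
        simp only [mulVec, dotProduct, disjointnessMatrix, sliceIndicator, of_apply,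
          ite_zero_mul_ite_zero, mul_one]
    _ = ((#V - k - #T).choose (k - #T) : ℚ) * if Disjoint T x.1 then 1 else 0 := by
        rw [hcount]; split_ifs <;> simp
    _ = _ := by
        rw [ite_disjoint_eq_sum_powerset]
        simp [sliceIndicator, Finset.sum_apply]

theorem disjointnessMatrix_mulVec_sliceIndicator_empty :
    disjointnessMatrix V k *ᵥ sliceIndicator V k (∅ ⊆ ·)
      = ((#V - k).choose k : ℚ) • sliceIndicator V k (∅ ⊆ ·) := by
  simpa using disjointnessMatrix_mulVec_sliceIndicator_subset (V := V) (k := k) (empty_subset V)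
    (Nat.zero_le k)

theorem card_filter_disjoint_product :
    #{q ∈ kslice V k ×ˢ kslice V k | Disjoint q.1 q.2} = #(kslice V k) * (#V - k).choose k := by
  have h := sliceIndicator_dotProduct_mulVec (V := V) (k := k) (∅ ⊆ ·) (∅ ⊆ ·)
  rw [disjointnessMatrix_mulVec_sliceIndicator_empty, dotProduct_smul,
    sliceIndicator_dotProduct] at h
  have h' : (#{q ∈ kslice V k ×ˢ kslice V k | Disjoint q.1 q.2} : ℚ)
      = #(kslice V k) * (#V - k).choose k := by simpa [mul_comm] using h.symm
  exact_mod_cast h'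

theorem disjointnessMatrix_mulVec_sub_smul_mem {d : ℕ} (hdk : d ≤ k) {f : kslice V k → ℚ}
    (hf : f ∈ degLE V k d) :
    disjointnessMatrix V k *ᵥ f - disjointnessEigenvalue #V k d • f ∈ degLE V k (d - 1) := by
  let L := (disjointnessMatrix V k).mulVecLin - disjointnessEigenvalue #V k d • LinearMap.id
  suffices degLE V k d ≤ (degLE V k (d - 1)).comap L from this hf
  refine Submodule.span_le.2 ?_
  rintro _ ⟨T, ⟨hT, hTd⟩, rfl⟩
  simp only [SetLike.mem_coe, Submodule.mem_comap, L, LinearMap.sub_apply, mulVecLin_apply,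
    LinearMap.smul_apply, LinearMap.id_apply]
  rw [disjointnessMatrix_mulVec_sliceIndicator_subset hT (hTd.trans hdk),
    ← add_sum_erase _ _ (mem_powerset_self T)]
  set c : ℚ := ((#V - k - #T).choose (k - #T) : ℚ)
  set R := ∑ U ∈ T.powerset.erase T, (-1 : ℚ) ^ #U • sliceIndicator V k (U ⊆ ·)
  have hsplit : c • ((-1 : ℚ) ^ #T • sliceIndicator V k (T ⊆ ·) + R)
      - disjointnessEigenvalue #V k d • sliceIndicator V k (T ⊆ ·)
      = (c * (-1) ^ #T - disjointnessEigenvalue #V k d) • sliceIndicator V k (T ⊆ ·) + c • R := by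
    module
  rw [hsplit]
  refine add_mem ?_ (Submodule.smul_mem _ _ (Submodule.sum_mem _ fun U hU => ?_))
  · rcases hTd.lt_or_eq with hlt | rfl
    · exact Submodule.smul_mem _ _ (sliceIndicator_subset_mem_degLE hT (by omega))
    · simp [c, disjointnessEigenvalue, mul_comm]
  · obtain ⟨hUT, hUsub⟩ := mem_erase.1 hU
    have hlt := card_lt_card (ssubset_of_subset_of_ne (mem_powerset.1 hUsub) hUT)
    exact Submodule.smul_mem _ _
      (sliceIndicator_subset_mem_degLE ((mem_powerset.1 hUsub).trans hT) (by omega))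

end Disjointness

section Centered

variable {β : Type*} [DecidableEq β] (V : Finset β) (k : ℕ) (g : Finset β → Bool)

def centeredIndicator : kslice V k → ℚ :=
  sliceIndicator V k (g · = true) - sliceDensity V k g • sliceIndicator V k (∅ ⊆ ·)

variable {V k g}

theorem centeredIndicator_dotProduct_self :
    centeredIndicator V k g ⬝ᵥ centeredIndicator V k g
      = #(kslice V k) * (sliceDensity V k g - sliceDensity V k g ^ 2) := by
  simp only [centeredIndicator, dotProduct_sub, sub_dotProduct, dotProduct_smul, smul_dotProduct,
    sliceIndicator_dotProduct, empty_subset, true_and, and_true, and_self, filter_true,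
    smul_eq_mul, card_filter_eq_sliceDensity_mul]
  ring

theorem centeredIndicator_dotProduct_mulVec :
    centeredIndicator V k g ⬝ᵥ (disjointnessMatrix V k *ᵥ centeredIndicator V k g)
      = #{q ∈ {q ∈ kslice V k ×ˢ kslice V k | Disjoint q.1 q.2} | g q.1 = true ∧ g q.2 = true}
        - (#V - k).choose k * #(kslice V k) * sliceDensity V k g ^ 2 := by
  have hsymm := (disjointnessMatrix_isSymm (V := V) (k := k)).dotProduct_mulVec_comm
    (sliceIndicator V k (∅ ⊆ ·)) (sliceIndicator V k (g · = true))
  simp only [centeredIndicator, mulVec_sub, mulVec_smul, dotProduct_sub, sub_dotProduct,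
    dotProduct_smul, smul_dotProduct, hsymm, disjointnessMatrix_mulVec_sliceIndicator_empty,
    sliceIndicator_dotProduct_mulVec, sliceIndicator_dotProduct, empty_subset, true_and,
    and_true, and_self, filter_true, smul_eq_mul, card_filter_eq_sliceDensity_mul]
  ring

end Centered

theorem Egalitarian.sliceIndicator_subset_dotProduct_centeredIndicator {V : Finset α} {k : ℕ}
    {g : Finset α → Bool} (hg : Egalitarian V k g) (hk : k ≤ #V) {T : Finset α} (hT : T ⊆ V)
    (hT1 : #T ≤ 1) : sliceIndicator V k (T ⊆ ·) ⬝ᵥ centeredIndicator V k g = 0 := by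
  have hN : (#(kslice V k) : ℚ) ≠ 0 := by
    rw [card_kslice]; exact_mod_cast (Nat.choose_pos hk).ne'
  simp only [centeredIndicator, dotProduct_sub, dotProduct_smul, sliceIndicator_dotProduct,
    empty_subset, and_true, smul_eq_mul, sliceDensity]
  rw [div_mul_eq_mul_div, sub_eq_zero, eq_div_iff hN]
  rcases Nat.le_one_iff_eq_zero_or_eq_one.1 hT1 with h0 | h1
  · simp [card_eq_zero.1 h0, mul_comm]
  · obtain ⟨i, rfl⟩ := card_eq_one.1 h1
    have hi : i ∈ V := singleton_subset_iff.1 hT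
    have hcount := card_mul_card_filter_mem_and_eq (Q := (g · = true)) fun j hj => hg j hj i hi
    have hall := card_mul_card_filter_mem_and_eq (V := V) (k := k) (Q := fun _ => True) (i := i)
      fun j hj => by simpa using card_filter_mem_kslice_eq hj hi
    simp only [and_true, filter_true] at hall
    have key : #{x ∈ kslice V k | i ∈ x ∧ g x = true} * #(kslice V k)
        = #{x ∈ kslice V k | g x = true} * #{x ∈ kslice V k | i ∈ x} := by
      refine Nat.eq_of_mul_eq_mul_left (card_pos.2 ⟨i, hi⟩) ?_
      rw [← mul_assoc, hcount, mul_left_comm, hall]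
      ring
    simp only [singleton_subset_iff]
    exact_mod_cast key

theorem Egalitarian.centeredIndicator_quadratic_bounds {V : Finset α} {k : ℕ}
    {g : Finset α → Bool} (hg : Egalitarian V k g) (hV : 3 * k ≤ #V) :
    -((#V - k).choose k : ℚ) / 8 * (centeredIndicator V k g ⬝ᵥ centeredIndicator V k g)
        ≤ centeredIndicator V k g ⬝ᵥ (disjointnessMatrix V k *ᵥ centeredIndicator V k g) ∧
      centeredIndicator V k g ⬝ᵥ (disjointnessMatrix V k *ᵥ centeredIndicator V k g)
        ≤ ((#V - k).choose k : ℚ) / 4 * (centeredIndicator V k g ⬝ᵥ centeredIndicator V k g) := by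
  refine dotProduct_mulVec_bounds_of_triangular disjointnessMatrix_isSymm degLE_mono (m := 1)
    (fun _ _ hdk _ hf => disjointnessMatrix_mulVec_sub_smul_mem hdk hf)
    (fun _ hd hdk => disjointnessEigenvalue_bounds hV hd hdk) (by simp [degLE_eq_top])
    fun _ hw => Submodule.dotProduct_eq_zero_of_mem_span ?_ hw
  rintro _ ⟨T, ⟨hT, hT1⟩, rfl⟩
  exact hg.sliceIndicator_subset_dotProduct_centeredIndicator (by omega) hT hT1

/-- for an egalitarian Boolean function `g` on the `k`-slice of a
`3k`-set, with `p = P_{x∼U(S)}(g(x)=1)`, the replacement stability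
`Stab_R(g) = ⟨g, T_R g⟩ = P(g(x)=g(y)=1)` for `x` uniform and `y` uniform over the
`k`-sets disjoint from `x`, satisfies
`p² − (p − p²)/8 ≤ Stab_R(g) ≤ p² + (p − p²)/4`. -/
theorem stmt9 (k : ℕ) (V : Finset α) (hV : V.card = 3 * k)
    (g : Finset α → Bool) (hg : Egalitarian V k g) :
    let S := kslice V k
    let P := (S ×ˢ S).filter (fun q => Disjoint q.1 q.2)
    let p : ℚ := ((S.filter (fun x => g x = true)).card : ℚ) / S.card
    let Stab : ℚ := ((P.filter (fun q => g q.1 = true ∧ g q.2 = true)).card : ℚ) / P.card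
    p ^ 2 - (p - p ^ 2) / 8 ≤ Stab ∧ Stab ≤ p ^ 2 + (p - p ^ 2) / 4 := by
  intro S P p Stab
  obtain ⟨hlo, hhi⟩ := hg.centeredIndicator_quadratic_bounds hV.ge
  rw [centeredIndicator_dotProduct_self, centeredIndicator_dotProduct_mulVec] at hlo hhi
  have hP : (#P : ℚ) = #S * (#V - k).choose k := by exact_mod_cast card_filter_disjoint_product
  have hPpos : (0 : ℚ) < #S * (#V - k).choose k := by
    rw [card_kslice]
    exact_mod_cast Nat.mul_pos (Nat.choose_pos (by omega)) (Nat.choose_pos (by omega))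
  have hp : p = sliceDensity V k g := rfl
  have hStab : Stab = #{q ∈ P | g q.1 = true ∧ g q.2 = true} / (#P : ℚ) := rfl
  rw [hp, hStab, hP, le_div_iff₀ hPpos, div_le_iff₀ hPpos]
  constructor <;> linarith
end

section
/- Let g be an egalitarian Boolean function on the k-slice of a 3k-element set with p = P_{x∼U(S)}(g(x)=1). Then P_{(x₁,x₂,x₃)}(g(x₁)=g(x₂)=g(x₃)) ≥ (8 − 27p + 27p²)/8, where (x₁,x₂,x₃) is uniform over ordered partitions of V into three k-sets. In particular this probability is always at least 5/32. -/
variable {α : Type*} [DecidableEq α]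

/-- Ordered partitions of `V` into three parts of sizes `a`, `b`, `c`. -/
def triples (V : Finset α) (a b c : ℕ) : Finset (Finset α × Finset α × Finset α) :=
  (V.powerset ×ˢ V.powerset ×ˢ V.powerset).filter
    (fun p => p.1.card = a ∧ p.2.1.card = b ∧ p.2.2.card = c ∧
      Disjoint p.1 p.2.1 ∧ Disjoint p.1 p.2.2 ∧ Disjoint p.2.1 p.2.2 ∧
      p.1 ∪ p.2.1 ∪ p.2.2 = V)

/-!
Write `f` for the indicator of `g` and `u = f - p`. Counting, for each of the three pairs of
parts, the disjoint pairs of `k`-sets on which `g` differs gives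
`P(A) = 1 - 3p + 3p² + 3⟪u, A u⟫ / (N·C(2k, k))`, where `N = C(3k, k)` and `A` is the adjacency
operator of the Kneser graph `K(3k, k)`.

To bound `⟪u, A u⟫`, decompose `u = ∑ j, up^(k-j) h_j` with `h_j` harmonic of level `j` (killed by
the lowering operator). The components are orthogonal, and since a harmonic `h` of level `j`
satisfies `∑_{z ⊆ V \ x, #z = j} h z = (-1)^j ∑_{z ⊆ x, #z = j} h z`, the `j`-th one is an
eigenvector of `A` with eigenvalue `(-1)^j C(2k-j, k-j)`. The egalitarian condition says that `u`
sums to zero over every star `{x | i ∈ x}`, which kills the component `j = 1`; all other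
eigenvalues are at least `-C(2k, k)/8`. Hence
`⟪u, A u⟫ ≥ -C(2k, k)/8 · ‖u‖² = -C(2k, k)/8 · N(p - p²)`.
-/

namespace Nat

lemma two_mul_choose_le_choose_succ {a b : ℕ} (h : 2 * (b + 1) ≤ a + 1) :
    2 * a.choose b ≤ (a + 1).choose (b + 1) := by
  refine Nat.le_of_mul_le_mul_right ?_ b.succ_pos
  calc 2 * a.choose b * (b + 1) = 2 * (b + 1) * a.choose b := by ring
    _ ≤ (a + 1) * a.choose b := Nat.mul_le_mul_right _ h
    _ = (a + 1).choose (b + 1) * (b + 1) := Nat.add_one_mul_choose_eq a b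

lemma two_pow_mul_choose_le {k j : ℕ} (hjk : j ≤ k) :
    2 ^ j * (2 * k - j).choose (k - j) ≤ (2 * k).choose k := by
  induction j with
  | zero => simp
  | succ j ih =>
    have hstep := two_mul_choose_le_choose_succ (a := 2 * k - (j + 1)) (b := k - (j + 1))
      (by omega)
    rw [show 2 * k - (j + 1) + 1 = 2 * k - j by omega,
      show k - (j + 1) + 1 = k - j by omega] at hstep
    calc 2 ^ (j + 1) * (2 * k - (j + 1)).choose (k - (j + 1))
        = 2 ^ j * (2 * (2 * k - (j + 1)).choose (k - (j + 1))) := by ring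
      _ ≤ 2 ^ j * (2 * k - j).choose (k - j) := Nat.mul_le_mul_left _ hstep
      _ ≤ (2 * k).choose k := ih (by omega)

end Nat

open Finset
open scoped Nat

namespace Slice

variable {𝕜 : Type*} [Field 𝕜] {V : Finset α}

/- Functions on the slices are functions on all finsets: `dot V m` only reads level `m`, and
`up`, `down` move values between adjacent levels. -/

def up : Module.End 𝕜 (Finset α → 𝕜) where
  toFun f x := ∑ i ∈ x, f (x.erase i)
  map_add' f g := by ext x; simp [sum_add_distrib]
  map_smul' c f := by ext x; simp [mul_sum]

def down (V : Finset α) : Module.End 𝕜 (Finset α → 𝕜) where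
  toFun f x := ∑ i ∈ V \ x, f (insert i x)
  map_add' f g := by ext x; simp [sum_add_distrib]
  map_smul' c f := by ext x; simp [mul_sum]

lemma up_apply (f : Finset α → 𝕜) (x : Finset α) : up f x = ∑ i ∈ x, f (x.erase i) := rfl

lemma down_apply (f : Finset α → 𝕜) (x : Finset α) :
    down V f x = ∑ i ∈ V \ x, f (insert i x) := rfl

def dot (V : Finset α) (m : ℕ) (a b : Finset α → 𝕜) : 𝕜 := ∑ x ∈ V.powersetCard m, a x * b x

omit [DecidableEq α] in
lemma dot_comm (m : ℕ) (a b : Finset α → 𝕜) : dot V m a b = dot V m b a := by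
  simp only [dot, mul_comm]

omit [DecidableEq α] in
lemma dot_congr_right {m : ℕ} (a : Finset α → 𝕜) {b b' : Finset α → 𝕜}
    (h : ∀ x ∈ V.powersetCard m, b x = b' x) : dot V m a b = dot V m a b' :=
  sum_congr rfl fun x hx => by rw [h x hx]

omit [DecidableEq α] in
lemma dot_smul_right (m : ℕ) (a b : Finset α → 𝕜) (c : 𝕜) :
    dot V m a (c • b) = c * dot V m a b := by
  simp only [dot, mul_sum, Pi.smul_apply, smul_eq_mul, mul_left_comm]

lemma erase_mem_powersetCard {m : ℕ} {x : Finset α} (hx : x ∈ V.powersetCard (m + 1)) {i : α}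
    (hi : i ∈ x) : x.erase i ∈ V.powersetCard m := by
  rw [mem_powersetCard] at hx ⊢
  exact ⟨(erase_subset _ _).trans hx.1, by rw [card_erase_of_mem hi, hx.2, Nat.add_sub_cancel]⟩

lemma insert_mem_powersetCard {m : ℕ} {w : Finset α} (hw : w ∈ V.powersetCard m) {i : α}
    (hi : i ∈ V \ w) : insert i w ∈ V.powersetCard (m + 1) := by
  rw [mem_sdiff] at hi
  rw [mem_powersetCard] at hw ⊢
  exact ⟨insert_subset hi.1 hw.1, by rw [card_insert_of_notMem hi.2, hw.2]⟩

lemma sum_sum_erase {β : Type*} [AddCommMonoid β] (m : ℕ) (F : Finset α → α → β) :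
    ∑ x ∈ V.powersetCard (m + 1), ∑ i ∈ x, F x i
      = ∑ w ∈ V.powersetCard m, ∑ i ∈ V \ w, F (insert i w) i := by
  rw [sum_sigma', sum_sigma']
  refine sum_nbij' (fun q => ⟨q.1.erase q.2, q.2⟩) (fun q => ⟨insert q.2 q.1, q.2⟩)
    ?_ ?_ ?_ ?_ ?_
  · rintro ⟨x, i⟩ hq
    simp only [mem_sigma] at hq ⊢
    exact ⟨erase_mem_powersetCard hq.1 hq.2,
      mem_sdiff.2 ⟨(mem_powersetCard.1 hq.1).1 hq.2, notMem_erase _ _⟩⟩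
  · rintro ⟨w, i⟩ hq
    simp only [mem_sigma] at hq ⊢
    exact ⟨insert_mem_powersetCard hq.1 hq.2, mem_insert_self _ _⟩
  · rintro ⟨x, i⟩ hq
    simp only [mem_sigma] at hq
    simp [insert_erase hq.2]
  · rintro ⟨w, i⟩ hq
    simp only [mem_sigma] at hq
    simp [erase_insert (mem_sdiff.1 hq.2).2]
  · rintro ⟨x, i⟩ hq
    simp only [mem_sigma] at hq
    simp [insert_erase hq.2]

lemma dot_up (m : ℕ) (a b : Finset α → 𝕜) : dot V (m + 1) (up a) b = dot V m a (down V b) := by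
  simp only [dot, up_apply, down_apply, sum_mul, mul_sum]
  rw [sum_sum_erase]
  refine sum_congr rfl fun w hw => sum_congr rfl fun i hi => ?_
  rw [erase_insert (mem_sdiff.1 hi).2]

lemma dot_up_pow (s m : ℕ) (a b : Finset α → 𝕜) :
    dot V (m + s) ((up ^ s) a) b = dot V m a ((down V ^ s) b) := by
  induction s generalizing b with
  | zero => rfl
  | succ s ih =>
    rw [← add_assoc, pow_succ', Module.End.mul_apply, dot_up, ih, pow_succ,
      Module.End.mul_apply]

lemma down_up_apply (a : Finset α → 𝕜) {x : Finset α} (hx : x ⊆ V) :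
    down V (up a) x = up (down V a) x + ((#V : 𝕜) - 2 * #x) * a x := by
  have hdu : down V (up a) x = ∑ i ∈ V \ x, (a x + ∑ j ∈ x, a (insert i (x.erase j))) := by
    refine sum_congr rfl fun i hi => ?_
    have hix := (mem_sdiff.1 hi).2
    rw [up_apply, sum_insert hix, erase_insert hix]
    congr 1
    refine sum_congr rfl fun j hj => ?_
    rw [erase_insert_of_ne (ne_of_mem_of_not_mem hj hix).symm]
  have hud : up (down V a) x = ∑ j ∈ x, (a x + ∑ i ∈ V \ x, a (insert i (x.erase j))) := by
    refine sum_congr rfl fun j hj => ?_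
    rw [down_apply, sdiff_erase (hx hj), sum_insert (notMem_sdiff_of_mem_right hj),
      insert_erase hj]
  have hcard : (#(V \ x) : 𝕜) = #V - #x := by
    rw [card_sdiff_of_subset hx, Nat.cast_sub (card_le_card hx)]
  rw [hdu, hud, sum_add_distrib, sum_add_distrib, sum_const, sum_const, sum_comm, nsmul_eq_mul,
    nsmul_eq_mul, hcard]
  ring

lemma card_erase_inter_of_mem {x z : Finset α} {a : α} (ha : a ∈ z) :
    #(z.erase a ∩ x) = if a ∈ x then #(z ∩ x) - 1 else #(z ∩ x) := by
  rw [erase_inter]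
  split_ifs with hax
  · exact card_erase_of_mem (mem_inter.2 ⟨ha, hax⟩)
  · exact congrArg card (erase_eq_of_notMem fun h => hax (mem_inter.1 h).2)

lemma card_filter_card_erase_inter (x z : Finset α) (i : ℕ) :
    #{a ∈ z | #(z.erase a ∩ x) = i}
      = (if #(z ∩ x) = i + 1 then i + 1 else 0) + (if #(z ∩ x) = i then #z - i else 0) := by
  by_cases h1 : #(z ∩ x) = i + 1
  · rw [if_pos h1, if_neg (by omega), add_zero, ← h1, ← filter_mem_eq_inter]
    refine congrArg card (filter_congr fun a ha => ?_)
    rw [card_erase_inter_of_mem ha]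
    split_ifs <;> simp_all
  · by_cases h0 : #(z ∩ x) = i
    · have hsdiff : #(z \ x) = #z - i := by rw [card_sdiff, inter_comm, h0]
      rw [if_neg h1, if_pos h0, zero_add, ← hsdiff, sdiff_eq_filter]
      refine congrArg card (filter_congr fun a ha => ?_)
      rw [card_erase_inter_of_mem ha]
      split_ifs with hax
      · have := card_pos.2 ⟨a, mem_inter.2 ⟨ha, hax⟩⟩
        simp only [hax, not_true_eq_false, iff_false]
        omega
      · simp [hax, h0]
    · rw [if_neg h1, if_neg h0, card_eq_zero, filter_eq_empty_iff]
      intro a ha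
      rw [card_erase_inter_of_mem ha]
      split_ifs <;> omega

lemma up_pow_apply (c : Finset α → 𝕜) {s r : ℕ} {x : Finset α} (hx : #x = s + r) :
    (up ^ r) c x = r ! * ∑ w ∈ x.powersetCard s, c w := by
  induction r generalizing x with
  | zero => rw [add_zero] at hx; rw [← hx, powersetCard_self, sum_singleton]; simp
  | succ r ih =>
    have hcount : ∑ i ∈ x, ∑ w ∈ (x.erase i).powersetCard s, c w
        = ∑ w ∈ x.powersetCard s, ∑ _i ∈ x \ w, c w :=
      sum_comm' fun i w => by
        simp only [mem_powersetCard, subset_erase, mem_sdiff]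
        tauto
    have hcard : ∀ w ∈ x.powersetCard s, ∑ _i ∈ x \ w, c w = (r + 1 : 𝕜) * c w := by
      intro w hw
      obtain ⟨hwx, hws⟩ := mem_powersetCard.1 hw
      rw [sum_const, card_sdiff_of_subset hwx, hx, hws, nsmul_eq_mul]
      push_cast [show s + (r + 1) - s = r + 1 by omega]
      ring
    rw [pow_succ', Module.End.mul_apply, up_apply]
    rw [sum_congr rfl fun i hi => ih (x := x.erase i) (by rw [card_erase_of_mem hi, hx]; omega),
      ← mul_sum, hcount, sum_congr rfl hcard, ← mul_sum, Nat.factorial_succ]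
    push_cast
    ring

lemma sum_powersetCard_sum_powersetCard {β : Type*} [AddCommMonoid β] (S : Finset α)
    (F : Finset α → β) {j k : ℕ} (hjk : j ≤ k) :
    ∑ y ∈ S.powersetCard k, ∑ z ∈ y.powersetCard j, F z
      = (#S - j).choose (k - j) • ∑ z ∈ S.powersetCard j, F z := by
  rw [sum_comm' (t' := S.powersetCard j) (s' := fun z => (S.powersetCard k).filter (z ⊆ ·))
    fun y z => by
      simp only [mem_filter, mem_powersetCard]
      constructor
      · rintro ⟨⟨hyS, hyk⟩, hzy, hzj⟩
        exact ⟨⟨⟨hyS, hyk⟩, hzy⟩, hzy.trans hyS, hzj⟩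
      · rintro ⟨⟨⟨hyS, hyk⟩, hzy⟩, -, hzj⟩
        exact ⟨⟨hyS, hyk⟩, hzy, hzj⟩, smul_sum]
  refine sum_congr rfl fun z hz => ?_
  obtain ⟨hzS, hzj⟩ := mem_powersetCard.1 hz
  rw [sum_const, card_filter_powersetCard_subset z S k hzS (hzj ▸ hjk), hzj]

lemma up_apply_congr {m : ℕ} {a b : Finset α → 𝕜} (hab : ∀ w ∈ V.powersetCard m, a w = b w)
    {x : Finset α} (hx : x ∈ V.powersetCard (m + 1)) : up a x = up b x :=
  sum_congr rfl fun _ hi => hab _ (erase_mem_powersetCard hx hi)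

lemma down_pow_congr {m s : ℕ} {a b : Finset α → 𝕜}
    (hab : ∀ y ∈ V.powersetCard (m + s), a y = b y) :
    ∀ x ∈ V.powersetCard m, (down V ^ s) a x = (down V ^ s) b x := by
  induction s generalizing m a b with
  | zero => exact hab
  | succ s ih =>
    simp only [pow_succ, Module.End.mul_apply]
    refine ih fun y hy => sum_congr rfl fun i hi => hab _ ?_
    rw [← add_assoc]
    exact insert_mem_powersetCard hy hi

def kneser (V : Finset α) (k : ℕ) (f : Finset α → 𝕜) (x : Finset α) : 𝕜 :=
  ∑ y ∈ (V \ x).powersetCard k, f y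

def kneserEigenvalue (n k j : ℕ) : 𝕜 := (-1) ^ j * (n - k - j).choose (k - j)

def IsHarmonic (V : Finset α) (j : ℕ) (h : Finset α → 𝕜) : Prop :=
  ∀ w ⊆ V, #w + 1 = j → down V h w = 0

namespace IsHarmonic

variable {j : ℕ} {h : Finset α → 𝕜}

lemma down_up_pow_succ (hh : IsHarmonic V j h) (r : ℕ) :
    ∀ x ∈ V.powersetCard (j + r),
      down V ((up ^ (r + 1)) h) x = ((r + 1) * (#V - 2 * j - r) : 𝕜) * (up ^ r) h x := by
  induction r with
  | zero =>
    intro x hx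
    obtain ⟨hxV, hxj⟩ := mem_powersetCard.1 hx
    have hdown : up (down V h) x = 0 := sum_eq_zero fun i hi => by
      have := card_pos.2 ⟨i, hi⟩
      exact hh _ ((erase_subset _ _).trans hxV) (by rw [card_erase_of_mem hi]; omega)
    rw [pow_one, down_up_apply _ hxV, hdown, hxj]
    simp
  | succ r ih =>
    intro x hx
    obtain ⟨hxV, hxj⟩ := mem_powersetCard.1 hx
    have hdown : up (down V ((up ^ (r + 1)) h)) x
        = ((r + 1) * (#V - 2 * j - r) : 𝕜) * (up ^ (r + 1)) h x := by
      calc up (down V ((up ^ (r + 1)) h)) x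
          = ∑ i ∈ x, ((r + 1) * (#V - 2 * j - r) : 𝕜) * (up ^ r) h (x.erase i) :=
            sum_congr rfl fun i hi => ih _ (erase_mem_powersetCard hx hi)
        _ = ((r + 1) * (#V - 2 * j - r) : 𝕜) * (up ^ (r + 1)) h x := by
            rw [← mul_sum, pow_succ', Module.End.mul_apply, up_apply]
    rw [pow_succ' up (r + 1), Module.End.mul_apply, down_up_apply _ hxV, hdown, hxj]
    push_cast
    ring

lemma exists_down_pow_up_pow (hh : IsHarmonic V j h) (s : ℕ) :
    ∃ c : 𝕜, ∀ x ∈ V.powersetCard j, (down V ^ s) ((up ^ s) h) x = c * h x := by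
  induction s with
  | zero => exact ⟨1, fun x _ => by simp⟩
  | succ s ih =>
    obtain ⟨c, hc⟩ := ih
    refine ⟨((s + 1) * (#V - 2 * j - s) : 𝕜) * c, fun x hx => ?_⟩
    rw [pow_succ, Module.End.mul_apply,
      down_pow_congr (b := ((s + 1) * (#V - 2 * j - s) : 𝕜) • (up ^ s) h)
        (fun y hy => hh.down_up_pow_succ s y hy) x hx,
      map_smul, Pi.smul_apply, hc x hx, smul_eq_mul]
    ring

lemma dot_up_pow_eq_zero (hh : IsHarmonic V j h) {i m : ℕ} (hij : i < j) (hjm : j ≤ m)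
    (a : Finset α → 𝕜) : dot V m ((up ^ (m - i)) a) ((up ^ (m - j)) h) = 0 := by
  obtain ⟨d, rfl⟩ := Nat.exists_eq_add_of_le hjm
  obtain ⟨l, rfl⟩ := Nat.exists_eq_add_of_lt hij
  obtain ⟨c, hc⟩ := hh.exists_down_pow_up_pow d
  have hdown : ∀ w ∈ V.powersetCard (i + l), down V h w = 0 := fun w hw =>
    hh w (mem_powersetCard.1 hw).1 (by rw [(mem_powersetCard.1 hw).2])
  rw [show i + l + 1 + d - i = d + (l + 1) by omega, Nat.add_sub_cancel_left, pow_add,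
    Module.End.mul_apply, dot_up_pow, dot_congr_right _ (b' := c • h) hc, dot_smul_right,
    pow_succ', Module.End.mul_apply, dot_up, dot_congr_right _ (b' := 0) hdown]
  simp [dot]

/-- Summing `down h = 0` over the `(j-1)`-sets meeting `x` in `i` points: each `j`-set `z`
meeting `x` in `i + 1` points arises `i + 1` times, each one meeting it in `i` points
`j - i` times. -/
lemma sum_filter_card_inter_succ (hh : IsHarmonic V j h) (x : Finset α) {i : ℕ} (hij : i < j) :
    (i + 1 : 𝕜) * ∑ z ∈ V.powersetCard j with #(z ∩ x) = i + 1, h z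
      + ((j - i : ℕ) : 𝕜) * ∑ z ∈ V.powersetCard j with #(z ∩ x) = i, h z = 0 := by
  obtain ⟨m, rfl⟩ : ∃ m, j = m + 1 := ⟨j - 1, by omega⟩
  have hzero : ∑ w ∈ V.powersetCard m, ∑ a ∈ V \ w,
      (if #(w ∩ x) = i then h (insert a w) else 0) = 0 := by
    refine sum_eq_zero fun w hw => ?_
    obtain ⟨hwV, hwm⟩ := mem_powersetCard.1 hw
    split_ifs
    · exact hh w hwV (by rw [hwm])
    · simp
  rw [← sum_congr rfl fun w _ => sum_congr rfl fun a ha =>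
      (show (if #((insert a w).erase a ∩ x) = i then h (insert a w) else 0) = _ by
        rw [erase_insert (mem_sdiff.1 ha).2]),
    ← sum_sum_erase (F := fun z a => if #(z.erase a ∩ x) = i then h z else 0)] at hzero
  simp only [← sum_filter, sum_const, card_filter_card_erase_inter, nsmul_eq_mul] at hzero
  rw [← hzero, sum_filter, sum_filter, mul_sum, mul_sum, ← sum_add_distrib]
  refine sum_congr rfl fun z hz => ?_
  rw [(mem_powersetCard.1 hz).2]
  split_ifs <;> push_cast <;> ring

lemma sum_filter_card_inter [CharZero 𝕜] (hh : IsHarmonic V j h) (x : Finset α) {i : ℕ}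
    (hij : i ≤ j) :
    ∑ z ∈ V.powersetCard j with #(z ∩ x) = i, h z
      = (-1) ^ i * j.choose i * ∑ z ∈ V.powersetCard j with #(z ∩ x) = 0, h z := by
  induction i with
  | zero => simp
  | succ i ih =>
    have hrec := hh.sum_filter_card_inter_succ x (i := i) (by omega)
    have hchoose : ((j.choose (i + 1) : ℕ) : 𝕜) * (i + 1) = j.choose i * ((j - i : ℕ) : 𝕜) := by
      exact_mod_cast Nat.choose_succ_right_eq j i
    rw [ih (by omega)] at hrec
    refine mul_left_cancel₀ (Nat.cast_add_one_ne_zero i) ?_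
    linear_combination hrec + (-1) ^ i * (∑ z ∈ V.powersetCard j with #(z ∩ x) = 0, h z) * hchoose

lemma sum_powersetCard_sdiff [CharZero 𝕜] (hh : IsHarmonic V j h) {x : Finset α} (hx : x ⊆ V) :
    ∑ z ∈ (V \ x).powersetCard j, h z = (-1) ^ j * ∑ z ∈ x.powersetCard j, h z := by
  have hall : (V.powersetCard j).filter (fun z => #(z ∩ x) = j) = x.powersetCard j := by
    ext z
    simp only [mem_filter, mem_powersetCard]
    constructor
    · rintro ⟨⟨-, hzj⟩, hzx⟩
      exact ⟨inter_eq_left.1 (eq_of_subset_of_card_le inter_subset_left (by omega)), hzj⟩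
    · rintro ⟨hzx, hzj⟩
      exact ⟨⟨hzx.trans hx, hzj⟩, by rw [inter_eq_left.2 hzx, hzj]⟩
  have hnone : (V.powersetCard j).filter (fun z => #(z ∩ x) = 0) = (V \ x).powersetCard j := by
    ext z
    simp only [mem_filter, mem_powersetCard, subset_sdiff, disjoint_iff_inter_eq_empty,
      card_eq_zero]
    tauto
  have h := hh.sum_filter_card_inter x le_rfl
  rw [hall, hnone, Nat.choose_self, Nat.cast_one, mul_one] at h
  rw [h, ← mul_assoc, ← pow_add, ← two_mul, pow_mul, neg_one_sq, one_pow, one_mul]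

lemma kneser_up_pow [CharZero 𝕜] (hh : IsHarmonic V j h) {k : ℕ} (hjk : j ≤ k) {x : Finset α}
    (hx : x ∈ V.powersetCard k) :
    kneser V k ((up ^ (k - j)) h) x = kneserEigenvalue #V k j * (up ^ (k - j)) h x := by
  obtain ⟨hxV, hxk⟩ := mem_powersetCard.1 hx
  have hsize : ∀ y ∈ (V \ x).powersetCard k, #y = j + (k - j) := fun y hy => by
    rw [(mem_powersetCard.1 hy).2]; omega
  rw [kneser, sum_congr rfl fun y hy => up_pow_apply h (hsize y hy), ← mul_sum,
    sum_powersetCard_sum_powersetCard _ _ hjk, hh.sum_powersetCard_sdiff hxV,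
    up_pow_apply h (show #x = j + (k - j) by omega), card_sdiff_of_subset hxV, hxk,
    kneserEigenvalue, nsmul_eq_mul]
  ring

end IsHarmonic

lemma card_powersetCard_sdiff {k : ℕ} {x : Finset α} (hx : x ∈ V.powersetCard k) :
    #((V \ x).powersetCard k) = (#V - k).choose k := by
  rw [card_powersetCard, card_sdiff_of_subset (mem_powersetCard.1 hx).1, (mem_powersetCard.1 hx).2]

lemma sum_sum_powersetCard_sdiff_comm {β : Type*} [AddCommMonoid β] (k : ℕ)
    (F : Finset α → Finset α → β) :
    ∑ x ∈ V.powersetCard k, ∑ y ∈ (V \ x).powersetCard k, F x y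
      = ∑ y ∈ V.powersetCard k, ∑ x ∈ (V \ y).powersetCard k, F x y :=
  sum_comm' fun x y => by
    simp only [mem_powersetCard, subset_sdiff]
    constructor
    · rintro ⟨⟨hxV, hxk⟩, ⟨hyV, hyx⟩, hyk⟩
      exact ⟨⟨⟨hxV, hyx.symm⟩, hxk⟩, hyV, hyk⟩
    · rintro ⟨⟨⟨hxV, hxy⟩, hxk⟩, hyV, hyk⟩
      exact ⟨⟨hxV, hxk⟩, ⟨hyV, hxy.symm⟩, hyk⟩

lemma sum_kneser (k : ℕ) (f : Finset α → 𝕜) :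
    ∑ x ∈ V.powersetCard k, kneser V k f x
      = (#V - k).choose k * ∑ x ∈ V.powersetCard k, f x := by
  simp only [kneser]
  rw [sum_sum_powersetCard_sdiff_comm, mul_sum]
  exact sum_congr rfl fun y hy => by rw [sum_const, card_powersetCard_sdiff hy, nsmul_eq_mul]

omit [DecidableEq α] in
lemma dot_sub_const_self_of_mul_self {m : ℕ} {f : Finset α → 𝕜} (hf : ∀ x, f x * f x = f x)
    (c : 𝕜) :
    dot V m (fun x => f x - c) (fun x => f x - c)
      = (1 - 2 * c) * ∑ x ∈ V.powersetCard m, f x + c ^ 2 * #(V.powersetCard m) := by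
  rw [dot, mul_sum, mul_comm (c ^ 2), ← nsmul_eq_mul, ← sum_const, ← sum_add_distrib]
  exact sum_congr rfl fun x _ => by linear_combination hf x

lemma dot_kneser_sub_const (k : ℕ) (f : Finset α → 𝕜) (c : 𝕜) :
    dot V k (fun x => f x - c) (kneser V k fun x => f x - c)
      = dot V k f (kneser V k f) - 2 * c * (#V - k).choose k * ∑ x ∈ V.powersetCard k, f x
        + c ^ 2 * (#V - k).choose k * #(V.powersetCard k) := by
  have hA : ∀ x ∈ V.powersetCard k,
      kneser V k (fun x => f x - c) x = kneser V k f x - (#V - k).choose k * c := by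
    intro x hx
    rw [kneser, sum_sub_distrib, sum_const, card_powersetCard_sdiff hx, nsmul_eq_mul]
    rfl
  rw [dot_congr_right _ hA]
  simp only [dot, sub_mul, mul_sub, sum_sub_distrib, ← sum_mul, ← mul_sum, sum_kneser, sum_const,
    nsmul_eq_mul]
  ring

omit [DecidableEq α] in
lemma dot_eq_sum_of_orthogonal {ι : Type*} {s : Finset ι} {m : ℕ} {u v : Finset α → 𝕜}
    {g : ι → Finset α → 𝕜} (c : ι → 𝕜)
    (horth : ∀ i ∈ s, ∀ j ∈ s, i ≠ j → dot V m (g i) (g j) = 0)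
    (hu : ∀ x ∈ V.powersetCard m, u x = ∑ i ∈ s, g i x)
    (hv : ∀ x ∈ V.powersetCard m, v x = ∑ i ∈ s, c i * g i x) :
    dot V m u v = ∑ i ∈ s, c i * dot V m (g i) (g i) := by
  calc dot V m u v = ∑ i ∈ s, ∑ j ∈ s, c j * dot V m (g i) (g j) := by
        simp only [dot, mul_sum]
        rw [sum_congr rfl fun x hx => by rw [hu x hx, hv x hx, sum_mul_sum], sum_comm]
        refine sum_congr rfl fun i _ => ?_
        rw [sum_comm]
        exact sum_congr rfl fun j _ => sum_congr rfl fun x _ => by ring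
    _ = ∑ i ∈ s, c i * dot V m (g i) (g i) := sum_congr rfl fun i hi => by
        rw [sum_eq_single_of_mem i hi fun j hj hji => by rw [horth i hi j hj hji.symm, mul_zero]]

lemma sum_sum_filter_mem {β : Type*} [AddCommMonoid β] (k : ℕ) (F : α → Finset α → β) :
    ∑ i ∈ V, ∑ x ∈ V.powersetCard k with i ∈ x, F i x = ∑ x ∈ V.powersetCard k, ∑ i ∈ x, F i x :=
  sum_comm' fun i x => by
    simp only [mem_filter, mem_powersetCard]
    constructor
    · rintro ⟨-, hx, hix⟩
      exact ⟨hix, hx⟩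
    · rintro ⟨hix, hx⟩
      exact ⟨hx.1 hix, hx, hix⟩

lemma dot_up_pow_pred_eq_zero {k : ℕ} (hk : 1 ≤ k) {u : Finset α → 𝕜}
    (hu : ∀ i ∈ V, ∑ x ∈ V.powersetCard k with i ∈ x, u x = 0) (h : Finset α → 𝕜) :
    dot V k u ((up ^ (k - 1)) h) = 0 := by
  have hup : ∀ x ∈ V.powersetCard k, (up ^ (k - 1)) h x = (k - 1)! * ∑ i ∈ x, h {i} := by
    intro x hx
    rw [up_pow_apply h (s := 1) (by rw [(mem_powersetCard.1 hx).2]; omega), powersetCard_one,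
      sum_map]
    rfl
  calc dot V k u ((up ^ (k - 1)) h)
      = (k - 1)! * ∑ x ∈ V.powersetCard k, ∑ i ∈ x, h {i} * u x := by
        rw [dot, mul_sum]
        refine sum_congr rfl fun x hx => ?_
        rw [hup x hx, mul_sum, mul_sum, mul_sum]
        exact sum_congr rfl fun i _ => by ring
    _ = (k - 1)! * ∑ i ∈ V, h {i} * ∑ x ∈ V.powersetCard k with i ∈ x, u x := by
        simp only [← sum_sum_filter_mem, mul_sum]
    _ = 0 := by rw [sum_eq_zero fun i hi => by rw [hu i hi, mul_zero], mul_zero]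

lemma sum_filter_mem_sub_mean [CharZero 𝕜] {k : ℕ} {f : Finset α → 𝕜}
    (hf : ∀ i ∈ V, ∀ j ∈ V,
      ∑ x ∈ V.powersetCard k with i ∈ x, f x = ∑ x ∈ V.powersetCard k with j ∈ x, f x)
    {i : α} (hi : i ∈ V) :
    ∑ x ∈ V.powersetCard k with i ∈ x,
      (f x - (∑ y ∈ V.powersetCard k, f y) / #(V.powersetCard k)) = 0 := by
  rcases Nat.eq_zero_or_pos k with rfl | hk
  · simp [filter_singleton]
  have hstar : #{x ∈ V.powersetCard k | i ∈ x} = (#V - 1).choose (k - 1) := by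
    simpa [singleton_subset_iff] using
      card_filter_powersetCard_subset {i} V k (singleton_subset_iff.2 hi) (by simpa)
  have hdouble : (#V : 𝕜) * ∑ x ∈ V.powersetCard k with i ∈ x, f x
      = k * ∑ x ∈ V.powersetCard k, f x := by
    have h := sum_sum_filter_mem (V := V) k (fun _ x => f x)
    rw [sum_congr rfl fun j hj => hf j hj i hi, sum_const, nsmul_eq_mul] at h
    rw [h, mul_sum]
    exact sum_congr rfl fun x hx => by rw [sum_const, (mem_powersetCard.1 hx).2, nsmul_eq_mul]
  have hchoose : (#V : 𝕜) * (#V - 1).choose (k - 1) = k * #(V.powersetCard k) := by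
    obtain ⟨n, hn⟩ : ∃ n, #V = n + 1 := ⟨#V - 1, by have := card_pos.2 ⟨i, hi⟩; omega⟩
    obtain ⟨l, rfl⟩ : ∃ l, k = l + 1 := ⟨k - 1, by omega⟩
    rw [card_powersetCard, hn, Nat.add_sub_cancel, Nat.add_sub_cancel]
    exact_mod_cast (Nat.add_one_mul_choose_eq n l).trans (mul_comm _ _)
  have hmean : (∑ y ∈ V.powersetCard k, f y) / #(V.powersetCard k) * #(V.powersetCard k)
      = ∑ y ∈ V.powersetCard k, f y := by
    rcases eq_or_ne #(V.powersetCard k) 0 with h0 | h0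
    · rw [card_eq_zero.1 h0]
      simp
    · exact div_mul_cancel₀ _ (Nat.cast_ne_zero.2 h0)
  refine mul_left_cancel₀ (Nat.cast_ne_zero.2 (card_ne_zero_of_mem hi) : (#V : 𝕜) ≠ 0) ?_
  rw [sum_sub_distrib, sum_const, hstar, nsmul_eq_mul, mul_zero]
  linear_combination hdouble - (∑ y ∈ V.powersetCard k, f y) / #(V.powersetCard k) * hchoose
    - k * hmean

section Ordered

variable [LinearOrder 𝕜] [IsStrictOrderedRing 𝕜]

omit [DecidableEq α] in
lemma dot_self_nonneg (m : ℕ) (a : Finset α → 𝕜) : 0 ≤ dot V m a a :=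
  sum_nonneg fun _ _ => mul_self_nonneg _

omit [DecidableEq α] in
lemma eq_zero_of_dot_self_eq_zero {m : ℕ} {a : Finset α → 𝕜} (h : dot V m a a = 0) :
    ∀ x ∈ V.powersetCard m, a x = 0 := fun x hx =>
  mul_self_eq_zero.1 ((sum_eq_zero_iff_of_nonneg fun _ _ => mul_self_nonneg _).1 h x hx)

lemma dot_up_down_self_nonneg (m : ℕ) (a : Finset α → 𝕜) : 0 ≤ dot V m (up (down V a)) a := by
  cases m with
  | zero => simp [dot, up_apply]
  | succ m => rw [dot_up]; exact dot_self_nonneg _ _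

lemma eq_zero_of_down_up_eq_zero {m : ℕ} (hm : 2 * m < #V) {a : Finset α → 𝕜}
    (ha : ∀ w ∈ V.powersetCard m, down V (up a) w = 0) : ∀ w ∈ V.powersetCard m, a w = 0 := by
  have key : dot V m (up (down V a)) a + (#V - 2 * m) * dot V m a a = 0 := by
    rw [dot, dot, mul_sum, ← sum_add_distrib]
    refine sum_eq_zero fun w hw => ?_
    obtain ⟨hwV, hwm⟩ := mem_powersetCard.1 hw
    have h := down_up_apply a hwV
    rw [ha w hw, hwm] at h
    linear_combination -(a w) * h
  have hpos : (0 : 𝕜) < #V - 2 * m := by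
    have : ((2 * m : ℕ) : 𝕜) < #V := by exact_mod_cast hm
    push_cast at this
    linarith
  refine eq_zero_of_dot_self_eq_zero (le_antisymm ?_ (dot_self_nonneg m a))
  nlinarith [dot_up_down_self_nonneg (V := V) m a, dot_self_nonneg (V := V) m a]

lemma exists_down_up_eq {m : ℕ} (hm : 2 * m < #V) (b : Finset α → 𝕜) :
    ∃ a : Finset α → 𝕜, ∀ w ∈ V.powersetCard m, down V (up a) w = b w := by
  let L : (V.powersetCard m → 𝕜) →ₗ[𝕜] (V.powersetCard m → 𝕜) :=
    LinearMap.funLeft 𝕜 𝕜 Subtype.val ∘ₗ down V ∘ₗ up ∘ₗ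
      Function.ExtendByZero.linearMap 𝕜 Subtype.val
  have hinj : Function.Injective L := by
    refine (injective_iff_map_eq_zero L).2 fun a ha => funext fun w => ?_
    have h := eq_zero_of_down_up_eq_zero hm (a := Function.extend Subtype.val a 0)
      (fun w hw => congrFun ha ⟨w, hw⟩) w w.2
    rwa [Subtype.val_injective.extend_apply] at h
  obtain ⟨a, ha⟩ := LinearMap.injective_iff_surjective.1 hinj fun w => b w
  exact ⟨Function.extend Subtype.val a 0, fun w hw => congrFun ha ⟨w, hw⟩⟩

theorem exists_harmonic_decomposition {m : ℕ} (hm : 2 * m ≤ #V) (u : Finset α → 𝕜) :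
    ∃ h : ℕ → Finset α → 𝕜, (∀ j, IsHarmonic V j (h j)) ∧
      ∀ x ∈ V.powersetCard m, u x = ∑ j ∈ range (m + 1), (up ^ (m - j)) (h j) x := by
  induction m generalizing u with
  | zero =>
    refine ⟨Pi.single 0 u, fun j w _ hw => ?_, fun x _ => by simp⟩
    rw [Pi.single_eq_of_ne (by omega : j ≠ 0), map_zero]
    rfl
  | succ m ih =>
    obtain ⟨a, ha⟩ := exists_down_up_eq (by omega : 2 * m < #V) (down V u)
    obtain ⟨h, hh, hdec⟩ := ih (by omega) a
    refine ⟨Function.update h (m + 1) (u - up a), fun j => ?_, fun x hx => ?_⟩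
    · rcases eq_or_ne j (m + 1) with rfl | hj
      · intro w hwV hw
        rw [Function.update_self, map_sub, Pi.sub_apply,
          ha w (mem_powersetCard.2 ⟨hwV, by omega⟩), sub_self]
      · rw [Function.update_of_ne hj]
        exact hh j
    · have hup : up a x = ∑ j ∈ range (m + 1),
          (up ^ (m + 1 - j)) (Function.update h (m + 1) (u - up a) j) x := by
        rw [up_apply_congr hdec hx, up_apply, sum_comm]
        refine sum_congr rfl fun j hj => ?_
        rw [Function.update_of_ne (by simp at hj; omega), show m + 1 - j = m - j + 1 by
          simp at hj; omega, pow_succ', Module.End.mul_apply, up_apply]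
      rw [sum_range_succ, ← hup, Function.update_self, Nat.sub_self, pow_zero,
        Module.End.one_apply, Pi.sub_apply]
      ring

theorem kneserEigenvalue_mul_dot_le {k : ℕ} (hk : 2 * k ≤ #V) {c : 𝕜}
    (hc : ∀ j ≤ k, j ≠ 1 → c ≤ kneserEigenvalue #V k j) {u : Finset α → 𝕜}
    (hu : ∀ i ∈ V, ∑ x ∈ V.powersetCard k with i ∈ x, u x = 0) :
    c * dot V k u u ≤ dot V k u (kneser V k u) := by
  obtain ⟨h, hh, hdec⟩ := exists_harmonic_decomposition hk u
  set g : ℕ → Finset α → 𝕜 := fun j => (up ^ (k - j)) (h j)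
  have horth : ∀ i ∈ range (k + 1), ∀ j ∈ range (k + 1), i ≠ j → dot V k (g i) (g j) = 0 := by
    intro i hi j hj hij
    rw [mem_range] at hi hj
    rcases hij.lt_or_gt with hlt | hlt
    · exact (hh j).dot_up_pow_eq_zero hlt (by omega) _
    · rw [dot_comm]
      exact (hh i).dot_up_pow_eq_zero hlt (by omega) _
  have hkneser : ∀ x ∈ V.powersetCard k,
      kneser V k u x = ∑ j ∈ range (k + 1), kneserEigenvalue #V k j * g j x := by
    intro x hx
    rw [kneser, sum_congr rfl fun y hy => hdec y (powersetCard_mono sdiff_subset hy), sum_comm]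
    exact sum_congr rfl fun j hj => (hh j).kneser_up_pow (by rw [mem_range] at hj; omega) hx
  have hAu := dot_eq_sum_of_orthogonal _ horth hdec hkneser
  have huu := dot_eq_sum_of_orthogonal (v := u) (fun _ => 1) horth hdec fun x hx => by
    simp [hdec x hx, g]
  have hg1 : 1 ≤ k → dot V k (g 1) (g 1) = 0 := fun hk1 => by
    have hk0 : k ≠ 0 := by omega
    have h1 := dot_eq_sum_of_orthogonal (v := g 1) (fun j => if j = 1 then 1 else 0) horth hdec
      fun x _ => by simp [ite_mul, hk0]
    rw [dot_up_pow_pred_eq_zero hk1 hu, sum_eq_single_of_mem 1 (mem_range.2 (by omega))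
      fun j _ hj => by rw [if_neg hj, zero_mul], if_pos rfl, one_mul] at h1
    exact h1.symm
  rw [hAu, huu, mul_sum]
  refine sum_le_sum fun j hj => ?_
  rw [mem_range] at hj
  rcases eq_or_ne j 1 with rfl | hj1
  · rw [hg1 (by omega)]
    simp
  · simpa using mul_le_mul_of_nonneg_right (hc j (by omega) hj1) (dot_self_nonneg k (g j))

/-- The constant `8` comes from `j = 3`: `C(2k-3, k-3) ≤ C(2k, k) / 2^3`. -/
lemma neg_choose_div_eight_le_kneserEigenvalue {k j : ℕ} (hjk : j ≤ k) (hj : j ≠ 1) :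
    -((2 * k).choose k / 8 : 𝕜) ≤ kneserEigenvalue (3 * k) k j := by
  rw [kneserEigenvalue, show 3 * k - k - j = 2 * k - j by omega]
  rcases Nat.even_or_odd j with he | ho
  · rw [he.neg_one_pow, one_mul]
    have : (0 : 𝕜) ≤ (2 * k).choose k / 8 := by positivity
    linarith [(Nat.cast_nonneg ((2 * k - j).choose (k - j)) : (0 : 𝕜) ≤ _)]
  · have hj3 : 3 ≤ j := by obtain ⟨m, rfl⟩ := ho; omega
    have h8 : 8 * (2 * k - j).choose (k - j) ≤ (2 * k).choose k :=
      le_trans (Nat.mul_le_mul_right _ (by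
        calc 8 = 2 ^ 3 := by norm_num
          _ ≤ 2 ^ j := Nat.pow_le_pow_right (by norm_num) hj3)) (Nat.two_pow_mul_choose_le hjk)
    have h8' : (8 : 𝕜) * (2 * k - j).choose (k - j) ≤ (2 * k).choose k := by exact_mod_cast h8
    rw [ho.neg_one_pow]
    linarith

end Ordered

end Slice

open Slice

omit [DecidableEq α] in
lemma kslice_eq_powersetCard (V : Finset α) (k : ℕ) : kslice V k = V.powersetCard k :=
  powersetCard_eq_filter.symm

section Triples

variable {V : Finset α} {k : ℕ}

lemma mem_triples_iff (hV : #V = 3 * k) {q : Finset α × Finset α × Finset α} :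
    q ∈ triples V k k k ↔
      q.1 ∈ V.powersetCard k ∧ q.2.1 ∈ (V \ q.1).powersetCard k ∧ q.2.2 = V \ (q.1 ∪ q.2.1) := by
  obtain ⟨a, b, c⟩ := q
  simp only [triples, mem_filter, mem_product, mem_powerset, mem_powersetCard, subset_sdiff]
  constructor
  · rintro ⟨⟨ha, hb, -⟩, ka, kb, -, dab, dac, dbc, hU⟩
    refine ⟨⟨ha, ka⟩, ⟨⟨hb, dab.symm⟩, kb⟩, ?_⟩
    rw [← hU]
    ext i
    have := disjoint_left.1 dac
    have := disjoint_left.1 dbc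
    simp only [mem_sdiff, mem_union]
    tauto
  · rintro ⟨⟨ha, ka⟩, ⟨⟨hb, dba⟩, kb⟩, rfl⟩
    have hab : a ∪ b ⊆ V := union_subset ha hb
    refine ⟨⟨ha, hb, sdiff_subset⟩, ka, kb, ?_, dba.symm,
      disjoint_sdiff.mono_left subset_union_left, disjoint_sdiff.mono_left subset_union_right,
      union_sdiff_of_subset hab⟩
    rw [card_sdiff_of_subset hab, card_union_of_disjoint dba.symm, hV, ka, kb]
    omega

lemma sum_triples {β : Type*} [AddCommMonoid β] (hV : #V = 3 * k)
    (ψ : Finset α × Finset α × Finset α → β) :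
    ∑ q ∈ triples V k k k, ψ q
      = ∑ x ∈ V.powersetCard k, ∑ y ∈ (V \ x).powersetCard k, ψ (x, y, V \ (x ∪ y)) := by
  have hthird : ∀ q ∈ triples V k k k, (q.1, q.2.1, V \ (q.1 ∪ q.2.1)) = q := fun q hq =>
    Prod.ext rfl (Prod.ext rfl ((mem_triples_iff hV).1 hq).2.2.symm)
  rw [sum_sigma']
  refine sum_nbij' (fun q => ⟨q.1, q.2.1⟩) (fun p => (p.1, p.2, V \ (p.1 ∪ p.2))) ?_ ?_ hthird
    (fun _ _ => rfl) fun q hq => by rw [hthird q hq]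
  · intro q hq
    obtain ⟨h1, h2, -⟩ := (mem_triples_iff hV).1 hq
    exact mem_sigma.2 ⟨h1, h2⟩
  · intro p hp
    obtain ⟨h1, h2⟩ := mem_sigma.1 hp
    exact (mem_triples_iff hV).2 ⟨h1, h2, rfl⟩

lemma sum_triples_rotate {β : Type*} [AddCommMonoid β] (ψ : Finset α × Finset α × Finset α → β) :
    ∑ q ∈ triples V k k k, ψ (q.2.1, q.2.2, q.1) = ∑ q ∈ triples V k k k, ψ q := by
  refine sum_nbij' (fun q => (q.2.1, q.2.2, q.1)) (fun q => (q.2.2, q.1, q.2.1)) ?_ ?_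
    (fun _ _ => rfl) (fun _ _ => rfl) (fun _ _ => rfl)
  · rintro ⟨a, b, c⟩ hq
    simp only [triples, mem_filter, mem_product] at hq ⊢
    obtain ⟨⟨ha, hb, hc⟩, ka, kb, kc, dab, dac, dbc, hU⟩ := hq
    exact ⟨⟨hb, hc, ha⟩, kb, kc, ka, dbc, dab.symm, dac.symm, by
      rw [← hU]; ac_rfl⟩
  · rintro ⟨a, b, c⟩ hq
    simp only [triples, mem_filter, mem_product] at hq ⊢
    obtain ⟨⟨ha, hb, hc⟩, ka, kb, kc, dab, dac, dbc, hU⟩ := hq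
    exact ⟨⟨hc, ha, hb⟩, kc, ka, kb, dac.symm, dbc.symm, dab, by
      rw [← hU]; ac_rfl⟩

lemma card_filter_triples_eq (hV : #V = 3 * k) (g : Finset α → Bool) :
    (#{q ∈ triples V k k k | g q.1 = g q.2.1 ∧ g q.2.1 = g q.2.2} : ℚ)
      = #(triples V k k k)
        - 3 * ((2 * k).choose k * ∑ x ∈ V.powersetCard k, (if g x then 1 else 0)
          - dot V k (fun x => if g x then 1 else 0)
              (kneser V k fun x => if g x then 1 else 0)) := by
  set f : Finset α → ℚ := fun x => if g x then 1 else 0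
  set d : Finset α → Finset α → ℚ := fun x y => f x + f y - 2 * (f x * f y)
  have hbool : ∀ q : Finset α × Finset α × Finset α,
      (if g q.1 = g q.2.1 ∧ g q.2.1 = g q.2.2 then (1 : ℚ) else 0)
        = 1 - (d q.1 q.2.1 + d q.2.1 q.2.2 + d q.2.2 q.1) / 2 := by
    intro q
    simp only [d, f]
    cases g q.1 <;> cases g q.2.1 <;> cases g q.2.2 <;> norm_num
  have hrot₁ : ∑ q ∈ triples V k k k, d q.2.1 q.2.2 = ∑ q ∈ triples V k k k, d q.1 q.2.1 :=
    sum_triples_rotate fun q => d q.1 q.2.1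
  have hrot₂ : ∑ q ∈ triples V k k k, d q.2.2 q.1 = ∑ q ∈ triples V k k k, d q.1 q.2.1 :=
    (sum_triples_rotate fun q => d q.2.1 q.2.2).trans hrot₁
  have hC : (#V - k).choose k = (2 * k).choose k := by rw [hV, show 3 * k - k = 2 * k by omega]
  have hpairs : ∑ q ∈ triples V k k k, d q.1 q.2.1
      = 2 * ((2 * k).choose k * ∑ x ∈ V.powersetCard k, f x - dot V k f (kneser V k f)) := by
    rw [sum_triples hV]
    have hfst : ∑ x ∈ V.powersetCard k, ∑ y ∈ (V \ x).powersetCard k, f x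
        = (2 * k).choose k * ∑ x ∈ V.powersetCard k, f x := by
      rw [mul_sum]
      exact sum_congr rfl fun x hx => by
        rw [sum_const, card_powersetCard_sdiff hx, hC, nsmul_eq_mul]
    have hsnd : ∑ x ∈ V.powersetCard k, ∑ y ∈ (V \ x).powersetCard k, f y
        = (2 * k).choose k * ∑ x ∈ V.powersetCard k, f x := by
      rw [← hC, ← sum_kneser]
      rfl
    have hdot : dot V k f (kneser V k f)
        = ∑ x ∈ V.powersetCard k, f x * ∑ y ∈ (V \ x).powersetCard k, f y := rfl
    simp only [d, sum_sub_distrib, sum_add_distrib, ← mul_sum, hfst, hsnd, hdot]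
    ring
  rw [natCast_card_filter, sum_congr rfl fun q _ => hbool q, sum_sub_distrib, ← sum_div,
    sum_add_distrib, sum_add_distrib, hrot₁, hrot₂, hpairs, sum_const, nsmul_one]
  ring

lemma Egalitarian.sum_filter_mem_sub_mean_eq_zero {g : Finset α → Bool}
    (hg : Egalitarian V k g) {i : α} (hi : i ∈ V) :
    ∑ x ∈ V.powersetCard k with i ∈ x, ((if g x then 1 else 0)
      - (∑ y ∈ V.powersetCard k, if g y then 1 else 0) / (#(V.powersetCard k) : ℚ)) = 0 := by
  refine sum_filter_mem_sub_mean (fun i hi j hj => ?_) hi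
  simp only [← natCast_card_filter, filter_filter, ← kslice_eq_powersetCard]
  exact congrArg _ (hg i hi j hj)

lemma card_triples (hV : #V = 3 * k) :
    #(triples V k k k) = (3 * k).choose k * (2 * k).choose k := by
  rw [card_eq_sum_ones, sum_triples hV, ← hV, ← card_powersetCard, ← smul_eq_mul, ← sum_const]
  refine sum_congr rfl fun x hx => ?_
  rw [← card_eq_sum_ones, card_powersetCard_sdiff hx, hV, show 3 * k - k = 2 * k by omega]

theorem le_card_filter_triples (hV : #V = 3 * k) {g : Finset α → Bool}
    (hg : Egalitarian V k g) {p : ℚ} (hp : p = #{x ∈ kslice V k | g x} / #(kslice V k)) :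
    (8 - 27 * p + 27 * p ^ 2) / 8 * #(triples V k k k)
      ≤ #{q ∈ triples V k k k | g q.1 = g q.2.1 ∧ g q.2.1 = g q.2.2} := by
  have hcount := card_filter_triples_eq hV g
  rw [card_triples hV, Nat.cast_mul] at hcount ⊢
  have hshift := dot_kneser_sub_const (V := V) k (fun x => if g x then 1 else 0) p
  rw [hV, show 3 * k - k = 2 * k by omega] at hshift
  set f : Finset α → ℚ := fun x => if g x then 1 else 0
  set N : ℚ := ((V.powersetCard k).card : ℚ)
  set C : ℚ := ((2 * k).choose k : ℚ)
  have hN' : N = ((3 * k).choose k : ℚ) := by simp only [N, card_powersetCard, hV]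
  have hN : 0 < N := by
    rw [hN']
    exact_mod_cast Nat.choose_pos (by omega)
  have hp' : p = (∑ x ∈ V.powersetCard k, f x) / N := by
    rw [hp, natCast_card_filter, kslice_eq_powersetCard]
  have hF : ∑ x ∈ V.powersetCard k, f x = p * N := by
    rw [hp', div_mul_cancel₀ _ hN.ne']
  have hu : ∀ i ∈ V, ∑ x ∈ V.powersetCard k with i ∈ x, (f x - p) = 0 := fun i hi => by
    rw [hp']
    exact hg.sum_filter_mem_sub_mean_eq_zero hi
  have hspec := kneserEigenvalue_mul_dot_le (c := -(C / 8)) (by omega)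
    (fun j hj hj1 => hV ▸ neg_choose_div_eight_le_kneserEigenvalue hj hj1) hu
  have hvar := dot_sub_const_self_of_mul_self (V := V) (m := k) (f := f)
    (fun x => by simp only [f]; split_ifs <;> norm_num) p
  rw [← hN'] at hcount ⊢
  rw [hF] at hcount hshift hvar
  rw [hvar] at hspec
  linarith

end Triples

/-- for an egalitarian Boolean function `g` on the `k`-slice of a
`3k`-set, with `p = P_{x∼U(S)}(g(x)=1)` and `(x₁,x₂,x₃)` uniform over ordered
partitions of `V` into three `k`-sets,
`P(g(x₁)=g(x₂)=g(x₃)) ≥ (8 − 27p + 27p²)/8 ≥ 5/32`. -/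
theorem stmt10 (k : ℕ) (V : Finset α) (hV : V.card = 3 * k)
    (g : Finset α → Bool) (hg : Egalitarian V k g) :
    let S := kslice V k
    let T := triples V k k k
    let p : ℚ := ((S.filter (fun x => g x = true)).card : ℚ) / S.card
    let PA : ℚ :=
      ((T.filter (fun q => g q.1 = g q.2.1 ∧ g q.2.1 = g q.2.2)).card : ℚ) / T.card
    PA ≥ (8 - 27 * p + 27 * p ^ 2) / 8 ∧ PA ≥ 5 / 32 := by
  intro S T p PA
  have hT : (0 : ℚ) < #T := by
    rw [card_triples hV]
    exact_mod_cast Nat.mul_pos (Nat.choose_pos (by omega)) (Nat.choose_pos (by omega))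
  have hbound : (8 - 27 * p + 27 * p ^ 2) / 8 ≤ PA :=
    (le_div_iff₀ hT).2 (le_card_filter_triples hV hg rfl)
  exact ⟨hbound, le_trans (by nlinarith [sq_nonneg (2 * p - 1)]) hbound⟩
end

section
/- Let n = 3k+1 or 3k+2, k ≥ 1, and let k₁ = k+1 if n = 3k+1, k₁ = k if n = 3k+2, with k₂ = (n − k₁)/2 = the other of k, k+1. For d ≤ k, the quadratic 2λ² − α_d^{(k₂,k₂)} λ − α_d^{(k₁,k₂)} α_d^{(k₂,k₁)} = 0 has both roots greater than −1/8 − 1/(6k) whenever k, d ≥ 2, where α_d^{(a,b)} = (−1)^d C(n−a−d, b−d)/C(n−a, b). Moreover if n = 3k+2 both roots exceed −1/8. -/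
private lemma chooseStep (m j : ℕ) :
    (m+1).choose (j+1) * (j+1) = m.choose j * (m+1) := by
  have h := Nat.add_one_mul_choose_eq m j
  simpa [Nat.succ_eq_add_one, mul_comm] using h.symm

private lemma chooseStepR (m j : ℕ) :
    (((m+1).choose (j+1) : ℕ) : ℝ) * ((j:ℝ)+1) = ((m.choose j : ℕ) : ℝ) * ((m:ℝ)+1) := by
  exact_mod_cast congrArg (fun x : ℕ => (x : ℝ)) (chooseStep m j)

private lemma twoStepR (N j : ℕ) :
    (((N+2).choose (j+2) : ℕ) : ℝ) * (((j:ℝ)+2)*((j:ℝ)+1))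
      = ((N.choose j : ℕ) : ℝ) * (((N:ℝ)+2)*((N:ℝ)+1)) := by
  have a := chooseStepR (N+1) (j+1)
  have b := chooseStepR N j
  push_cast at a b ⊢
  linear_combination ((j:ℝ)+1) * a + ((N:ℝ)+2) * b

private lemma threeStepR (N j : ℕ) :
    (((N+3).choose (j+3) : ℕ) : ℝ) * (((j:ℝ)+3)*((j:ℝ)+2)*((j:ℝ)+1))
      = ((N.choose j : ℕ) : ℝ) * (((N:ℝ)+3)*((N:ℝ)+2)*((N:ℝ)+1)) := by
  have a := chooseStepR (N+2) (j+2)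
  have b := chooseStepR (N+1) (j+1)
  have c := chooseStepR N j
  push_cast at a b c ⊢
  linear_combination (((j:ℝ)+2)*((j:ℝ)+1)) * a + (((N:ℝ)+3)*((j:ℝ)+1)) * b
    + (((N:ℝ)+3)*((N:ℝ)+2)) * c

private lemma chooseDouble (a b : ℕ) (h : 2*b + 1 ≤ a) :
    2 * a.choose b ≤ (a+1).choose (b+1) := by
  have hs := chooseStep a b
  have h1 : a.choose b * (2*(b+1)) ≤ a.choose b * (a+1) :=
    Nat.mul_le_mul_left _ (by omega)
  have h2 : 2 * a.choose b * (b+1) ≤ (a+1).choose (b+1) * (b+1) := by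
    calc 2 * a.choose b * (b+1) = a.choose b * (2*(b+1)) := by ring
    _ ≤ a.choose b * (a+1) := h1
    _ = (a+1).choose (b+1) * (b+1) := hs.symm
  exact Nat.le_of_mul_le_mul_right h2 (by omega)

private lemma chooseRatioPow (d a b : ℕ) (h : 2*b + d ≤ a) :
    a.choose b * 2^d ≤ (a+d).choose (b+d) := by
  induction d with
  | zero => simp
  | succ e ih =>
    have h1 : a.choose b * 2^e ≤ (a+e).choose (b+e) := ih (by omega)
    have h2 : 2 * (a+e).choose (b+e) ≤ (a+e+1).choose (b+e+1) :=
      chooseDouble _ _ (by omega)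
    calc a.choose b * 2^(e+1) = (a.choose b * 2^e) * 2 := by ring
    _ ≤ (a+e).choose (b+e) * 2 := Nat.mul_le_mul_right _ h1
    _ ≤ (a+e+1).choose (b+e+1) := by omega
    _ = (a+(e+1)).choose (b+(e+1)) := by ring_nf

private lemma fiveChoose (k : ℕ) (hk : 2 ≤ k) :
    5 * (2*k).choose k ≤ 3 * (2*k+1).choose (k+1) := by
  have hs := chooseStep (2*k) k
  have h2 : 5 * (2*k).choose k * (k+1) ≤ 3 * (2*k+1).choose (k+1) * (k+1) := by
    calc 5 * (2*k).choose k * (k+1) = (2*k).choose k * (5*(k+1)) := by ring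
    _ ≤ (2*k).choose k * (3*(2*k+1)) := Nat.mul_le_mul_left _ (by omega)
    _ = 3 * ((2*k+1).choose (k+1) * (k+1)) := by rw [hs]; ring
    _ = 3 * (2*k+1).choose (k+1) * (k+1) := by ring
  exact Nat.le_of_mul_le_mul_right h2 (by omega)

private lemma rootB (a b c u v lam : ℝ) (hc : 0 < c) (hv : 0 < v)
    (h : c * (2 * lam ^ 2) - a * lam - b = 0)
    (h1 : 4 * u * c < a * v)
    (h2 : 0 < 2 * c * u ^ 2 - a * u * v - b * v ^ 2) : u / v < lam := by
  rw [div_lt_iff₀ hv]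
  by_contra hle
  push_neg at hle
  have f2 : 0 < a*v - 2*c*u - 2*c*(lam*v) := by nlinarith
  have key : 0 ≤ (u - lam*v) * (a*v - 2*c*u - 2*c*(lam*v)) :=
    mul_nonneg (by linarith) f2.le
  have hv2 : v^2 * (c * (2 * lam ^ 2) - a * lam - b) = 0 := by rw [h]; ring
  nlinarith [key, hv2]

local notation "C[" a ", " b "]" => ((Nat.choose a b : ℕ) : ℝ)
set_option maxHeartbeats 1000000

private lemma case1_d2 (m : ℕ) (lam : ℝ)
    (hroot : 2*lam^2 - ((1:ℝ) * (C[2*m+3, m] / C[2*m+5, m+2])) * lam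
      - C[2*m+2, m] / C[2*m+4, m+2] * (C[2*m+3, m+1] / C[2*m+5, m+3]) = 0) :
    -(1/8) - 1/(6*((m:ℝ)+2)) < lam := by
  have p0 : (0:ℝ) < C[2*m+5, m+2] := by exact_mod_cast Nat.choose_pos (by omega)
  have p1 : (0:ℝ) < C[2*m+4, m+2] := by exact_mod_cast Nat.choose_pos (by omega)
  have p2 : (0:ℝ) < C[2*m+5, m+3] := by exact_mod_cast Nat.choose_pos (by omega)
  have idA := twoStepR (2*m+3) m
  have idB1 := twoStepR (2*m+2) m
  have idB2 := twoStepR (2*m+3) (m+1)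
  rw [show 2*m+3+2 = 2*m+5 from by omega] at idA idB2
  rw [show 2*m+2+2 = 2*m+4 from by omega] at idB1
  rw [show m+1+2 = m+3 from by omega] at idB2
  push_cast at idA idB1 idB2
  have hA' : C[2*m+3, m] / C[2*m+5, m+2] * ((2*(m:ℝ)+5)*(2*(m:ℝ)+4)) = ((m:ℝ)+2)*((m:ℝ)+1) := by
    rw [div_mul_eq_mul_div, div_eq_iff p0.ne']; push_cast; linear_combination (-1 : ℝ) * idA
  have hB1' : C[2*m+2, m] / C[2*m+4, m+2] * ((2*(m:ℝ)+4)*(2*(m:ℝ)+3)) = ((m:ℝ)+2)*((m:ℝ)+1) := by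
    rw [div_mul_eq_mul_div, div_eq_iff p1.ne']; push_cast; linear_combination (-1 : ℝ) * idB1
  have hB2' : C[2*m+3, m+1] / C[2*m+5, m+3] * ((2*(m:ℝ)+5)*(2*(m:ℝ)+4)) = ((m:ℝ)+3)*((m:ℝ)+2) := by
    rw [div_mul_eq_mul_div, div_eq_iff p2.ne']; push_cast; linear_combination (-1 : ℝ) * idB2
  have hB' : C[2*m+2, m] / C[2*m+4, m+2] * (C[2*m+3, m+1] / C[2*m+5, m+3]) * (((2*(m:ℝ)+4)*(2*(m:ℝ)+3)) * ((2*(m:ℝ)+5)*(2*(m:ℝ)+4)))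
      = ((((m:ℝ)+2)*((m:ℝ)+1)) * (((m:ℝ)+3)*((m:ℝ)+2))) := by
    calc C[2*m+2, m] / C[2*m+4, m+2] * (C[2*m+3, m+1] / C[2*m+5, m+3]) * (((2*(m:ℝ)+4)*(2*(m:ℝ)+3)) * ((2*(m:ℝ)+5)*(2*(m:ℝ)+4)))
        = (C[2*m+2, m] / C[2*m+4, m+2] * ((2*(m:ℝ)+4)*(2*(m:ℝ)+3))) * (C[2*m+3, m+1] / C[2*m+5, m+3] * ((2*(m:ℝ)+5)*(2*(m:ℝ)+4))) := by ring
      _ = ((((m:ℝ)+2)*((m:ℝ)+1)) * (((m:ℝ)+3)*((m:ℝ)+2))) := by rw [hB1', hB2']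
  have hq : (((2*(m:ℝ)+5)*(2*(m:ℝ)+4)) * (((2*(m:ℝ)+4)*(2*(m:ℝ)+3)) * ((2*(m:ℝ)+5)*(2*(m:ℝ)+4)))) * (2*lam^2) - ((1:ℝ) * (((m:ℝ)+2)*((m:ℝ)+1)) * (((2*(m:ℝ)+4)*(2*(m:ℝ)+3)) * ((2*(m:ℝ)+5)*(2*(m:ℝ)+4)))) * lam - (((((m:ℝ)+2)*((m:ℝ)+1)) * (((m:ℝ)+3)*((m:ℝ)+2))) * ((2*(m:ℝ)+5)*(2*(m:ℝ)+4))) = 0 := by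
    linear_combination (((2*(m:ℝ)+5)*(2*(m:ℝ)+4)) * (((2*(m:ℝ)+4)*(2*(m:ℝ)+3)) * ((2*(m:ℝ)+5)*(2*(m:ℝ)+4)))) * hroot + ((1:ℝ) * (((2*(m:ℝ)+4)*(2*(m:ℝ)+3)) * ((2*(m:ℝ)+5)*(2*(m:ℝ)+4))) * lam) * hA' + ((2*(m:ℝ)+5)*(2*(m:ℝ)+4)) * hB'
  have hone : (0:ℝ) < 215040 + 720896*(m:ℝ) + 1030912*(m:ℝ)^2 + 815744*(m:ℝ)^3 + 385984*(m:ℝ)^4 + 109280*(m:ℝ)^5 + 17152*(m:ℝ)^6 + 1152*(m:ℝ)^7 := by positivity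
  have htwo : (0:ℝ) < 637440 + 2089216*(m:ℝ) + 2921216*(m:ℝ)^2 + 2259328*(m:ℝ)^3 + 1044128*(m:ℝ)^4 + 288400*(m:ℝ)^5 + 44096*(m:ℝ)^6 + 2880*(m:ℝ)^7 := by positivity
  have key := rootB ((1:ℝ) * (((m:ℝ)+2)*((m:ℝ)+1)) * (((2*(m:ℝ)+4)*(2*(m:ℝ)+3)) * ((2*(m:ℝ)+5)*(2*(m:ℝ)+4)))) (((((m:ℝ)+2)*((m:ℝ)+1)) * (((m:ℝ)+3)*((m:ℝ)+2))) * ((2*(m:ℝ)+5)*(2*(m:ℝ)+4))) (((2*(m:ℝ)+5)*(2*(m:ℝ)+4)) * (((2*(m:ℝ)+4)*(2*(m:ℝ)+3)) * ((2*(m:ℝ)+5)*(2*(m:ℝ)+4)))) (-(3*(m:ℝ)+10)) (24*(m:ℝ)+48) lam (by positivity) (by positivity) hq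
    (by nlinarith [hone]) (by nlinarith [htwo])
  have hc : (24*(m:ℝ)+48) ≠ 0 := by positivity
  have hinv : (1:ℝ)/(6*((m:ℝ)+2)) * (6*((m:ℝ)+2)) = 1 := by
    rw [one_div_mul_cancel]; positivity
  have e : (-(3*(m:ℝ)+10))/(24*(m:ℝ)+48) = -(1/8) - 1/(6*((m:ℝ)+2)) := by
    rw [div_eq_iff hc]
    linear_combination (4 : ℝ) * hinv
  rw [e] at key
  exact key

private lemma case1_d3 (m : ℕ) (lam : ℝ)
    (hroot : 2*lam^2 - ((-1:ℝ) * (C[2*m+4, m] / C[2*m+7, m+3])) * lam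
      - C[2*m+3, m] / C[2*m+6, m+3] * (C[2*m+4, m+1] / C[2*m+7, m+4]) = 0) :
    -(1/8) - 1/(6*((m:ℝ)+3)) < lam := by
  have p0 : (0:ℝ) < C[2*m+7, m+3] := by exact_mod_cast Nat.choose_pos (by omega)
  have p1 : (0:ℝ) < C[2*m+6, m+3] := by exact_mod_cast Nat.choose_pos (by omega)
  have p2 : (0:ℝ) < C[2*m+7, m+4] := by exact_mod_cast Nat.choose_pos (by omega)
  have idA := threeStepR (2*m+4) m
  have idB1 := threeStepR (2*m+3) m
  have idB2 := threeStepR (2*m+4) (m+1)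
  rw [show 2*m+4+3 = 2*m+7 from by omega] at idA idB2
  rw [show 2*m+3+3 = 2*m+6 from by omega] at idB1
  rw [show m+1+3 = m+4 from by omega] at idB2
  push_cast at idA idB1 idB2
  have hA' : C[2*m+4, m] / C[2*m+7, m+3] * ((2*(m:ℝ)+7)*(2*(m:ℝ)+6)*(2*(m:ℝ)+5)) = ((m:ℝ)+3)*((m:ℝ)+2)*((m:ℝ)+1) := by
    rw [div_mul_eq_mul_div, div_eq_iff p0.ne']; push_cast; linear_combination (-1 : ℝ) * idA
  have hB1' : C[2*m+3, m] / C[2*m+6, m+3] * ((2*(m:ℝ)+6)*(2*(m:ℝ)+5)*(2*(m:ℝ)+4)) = ((m:ℝ)+3)*((m:ℝ)+2)*((m:ℝ)+1) := by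
    rw [div_mul_eq_mul_div, div_eq_iff p1.ne']; push_cast; linear_combination (-1 : ℝ) * idB1
  have hB2' : C[2*m+4, m+1] / C[2*m+7, m+4] * ((2*(m:ℝ)+7)*(2*(m:ℝ)+6)*(2*(m:ℝ)+5)) = ((m:ℝ)+4)*((m:ℝ)+3)*((m:ℝ)+2) := by
    rw [div_mul_eq_mul_div, div_eq_iff p2.ne']; push_cast; linear_combination (-1 : ℝ) * idB2
  have hB' : C[2*m+3, m] / C[2*m+6, m+3] * (C[2*m+4, m+1] / C[2*m+7, m+4]) * (((2*(m:ℝ)+6)*(2*(m:ℝ)+5)*(2*(m:ℝ)+4)) * ((2*(m:ℝ)+7)*(2*(m:ℝ)+6)*(2*(m:ℝ)+5)))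
      = ((((m:ℝ)+3)*((m:ℝ)+2)*((m:ℝ)+1)) * (((m:ℝ)+4)*((m:ℝ)+3)*((m:ℝ)+2))) := by
    calc C[2*m+3, m] / C[2*m+6, m+3] * (C[2*m+4, m+1] / C[2*m+7, m+4]) * (((2*(m:ℝ)+6)*(2*(m:ℝ)+5)*(2*(m:ℝ)+4)) * ((2*(m:ℝ)+7)*(2*(m:ℝ)+6)*(2*(m:ℝ)+5)))
        = (C[2*m+3, m] / C[2*m+6, m+3] * ((2*(m:ℝ)+6)*(2*(m:ℝ)+5)*(2*(m:ℝ)+4))) * (C[2*m+4, m+1] / C[2*m+7, m+4] * ((2*(m:ℝ)+7)*(2*(m:ℝ)+6)*(2*(m:ℝ)+5))) := by ring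
      _ = ((((m:ℝ)+3)*((m:ℝ)+2)*((m:ℝ)+1)) * (((m:ℝ)+4)*((m:ℝ)+3)*((m:ℝ)+2))) := by rw [hB1', hB2']
  have hq : (((2*(m:ℝ)+7)*(2*(m:ℝ)+6)*(2*(m:ℝ)+5)) * (((2*(m:ℝ)+6)*(2*(m:ℝ)+5)*(2*(m:ℝ)+4)) * ((2*(m:ℝ)+7)*(2*(m:ℝ)+6)*(2*(m:ℝ)+5)))) * (2*lam^2) - ((-1:ℝ) * (((m:ℝ)+3)*((m:ℝ)+2)*((m:ℝ)+1)) * (((2*(m:ℝ)+6)*(2*(m:ℝ)+5)*(2*(m:ℝ)+4)) * ((2*(m:ℝ)+7)*(2*(m:ℝ)+6)*(2*(m:ℝ)+5)))) * lam - (((((m:ℝ)+3)*((m:ℝ)+2)*((m:ℝ)+1)) * (((m:ℝ)+4)*((m:ℝ)+3)*((m:ℝ)+2))) * ((2*(m:ℝ)+7)*(2*(m:ℝ)+6)*(2*(m:ℝ)+5))) = 0 := by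
    linear_combination (((2*(m:ℝ)+7)*(2*(m:ℝ)+6)*(2*(m:ℝ)+5)) * (((2*(m:ℝ)+6)*(2*(m:ℝ)+5)*(2*(m:ℝ)+4)) * ((2*(m:ℝ)+7)*(2*(m:ℝ)+6)*(2*(m:ℝ)+5)))) * hroot + ((-1:ℝ) * (((2*(m:ℝ)+6)*(2*(m:ℝ)+5)*(2*(m:ℝ)+4)) * ((2*(m:ℝ)+7)*(2*(m:ℝ)+6)*(2*(m:ℝ)+5))) * lam) * hA' + ((2*(m:ℝ)+7)*(2*(m:ℝ)+6)*(2*(m:ℝ)+5)) * hB'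
  have hone : (0:ℝ) < 264297600 + 915641280*(m:ℝ) + 1417997376*(m:ℝ)^2 + 1292308672*(m:ℝ)^3 + 767283072*(m:ℝ)^4 + 309969984*(m:ℝ)^5 + 86238528*(m:ℝ)^6 + 16303680*(m:ℝ)^7 + 2002560*(m:ℝ)^8 + 144128*(m:ℝ)^9 + 4608*(m:ℝ)^10 := by positivity
  have htwo : (0:ℝ) < 1490408640 + 5297597856*(m:ℝ) + 8435049120*(m:ℝ)^2 + 7923031424*(m:ℝ)^3 + 4861998912*(m:ℝ)^4 + 2036752800*(m:ℝ)^5 + 589871136*(m:ℝ)^6 + 116619840*(m:ℝ)^7 + 15062592*(m:ℝ)^8 + 1147648*(m:ℝ)^9 + 39168*(m:ℝ)^10 := by positivity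
  have key := rootB ((-1:ℝ) * (((m:ℝ)+3)*((m:ℝ)+2)*((m:ℝ)+1)) * (((2*(m:ℝ)+6)*(2*(m:ℝ)+5)*(2*(m:ℝ)+4)) * ((2*(m:ℝ)+7)*(2*(m:ℝ)+6)*(2*(m:ℝ)+5)))) (((((m:ℝ)+3)*((m:ℝ)+2)*((m:ℝ)+1)) * (((m:ℝ)+4)*((m:ℝ)+3)*((m:ℝ)+2))) * ((2*(m:ℝ)+7)*(2*(m:ℝ)+6)*(2*(m:ℝ)+5))) (((2*(m:ℝ)+7)*(2*(m:ℝ)+6)*(2*(m:ℝ)+5)) * (((2*(m:ℝ)+6)*(2*(m:ℝ)+5)*(2*(m:ℝ)+4)) * ((2*(m:ℝ)+7)*(2*(m:ℝ)+6)*(2*(m:ℝ)+5)))) (-(3*(m:ℝ)+13)) (24*(m:ℝ)+72) lam (by positivity) (by positivity) hq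
    (by nlinarith [hone]) (by nlinarith [htwo])
  have hc : (24*(m:ℝ)+72) ≠ 0 := by positivity
  have hinv : (1:ℝ)/(6*((m:ℝ)+3)) * (6*((m:ℝ)+3)) = 1 := by
    rw [one_div_mul_cancel]; positivity
  have e : (-(3*(m:ℝ)+13))/(24*(m:ℝ)+72) = -(1/8) - 1/(6*((m:ℝ)+3)) := by
    rw [div_eq_iff hc]
    linear_combination (4 : ℝ) * hinv
  rw [e] at key
  exact key

private lemma case2_d2 (m : ℕ) (lam : ℝ)
    (hroot : 2*lam^2 - ((1:ℝ) * (C[2*m+3, m+1] / C[2*m+5, m+3])) * lam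
      - C[2*m+4, m+1] / C[2*m+6, m+3] * (C[2*m+3, m] / C[2*m+5, m+2]) = 0) :
    -(1/8:ℝ) < lam := by
  have p0 : (0:ℝ) < C[2*m+5, m+3] := by exact_mod_cast Nat.choose_pos (by omega)
  have p1 : (0:ℝ) < C[2*m+6, m+3] := by exact_mod_cast Nat.choose_pos (by omega)
  have p2 : (0:ℝ) < C[2*m+5, m+2] := by exact_mod_cast Nat.choose_pos (by omega)
  have idA := twoStepR (2*m+3) (m+1)
  have idB1 := twoStepR (2*m+4) (m+1)
  have idB2 := twoStepR (2*m+3) m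
  rw [show 2*m+3+2 = 2*m+5 from by omega] at idA idB2
  rw [show 2*m+4+2 = 2*m+6 from by omega] at idB1
  rw [show m+1+2 = m+3 from by omega] at idA idB1
  push_cast at idA idB1 idB2
  have hA' : C[2*m+3, m+1] / C[2*m+5, m+3] * ((2*(m:ℝ)+5)*(2*(m:ℝ)+4)) = ((m:ℝ)+3)*((m:ℝ)+2) := by
    rw [div_mul_eq_mul_div, div_eq_iff p0.ne']; push_cast; linear_combination (-1 : ℝ) * idA
  have hB1' : C[2*m+4, m+1] / C[2*m+6, m+3] * ((2*(m:ℝ)+6)*(2*(m:ℝ)+5)) = ((m:ℝ)+3)*((m:ℝ)+2) := by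
    rw [div_mul_eq_mul_div, div_eq_iff p1.ne']; push_cast; linear_combination (-1 : ℝ) * idB1
  have hB2' : C[2*m+3, m] / C[2*m+5, m+2] * ((2*(m:ℝ)+5)*(2*(m:ℝ)+4)) = ((m:ℝ)+2)*((m:ℝ)+1) := by
    rw [div_mul_eq_mul_div, div_eq_iff p2.ne']; push_cast; linear_combination (-1 : ℝ) * idB2
  have hB' : C[2*m+4, m+1] / C[2*m+6, m+3] * (C[2*m+3, m] / C[2*m+5, m+2]) * (((2*(m:ℝ)+6)*(2*(m:ℝ)+5)) * ((2*(m:ℝ)+5)*(2*(m:ℝ)+4)))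
      = ((((m:ℝ)+3)*((m:ℝ)+2)) * (((m:ℝ)+2)*((m:ℝ)+1))) := by
    calc C[2*m+4, m+1] / C[2*m+6, m+3] * (C[2*m+3, m] / C[2*m+5, m+2]) * (((2*(m:ℝ)+6)*(2*(m:ℝ)+5)) * ((2*(m:ℝ)+5)*(2*(m:ℝ)+4)))
        = (C[2*m+4, m+1] / C[2*m+6, m+3] * ((2*(m:ℝ)+6)*(2*(m:ℝ)+5))) * (C[2*m+3, m] / C[2*m+5, m+2] * ((2*(m:ℝ)+5)*(2*(m:ℝ)+4))) := by ring
      _ = ((((m:ℝ)+3)*((m:ℝ)+2)) * (((m:ℝ)+2)*((m:ℝ)+1))) := by rw [hB1', hB2']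
  have hq : (((2*(m:ℝ)+5)*(2*(m:ℝ)+4)) * (((2*(m:ℝ)+6)*(2*(m:ℝ)+5)) * ((2*(m:ℝ)+5)*(2*(m:ℝ)+4)))) * (2*lam^2) - ((1:ℝ) * (((m:ℝ)+3)*((m:ℝ)+2)) * (((2*(m:ℝ)+6)*(2*(m:ℝ)+5)) * ((2*(m:ℝ)+5)*(2*(m:ℝ)+4)))) * lam - (((((m:ℝ)+3)*((m:ℝ)+2)) * (((m:ℝ)+2)*((m:ℝ)+1))) * ((2*(m:ℝ)+5)*(2*(m:ℝ)+4))) = 0 := by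
    linear_combination (((2*(m:ℝ)+5)*(2*(m:ℝ)+4)) * (((2*(m:ℝ)+6)*(2*(m:ℝ)+5)) * ((2*(m:ℝ)+5)*(2*(m:ℝ)+4)))) * hroot + ((1:ℝ) * (((2*(m:ℝ)+6)*(2*(m:ℝ)+5)) * ((2*(m:ℝ)+5)*(2*(m:ℝ)+4))) * lam) * hA' + ((2*(m:ℝ)+5)*(2*(m:ℝ)+4)) * hB'
  have hone : (0:ℝ) < 76800 + 192640*(m:ℝ) + 200448*(m:ℝ)^2 + 110752*(m:ℝ)^3 + 34272*(m:ℝ)^4 + 5632*(m:ℝ)^5 + 384*(m:ℝ)^6 := by positivity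
  have htwo : (0:ℝ) < 37440 + 82176*(m:ℝ) + 71760*(m:ℝ)^2 + 31152*(m:ℝ)^3 + 6720*(m:ℝ)^4 + 576*(m:ℝ)^5 := by positivity
  have key := rootB ((1:ℝ) * (((m:ℝ)+3)*((m:ℝ)+2)) * (((2*(m:ℝ)+6)*(2*(m:ℝ)+5)) * ((2*(m:ℝ)+5)*(2*(m:ℝ)+4)))) (((((m:ℝ)+3)*((m:ℝ)+2)) * (((m:ℝ)+2)*((m:ℝ)+1))) * ((2*(m:ℝ)+5)*(2*(m:ℝ)+4))) (((2*(m:ℝ)+5)*(2*(m:ℝ)+4)) * (((2*(m:ℝ)+6)*(2*(m:ℝ)+5)) * ((2*(m:ℝ)+5)*(2*(m:ℝ)+4)))) (-1) (8) lam (by positivity) (by positivity) hq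
    (by nlinarith [hone]) (by nlinarith [htwo])
  have e : (-1:ℝ)/8 = -(1/8:ℝ) := by norm_num
  rw [e] at key
  exact key

private lemma case2_d3 (m : ℕ) (lam : ℝ)
    (hroot : 2*lam^2 - ((-1:ℝ) * (C[2*m+4, m+1] / C[2*m+7, m+4])) * lam
      - C[2*m+5, m+1] / C[2*m+8, m+4] * (C[2*m+4, m] / C[2*m+7, m+3]) = 0) :
    -(1/8:ℝ) < lam := by
  have p0 : (0:ℝ) < C[2*m+7, m+4] := by exact_mod_cast Nat.choose_pos (by omega)
  have p1 : (0:ℝ) < C[2*m+8, m+4] := by exact_mod_cast Nat.choose_pos (by omega)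
  have p2 : (0:ℝ) < C[2*m+7, m+3] := by exact_mod_cast Nat.choose_pos (by omega)
  have idA := threeStepR (2*m+4) (m+1)
  have idB1 := threeStepR (2*m+5) (m+1)
  have idB2 := threeStepR (2*m+4) m
  rw [show 2*m+4+3 = 2*m+7 from by omega] at idA idB2
  rw [show 2*m+5+3 = 2*m+8 from by omega] at idB1
  rw [show m+1+3 = m+4 from by omega] at idA idB1
  push_cast at idA idB1 idB2
  have hA' : C[2*m+4, m+1] / C[2*m+7, m+4] * ((2*(m:ℝ)+7)*(2*(m:ℝ)+6)*(2*(m:ℝ)+5)) = ((m:ℝ)+4)*((m:ℝ)+3)*((m:ℝ)+2) := by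
    rw [div_mul_eq_mul_div, div_eq_iff p0.ne']; push_cast; linear_combination (-1 : ℝ) * idA
  have hB1' : C[2*m+5, m+1] / C[2*m+8, m+4] * ((2*(m:ℝ)+8)*(2*(m:ℝ)+7)*(2*(m:ℝ)+6)) = ((m:ℝ)+4)*((m:ℝ)+3)*((m:ℝ)+2) := by
    rw [div_mul_eq_mul_div, div_eq_iff p1.ne']; push_cast; linear_combination (-1 : ℝ) * idB1
  have hB2' : C[2*m+4, m] / C[2*m+7, m+3] * ((2*(m:ℝ)+7)*(2*(m:ℝ)+6)*(2*(m:ℝ)+5)) = ((m:ℝ)+3)*((m:ℝ)+2)*((m:ℝ)+1) := by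
    rw [div_mul_eq_mul_div, div_eq_iff p2.ne']; push_cast; linear_combination (-1 : ℝ) * idB2
  have hB' : C[2*m+5, m+1] / C[2*m+8, m+4] * (C[2*m+4, m] / C[2*m+7, m+3]) * (((2*(m:ℝ)+8)*(2*(m:ℝ)+7)*(2*(m:ℝ)+6)) * ((2*(m:ℝ)+7)*(2*(m:ℝ)+6)*(2*(m:ℝ)+5)))
      = ((((m:ℝ)+4)*((m:ℝ)+3)*((m:ℝ)+2)) * (((m:ℝ)+3)*((m:ℝ)+2)*((m:ℝ)+1))) := by
    calc C[2*m+5, m+1] / C[2*m+8, m+4] * (C[2*m+4, m] / C[2*m+7, m+3]) * (((2*(m:ℝ)+8)*(2*(m:ℝ)+7)*(2*(m:ℝ)+6)) * ((2*(m:ℝ)+7)*(2*(m:ℝ)+6)*(2*(m:ℝ)+5)))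
        = (C[2*m+5, m+1] / C[2*m+8, m+4] * ((2*(m:ℝ)+8)*(2*(m:ℝ)+7)*(2*(m:ℝ)+6))) * (C[2*m+4, m] / C[2*m+7, m+3] * ((2*(m:ℝ)+7)*(2*(m:ℝ)+6)*(2*(m:ℝ)+5))) := by ring
      _ = ((((m:ℝ)+4)*((m:ℝ)+3)*((m:ℝ)+2)) * (((m:ℝ)+3)*((m:ℝ)+2)*((m:ℝ)+1))) := by rw [hB1', hB2']
  have hq : (((2*(m:ℝ)+7)*(2*(m:ℝ)+6)*(2*(m:ℝ)+5)) * (((2*(m:ℝ)+8)*(2*(m:ℝ)+7)*(2*(m:ℝ)+6)) * ((2*(m:ℝ)+7)*(2*(m:ℝ)+6)*(2*(m:ℝ)+5)))) * (2*lam^2) - ((-1:ℝ) * (((m:ℝ)+4)*((m:ℝ)+3)*((m:ℝ)+2)) * (((2*(m:ℝ)+8)*(2*(m:ℝ)+7)*(2*(m:ℝ)+6)) * ((2*(m:ℝ)+7)*(2*(m:ℝ)+6)*(2*(m:ℝ)+5)))) * lam - (((((m:ℝ)+4)*((m:ℝ)+3)*((m:ℝ)+2)) * (((m:ℝ)+3)*((m:ℝ)+2)*((m:ℝ)+1)))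 * ((2*(m:ℝ)+7)*(2*(m:ℝ)+6)*(2*(m:ℝ)+5))) = 0 := by
    linear_combination (((2*(m:ℝ)+7)*(2*(m:ℝ)+6)*(2*(m:ℝ)+5)) * (((2*(m:ℝ)+8)*(2*(m:ℝ)+7)*(2*(m:ℝ)+6)) * ((2*(m:ℝ)+7)*(2*(m:ℝ)+6)*(2*(m:ℝ)+5)))) * hroot + ((-1:ℝ) * (((2*(m:ℝ)+8)*(2*(m:ℝ)+7)*(2*(m:ℝ)+6)) * ((2*(m:ℝ)+7)*(2*(m:ℝ)+6)*(2*(m:ℝ)+5))) * lam) * hA' + ((2*(m:ℝ)+7)*(2*(m:ℝ)+6)*(2*(m:ℝ)+5)) * hB'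
  have hone : (0:ℝ) < 45722880 + 132052032*(m:ℝ) + 169169472*(m:ℝ)^2 + 126171648*(m:ℝ)^3 + 60375168*(m:ℝ)^4 + 19222080*(m:ℝ)^5 + 4071744*(m:ℝ)^6 + 553344*(m:ℝ)^7 + 43776*(m:ℝ)^8 + 1536*(m:ℝ)^9 := by positivity
  have htwo : (0:ℝ) < 14152320 + 38281248*(m:ℝ) + 45253728*(m:ℝ)^2 + 30526560*(m:ℝ)^3 + 12847968*(m:ℝ)^4 + 3453696*(m:ℝ)^5 + 578880*(m:ℝ)^6 + 55296*(m:ℝ)^7 + 2304*(m:ℝ)^8 := by positivity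
  have key := rootB ((-1:ℝ) * (((m:ℝ)+4)*((m:ℝ)+3)*((m:ℝ)+2)) * (((2*(m:ℝ)+8)*(2*(m:ℝ)+7)*(2*(m:ℝ)+6)) * ((2*(m:ℝ)+7)*(2*(m:ℝ)+6)*(2*(m:ℝ)+5)))) (((((m:ℝ)+4)*((m:ℝ)+3)*((m:ℝ)+2)) * (((m:ℝ)+3)*((m:ℝ)+2)*((m:ℝ)+1))) * ((2*(m:ℝ)+7)*(2*(m:ℝ)+6)*(2*(m:ℝ)+5))) (((2*(m:ℝ)+7)*(2*(m:ℝ)+6)*(2*(m:ℝ)+5)) * (((2*(m:ℝ)+8)*(2*(m:ℝ)+7)*(2*(m:ℝ)+6)) * ((2*(m:ℝ)+7)*(2*(m:ℝ)+6)*(2*(m:ℝ)+5)))) (-1) (8) lam (by positivity) (by positivity) hq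
    (by nlinarith [hone]) (by nlinarith [htwo])
  have e : (-1:ℝ)/8 = -(1/8:ℝ) := by norm_num
  rw [e] at key
  exact key

private lemma pow16 (d : ℕ) (hd4 : 4 ≤ d) : (16:ℕ) ≤ 2^d := by
  calc (16:ℕ) = 2^4 := by norm_num
  _ ≤ 2^d := Nat.pow_le_pow_right (by norm_num) hd4

private lemma choose16 (d a b : ℕ) (hd4 : 4 ≤ d) (h : 2*b + d ≤ a) :
    a.choose b * 16 ≤ (a+d).choose (b+d) := by
  have h1 := chooseRatioPow d a b h
  have h16 := pow16 d hd4
  calc a.choose b * 16 ≤ a.choose b * 2^d := Nat.mul_le_mul_left _ h16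
  _ ≤ _ := h1

private lemma choose40 (d k : ℕ) (hd4 : 4 ≤ d) (hdk : d ≤ k) (hk : 2 ≤ k) :
    (2*k+1-d).choose (k+1-d) * 40 ≤ 3 * ((2*k+1).choose (k+1)) := by
  have h1 := chooseRatioPow (d-1) (2*k+1-d) (k+1-d) (by omega)
  rw [show 2*k+1-d+(d-1) = 2*k from by omega, show k+1-d+(d-1) = k from by omega] at h1
  have h8 : (8:ℕ) ≤ 2^(d-1) := by
    calc (8:ℕ) = 2^3 := by norm_num
    _ ≤ 2^(d-1) := Nat.pow_le_pow_right (by norm_num) (by omega)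
  have h5 := fiveChoose k hk
  calc (2*k+1-d).choose (k+1-d) * 40 = ((2*k+1-d).choose (k+1-d) * 8) * 5 := by ring
  _ ≤ ((2*k+1-d).choose (k+1-d) * 2^(d-1)) * 5 :=
      Nat.mul_le_mul_right _ (Nat.mul_le_mul_left _ h8)
  _ ≤ (2*k).choose k * 5 := Nat.mul_le_mul_right _ h1
  _ = 5 * (2*k).choose k := by ring
  _ ≤ 3 * (2*k+1).choose (k+1) := h5

private lemma case1_d4 (k d : ℕ) (lam : ℝ) (hk : 2 ≤ k) (hd4 : 4 ≤ d) (hdk : d ≤ k)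
    (hroot : 2*lam^2 - ((-1:ℝ)^d * C[2*k+1-d, k-d] / C[2*k+1, k]) * lam
      - ((-1:ℝ)^d * C[2*k-d, k-d] / C[2*k, k]) *
        ((-1:ℝ)^d * C[2*k+1-d, k+1-d] / C[2*k+1, k+1]) = 0) :
    -(1/8:ℝ) < lam := by
  have p1 : (0:ℝ) < C[2*k+1, k] := by exact_mod_cast Nat.choose_pos (by omega)
  have p2 : (0:ℝ) < C[2*k, k] := by exact_mod_cast Nat.choose_pos (by omega)
  have p3 : (0:ℝ) < C[2*k+1, k+1] := by exact_mod_cast Nat.choose_pos (by omega)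
  have nA : (2*k+1-d).choose (k-d) * 16 ≤ (2*k+1).choose k := by
    have h := choose16 d (2*k+1-d) (k-d) hd4 (by omega)
    rwa [show 2*k+1-d+d = 2*k+1 from by omega, show k-d+d = k from by omega] at h
  have nB1 : (2*k-d).choose (k-d) * 16 ≤ (2*k).choose k := by
    have h := choose16 d (2*k-d) (k-d) hd4 (by omega)
    rwa [show 2*k-d+d = 2*k from by omega, show k-d+d = k from by omega] at h
  have nB2 := choose40 d k hd4 hdk hk
  have nB : ((2*k-d).choose (k-d) * ((2*k+1-d).choose (k+1-d))) * 640
      ≤ 3 * ((2*k).choose k * ((2*k+1).choose (k+1))) := by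
    calc ((2*k-d).choose (k-d) * ((2*k+1-d).choose (k+1-d))) * 640
        = ((2*k-d).choose (k-d) * 16) * ((2*k+1-d).choose (k+1-d) * 40) := by ring
    _ ≤ ((2*k).choose k) * (3 * ((2*k+1).choose (k+1))) := Nat.mul_le_mul nB1 nB2
    _ = 3 * ((2*k).choose k * ((2*k+1).choose (k+1))) := by ring
  have bA : C[2*k+1-d, k-d] / C[2*k+1, k] ≤ 3/40 := by
    rw [div_le_div_iff₀ p1 (by norm_num)]
    have hc : ((2*k+1-d).choose (k-d) * 16 : ℝ) ≤ ((2*k+1).choose k : ℝ) := by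
      exact_mod_cast nA
    have hnn : (0:ℝ) ≤ ((2*k+1-d).choose (k-d) : ℝ) := Nat.cast_nonneg _
    push_cast at hc
    linarith
  have hA : -(3/40:ℝ) ≤ (-1:ℝ)^d * C[2*k+1-d, k-d] / C[2*k+1, k] := by
    have h0 : (0:ℝ) ≤ C[2*k+1-d, k-d] / C[2*k+1, k] := by positivity
    rcases Nat.even_or_odd d with he | ho
    · rw [he.neg_one_pow, one_mul]; linarith
    · rw [ho.neg_one_pow]
      have he2 : (-1:ℝ) * C[2*k+1-d, k-d] / C[2*k+1, k]
          = -(C[2*k+1-d, k-d] / C[2*k+1, k]) := by ring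
      rw [he2]; linarith
  have eB : ((-1:ℝ)^d * C[2*k-d, k-d] / C[2*k, k]) *
        ((-1:ℝ)^d * C[2*k+1-d, k+1-d] / C[2*k+1, k+1])
      = (C[2*k-d, k-d] * C[2*k+1-d, k+1-d]) / (C[2*k, k] * C[2*k+1, k+1]) := by
    rcases Nat.even_or_odd d with he | ho
    · rw [he.neg_one_pow]; ring
    · rw [ho.neg_one_pow]; ring
  have bB : ((-1:ℝ)^d * C[2*k-d, k-d] / C[2*k, k]) *
      ((-1:ℝ)^d * C[2*k+1-d, k+1-d] / C[2*k+1, k+1]) ≤ 3/640 := by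
    rw [eB, div_le_div_iff₀ (by positivity) (by norm_num)]
    exact_mod_cast nB
  have key := rootB ((-1:ℝ)^d * C[2*k+1-d, k-d] / C[2*k+1, k])
      (((-1:ℝ)^d * C[2*k-d, k-d] / C[2*k, k]) *
        ((-1:ℝ)^d * C[2*k+1-d, k+1-d] / C[2*k+1, k+1]))
      1 (-1) 8 lam one_pos (by norm_num) (by linear_combination hroot)
      (by linarith) (by nlinarith [hA, bB])
  have e : (-1:ℝ)/8 = -(1/8:ℝ) := by norm_num
  rw [e] at key
  exact key

private lemma case2_d4 (k d : ℕ) (lam : ℝ) (hk : 2 ≤ k) (hd4 : 4 ≤ d) (hdk : d ≤ k)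
    (hroot : 2*lam^2 - ((-1:ℝ)^d * C[2*k+1-d, k+1-d] / C[2*k+1, k+1]) * lam
      - ((-1:ℝ)^d * C[2*k+2-d, k+1-d] / C[2*k+2, k+1]) *
        ((-1:ℝ)^d * C[2*k+1-d, k-d] / C[2*k+1, k]) = 0) :
    -(1/8:ℝ) < lam := by
  have p1 : (0:ℝ) < C[2*k+1, k+1] := by exact_mod_cast Nat.choose_pos (by omega)
  have p2 : (0:ℝ) < C[2*k+2, k+1] := by exact_mod_cast Nat.choose_pos (by omega)
  have p3 : (0:ℝ) < C[2*k+1, k] := by exact_mod_cast Nat.choose_pos (by omega)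
  have nA := choose40 d k hd4 hdk hk
  have nB1 : (2*k+2-d).choose (k+1-d) * 16 ≤ (2*k+2).choose (k+1) := by
    have h := choose16 d (2*k+2-d) (k+1-d) hd4 (by omega)
    rwa [show 2*k+2-d+d = 2*k+2 from by omega, show k+1-d+d = k+1 from by omega] at h
  have nB2 : (2*k+1-d).choose (k-d) * 16 ≤ (2*k+1).choose k := by
    have h := choose16 d (2*k+1-d) (k-d) hd4 (by omega)
    rwa [show 2*k+1-d+d = 2*k+1 from by omega, show k-d+d = k from by omega] at h
  have nB2x : (2*k+1-d).choose (k-d) * 40 ≤ 3 * ((2*k+1).choose k) := by omega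
  have nB : ((2*k+2-d).choose (k+1-d) * ((2*k+1-d).choose (k-d))) * 640
      ≤ 3 * ((2*k+2).choose (k+1) * ((2*k+1).choose k)) := by
    calc ((2*k+2-d).choose (k+1-d) * ((2*k+1-d).choose (k-d))) * 640
        = ((2*k+2-d).choose (k+1-d) * 16) * ((2*k+1-d).choose (k-d) * 40) := by ring
    _ ≤ ((2*k+2).choose (k+1)) * (3 * ((2*k+1).choose k)) := Nat.mul_le_mul nB1 nB2x
    _ = 3 * ((2*k+2).choose (k+1) * ((2*k+1).choose k)) := by ring
  have bA : C[2*k+1-d, k+1-d] / C[2*k+1, k+1] ≤ 3/40 := by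
    rw [div_le_div_iff₀ p1 (by norm_num)]
    have hc : ((2*k+1-d).choose (k+1-d) * 40 : ℝ) ≤ 3 * ((2*k+1).choose (k+1) : ℝ) := by
      exact_mod_cast nA
    push_cast at hc
    linarith
  have hA : -(3/40:ℝ) ≤ (-1:ℝ)^d * C[2*k+1-d, k+1-d] / C[2*k+1, k+1] := by
    have h0 : (0:ℝ) ≤ C[2*k+1-d, k+1-d] / C[2*k+1, k+1] := by positivity
    rcases Nat.even_or_odd d with he | ho
    · rw [he.neg_one_pow, one_mul]; linarith
    · rw [ho.neg_one_pow]
      have he2 : (-1:ℝ) * C[2*k+1-d, k+1-d] / C[2*k+1, k+1]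
          = -(C[2*k+1-d, k+1-d] / C[2*k+1, k+1]) := by ring
      rw [he2]; linarith
  have eB : ((-1:ℝ)^d * C[2*k+2-d, k+1-d] / C[2*k+2, k+1]) *
        ((-1:ℝ)^d * C[2*k+1-d, k-d] / C[2*k+1, k])
      = (C[2*k+2-d, k+1-d] * C[2*k+1-d, k-d]) / (C[2*k+2, k+1] * C[2*k+1, k]) := by
    rcases Nat.even_or_odd d with he | ho
    · rw [he.neg_one_pow]; ring
    · rw [ho.neg_one_pow]; ring
  have bB : ((-1:ℝ)^d * C[2*k+2-d, k+1-d] / C[2*k+2, k+1]) *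
      ((-1:ℝ)^d * C[2*k+1-d, k-d] / C[2*k+1, k]) ≤ 3/640 := by
    rw [eB, div_le_div_iff₀ (by positivity) (by norm_num)]
    exact_mod_cast nB
  have key := rootB ((-1:ℝ)^d * C[2*k+1-d, k+1-d] / C[2*k+1, k+1])
      (((-1:ℝ)^d * C[2*k+2-d, k+1-d] / C[2*k+2, k+1]) *
        ((-1:ℝ)^d * C[2*k+1-d, k-d] / C[2*k+1, k]))
      1 (-1) 8 lam one_pos (by norm_num) (by linear_combination hroot)
      (by linarith) (by nlinarith [hA, bB])
  have e : (-1:ℝ)/8 = -(1/8:ℝ) := by norm_num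
  rw [e] at key
  exact key

/-- let `n = 3k+1` (with `k₁ = k+1`, `k₂ = k`) or `n = 3k+2`
(with `k₁ = k`, `k₂ = k+1`), and for `a b` let
`α_d^{(a,b)} = (−1)^d C(n−a−d, b−d)/C(n−a, b)`. For `2 ≤ d ≤ k` and `k ≥ 2`, every
root `λ` of the quadratic `2λ² − α_d^{(k₂,k₂)} λ − α_d^{(k₁,k₂)} α_d^{(k₂,k₁)} = 0`
satisfies `λ > −1/8 − 1/(6k)`; moreover, if `n = 3k+2`, then `λ > −1/8`. -/
theorem stmt16 (k d n k₁ k₂ : ℕ) (hk : 2 ≤ k) (hd : 2 ≤ d) (hdk : d ≤ k)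
    (hcase : (n = 3 * k + 1 ∧ k₁ = k + 1 ∧ k₂ = k) ∨
             (n = 3 * k + 2 ∧ k₁ = k ∧ k₂ = k + 1)) :
    let alpha : ℕ → ℕ → ℝ := fun a b =>
      (-1) ^ d * ((Nat.choose (n - a - d) (b - d) : ℕ) : ℝ)
        / ((Nat.choose (n - a) b : ℕ) : ℝ)
    ∀ lam : ℝ,
      2 * lam ^ 2 - alpha k₂ k₂ * lam - alpha k₁ k₂ * alpha k₂ k₁ = 0 →
      lam > -(1 / 8) - 1 / (6 * (k : ℝ)) ∧ (n = 3 * k + 2 → lam > -(1 / 8)) := by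
  intro alpha lam hroot
  have halpha : alpha = fun a b =>
      (-1) ^ d * ((Nat.choose (n - a - d) (b - d) : ℕ) : ℝ)
        / ((Nat.choose (n - a) b : ℕ) : ℝ) := rfl
  simp only [halpha] at hroot
  rcases hcase with ⟨hn, hk1, hk2⟩ | ⟨hn, hk1, hk2⟩
  · subst hn
    rw [hk1, hk2] at hroot
    refine ⟨?_, fun hh => absurd hh (by omega)⟩
    rcases Nat.lt_or_ge d 4 with hdlt | hd4
    · interval_cases d
      · -- d = 2
        obtain ⟨m, rfl⟩ : ∃ m, k = m + 2 := ⟨k-2, by omega⟩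
        simp only [show 3*(m+2)+1-(m+2)-2 = 2*m+3 from by omega,
          show 3*(m+2)+1-(m+2) = 2*m+5 from by omega,
          show 3*(m+2)+1-(m+2+1)-2 = 2*m+2 from by omega,
          show 3*(m+2)+1-(m+3)-2 = 2*m+2 from by omega,
          show 3*(m+2)+1-(m+2+1) = 2*m+4 from by omega,
          show 3*(m+2)+1-(m+3) = 2*m+4 from by omega,
          show m+2-2 = m from by omega,
          show m+2+1-2 = m+1 from by omega,
          show m+3-2 = m+1 from by omega,
          show m+2+1 = m+3 from by omega,
          show 2*m+5-2 = 2*m+3 from by omega,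
          show 2*m+4-2 = 2*m+2 from by omega] at hroot
        have h := case1_d2 m lam (by linear_combination hroot)
        push_cast
        exact h
      · -- d = 3
        obtain ⟨m, rfl⟩ : ∃ m, k = m + 3 := ⟨k-3, by omega⟩
        simp only [show 3*(m+3)+1-(m+3)-3 = 2*m+4 from by omega,
          show 3*(m+3)+1-(m+3) = 2*m+7 from by omega,
          show 3*(m+3)+1-(m+3+1)-3 = 2*m+3 from by omega,
          show 3*(m+3)+1-(m+4)-3 = 2*m+3 from by omega,
          show 3*(m+3)+1-(m+3+1) = 2*m+6 from by omega,
          show 3*(m+3)+1-(m+4) = 2*m+6 from by omega,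
          show m+3-3 = m from by omega,
          show m+3+1-3 = m+1 from by omega,
          show m+4-3 = m+1 from by omega,
          show m+3+1 = m+4 from by omega,
          show 2*m+7-3 = 2*m+4 from by omega,
          show 2*m+6-3 = 2*m+3 from by omega] at hroot
        have h := case1_d3 m lam (by linear_combination hroot)
        push_cast
        exact h
    · -- d ≥ 4
      simp only [show 3*k+1-k-d = 2*k+1-d from by omega,
        show 3*k+1-k = 2*k+1 from by omega,
        show 3*k+1-(k+1)-d = 2*k-d from by omega,
        show 3*k+1-(k+1) = 2*k from by omega] at hroot
      have h := case1_d4 k d lam hk hd4 hdk (by linear_combination hroot)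
      have hkpos : (0:ℝ) < (k:ℝ) := by exact_mod_cast (by omega : 0 < k)
      have hp : (0:ℝ) < 1/(6*(k:ℝ)) := by positivity
      linarith
  · subst hn
    rw [hk1, hk2] at hroot
    have main : -(1/8:ℝ) < lam := by
      rcases Nat.lt_or_ge d 4 with hdlt | hd4
      · interval_cases d
        · -- d = 2
          obtain ⟨m, rfl⟩ : ∃ m, k = m + 2 := ⟨k-2, by omega⟩
          simp only [show 3*(m+2)+2-(m+2+1)-2 = 2*m+3 from by omega,
            show 3*(m+2)+2-(m+3)-2 = 2*m+3 from by omega,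
            show 3*(m+2)+2-(m+2+1) = 2*m+5 from by omega,
            show 3*(m+2)+2-(m+3) = 2*m+5 from by omega,
            show 3*(m+2)+2-(m+2)-2 = 2*m+4 from by omega,
            show 3*(m+2)+2-(m+2) = 2*m+6 from by omega,
            show m+2+1-2 = m+1 from by omega,
            show m+3-2 = m+1 from by omega,
            show m+2-2 = m from by omega,
            show m+2+1 = m+3 from by omega,
            show 2*m+5-2 = 2*m+3 from by omega,
            show 2*m+6-2 = 2*m+4 from by omega] at hroot
          exact case2_d2 m lam (by linear_combination hroot)
        · -- d = 3
          obtain ⟨m, rfl⟩ : ∃ m, k = m + 3 := ⟨k-3, by omega⟩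
          simp only [show 3*(m+3)+2-(m+3+1)-3 = 2*m+4 from by omega,
            show 3*(m+3)+2-(m+4)-3 = 2*m+4 from by omega,
            show 3*(m+3)+2-(m+3+1) = 2*m+7 from by omega,
            show 3*(m+3)+2-(m+4) = 2*m+7 from by omega,
            show 3*(m+3)+2-(m+3)-3 = 2*m+5 from by omega,
            show 3*(m+3)+2-(m+3) = 2*m+8 from by omega,
            show m+3+1-3 = m+1 from by omega,
            show m+4-3 = m+1 from by omega,
            show m+3-3 = m from by omega,
            show m+3+1 = m+4 from by omega,
            show 2*m+7-3 = 2*m+4 from by omega,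
            show 2*m+8-3 = 2*m+5 from by omega] at hroot
          exact case2_d3 m lam (by linear_combination hroot)
      · -- d ≥ 4
        simp only [show 3*k+2-(k+1)-d = 2*k+1-d from by omega,
          show 3*k+2-(k+1) = 2*k+1 from by omega,
          show 3*k+2-k-d = 2*k+2-d from by omega,
          show 3*k+2-k = 2*k+2 from by omega] at hroot
        exact case2_d4 k d lam hk hd4 hdk (by linear_combination hroot)
    have hkpos : (0:ℝ) < (k:ℝ) := by exact_mod_cast (by omega : 0 < k)
    have hp : (0:ℝ) < 1/(6*(k:ℝ)) := by positivity
    exact ⟨by linarith, fun _ => main⟩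
end

section
/- Let n = 3k+2, V = {1,…,n}, and let T_{a,b} be the cross-replacement operator from functions on the b-slice to functions on the a-slice, T_{a,b}h(x) = E_{y}[h(y)] with y uniform over b-subsets disjoint from x. Then for the degree-(k+1) harmonic polynomial χ(x) = ∏_{i=1}^{k+1}(1_{2i−1∈x} − 1_{2i∈x}) on the (k+1)-slice, T_{k+1,k+1} χ = α χ with α = (−1)^{k+1} / C(2k+1, k+1), and hence |α|/2 ≤ 1/20 < 1/8 for k ≥ 2. -/
open Finset

/-- The factor of `chi`. -/
def s17F (x : Finset ℕ) (i : ℕ) : ℚ :=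
  (if 2 * i - 1 ∈ x then (1 : ℚ) else 0) - (if 2 * i ∈ x then (1 : ℚ) else 0)

lemma s17F_xor {x : Finset ℕ} {i : ℕ} (h : s17F x i ≠ 0) : (2 * i - 1 ∈ x ↔ 2 * i ∉ x) := by
  by_cases h1 : 2 * i - 1 ∈ x <;> by_cases h2 : 2 * i ∈ x <;>
    simp [s17F, h1, h2] at h ⊢

/-- If the sets `s'` and `y` agree except that the pair `{2i0-1, 2i0}` has been swapped
(with exactly one of them in `y`), then the chi-products are negatives. -/
lemma s17_swap {k i0 : ℕ} (hi0 : i0 ∈ Finset.Icc 1 (k + 1)) {y s' : Finset ℕ}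
    (h1 : (2 * i0 - 1 ∈ s') ↔ (2 * i0 ∈ y)) (h2 : (2 * i0 ∈ s') ↔ (2 * i0 - 1 ∈ y))
    (hx : (2 * i0 - 1 ∈ y) ↔ (2 * i0 ∉ y))
    (hother : ∀ j, j ≠ 2 * i0 - 1 → j ≠ 2 * i0 → (j ∈ s' ↔ j ∈ y)) :
    ∏ i ∈ Finset.Icc 1 (k + 1), s17F s' i = -∏ i ∈ Finset.Icc 1 (k + 1), s17F y i := by
  rw [← Finset.mul_prod_erase _ _ hi0, ← Finset.mul_prod_erase _ _ hi0]
  have hi0' : 1 ≤ i0 := (Finset.mem_Icc.mp hi0).1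
  have htail : ∏ i ∈ (Finset.Icc 1 (k+1)).erase i0, s17F s' i
      = ∏ i ∈ (Finset.Icc 1 (k+1)).erase i0, s17F y i := by
    refine Finset.prod_congr rfl fun i hi => ?_
    have hii : i ≠ i0 := (Finset.mem_erase.mp hi).1
    have hi1 : 1 ≤ i := (Finset.mem_Icc.mp (Finset.mem_erase.mp hi).2).1
    have e1 : (2 * i - 1 ∈ s') ↔ (2 * i - 1 ∈ y) := hother _ (by omega) (by omega)
    have e2 : (2 * i ∈ s') ↔ (2 * i ∈ y) := hother _ (by omega) (by omega)
    simp [s17F, e1, e2]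
  rw [htail]
  have hhead : s17F s' i0 = - s17F y i0 := by
    by_cases ha : 2 * i0 - 1 ∈ y
    · have hb : 2 * i0 ∉ y := hx.mp ha
      simp [s17F, h1, h2, ha, hb]
    · have hb : 2 * i0 ∈ y := by by_contra hb; exact ha (hx.mpr hb)
      simp [s17F, h1, h2, ha, hb]
  rw [hhead]; ring

theorem s17_key (k : ℕ) (x : Finset ℕ) (hxV : x ⊆ Finset.Icc 1 (3 * k + 2))
    (hxc : x.card = k + 1) :
    ∑ y ∈ ((Finset.Icc 1 (3 * k + 2)).powerset.filter (fun y => y.card = k + 1)).filter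
        (fun y => Disjoint y x), ∏ i ∈ Finset.Icc 1 (k + 1), s17F y i
      = (-1) ^ (k + 1) * ∏ i ∈ Finset.Icc 1 (k + 1), s17F x i := by
  classical
  by_cases hB : ∃ i ∈ Finset.Icc 1 (k + 1), 2 * i - 1 ∈ x ∧ 2 * i ∈ x
  · obtain ⟨i0, hi0, ha, hb⟩ := hB
    rw [Finset.prod_eq_zero hi0 (by simp [s17F, ha, hb]), mul_zero]
    refine Finset.sum_eq_zero fun y hy => ?_
    simp only [Finset.mem_filter, Finset.mem_powerset] at hy
    refine Finset.prod_eq_zero hi0 ?_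
    have h1 : 2 * i0 - 1 ∉ y := Finset.disjoint_right.mp hy.2 ha
    have h2 : 2 * i0 ∉ y := Finset.disjoint_right.mp hy.2 hb
    simp [s17F, h1, h2]
  by_cases hC : ∃ i ∈ Finset.Icc 1 (k + 1), 2 * i - 1 ∉ x ∧ 2 * i ∉ x
  · obtain ⟨i0, hi0, ha, hb⟩ := hC
    have hi01 : 1 ≤ i0 := (Finset.mem_Icc.mp hi0).1
    have hi02 : i0 ≤ k + 1 := (Finset.mem_Icc.mp hi0).2
    have hne : (2 * i0 - 1 : ℕ) ≠ 2 * i0 := by omega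
    rw [Finset.prod_eq_zero hi0 (by simp [s17F, ha, hb]), mul_zero]
    refine Finset.sum_involution
      (fun y _ => if 2 * i0 - 1 ∈ y then (if 2 * i0 ∈ y then y else
          insert (2 * i0) (y.erase (2 * i0 - 1)))
        else (if 2 * i0 ∈ y then insert (2 * i0 - 1) (y.erase (2 * i0)) else y))
      ?_ ?_ ?_ ?_
    · -- f a + f (g a) = 0
      intro y hy
      by_cases h1 : 2 * i0 - 1 ∈ y <;> by_cases h2 : 2 * i0 ∈ y
      · simp only [h1, h2, if_true]
        rw [Finset.prod_eq_zero hi0 (by simp [s17F, h1, h2])]; ring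
      · simp only [h1, h2, if_true, if_false]
        rw [s17_swap hi0 (y := y) (s' := insert (2 * i0) (y.erase (2 * i0 - 1)))
          (by simp [hne, h1, h2]) (by simp [h1]) (by simp [h1, h2])
          (fun j hj1 hj2 => by simp [hj1, hj2])]
        ring
      · simp only [h1, h2, if_true, if_false]
        rw [s17_swap hi0 (y := y) (s' := insert (2 * i0 - 1) (y.erase (2 * i0)))
          (by simp [h2]) (by simp [hne.symm, h1]) (by simp [h1, h2])
          (fun j hj1 hj2 => by simp [hj1, hj2])]
        ring
      · simp only [h1, h2, if_false]
        rw [Finset.prod_eq_zero hi0 (by simp [s17F, h1, h2])]; ring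
    · -- f a ≠ 0 → g a ≠ a
      intro y hy hfy
      have hxor : (2 * i0 - 1 ∈ y) ↔ (2 * i0 ∉ y) := by
        refine s17F_xor fun h0 => hfy (Finset.prod_eq_zero hi0 h0)
      by_cases h1 : 2 * i0 - 1 ∈ y
      · have h2 : 2 * i0 ∉ y := hxor.mp h1
        rw [if_pos h1, if_neg h2]
        intro heq
        apply h2; rw [← heq]; exact Finset.mem_insert_self _ _
      · have h2 : 2 * i0 ∈ y := by by_contra h2; exact h1 (hxor.mpr h2)
        rw [if_neg h1, if_pos h2]
        intro heq
        apply h1; rw [← heq]; exact Finset.mem_insert_self _ _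
    · -- g a ∈ s
      intro y hy
      simp only [Finset.mem_filter, Finset.mem_powerset] at hy ⊢
      obtain ⟨⟨hyV, hyc⟩, hyd⟩ := hy
      by_cases h1 : 2 * i0 - 1 ∈ y <;> by_cases h2 : 2 * i0 ∈ y
      · rw [if_pos h1, if_pos h2]; exact ⟨⟨hyV, hyc⟩, hyd⟩
      · rw [if_pos h1, if_neg h2]
        refine ⟨⟨?_, ?_⟩, ?_⟩
        · refine Finset.insert_subset (Finset.mem_Icc.mpr (by omega))
            ((Finset.erase_subset _ _).trans hyV)
        · rw [Finset.card_insert_of_notMem (by simp [h2]), Finset.card_erase_of_mem h1, hyc]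
          omega
        · refine Finset.disjoint_left.mpr fun j hj => ?_
          rcases Finset.mem_insert.mp hj with rfl | hj
          · exact hb
          · exact Finset.disjoint_left.mp hyd (Finset.mem_of_mem_erase hj)
      · rw [if_neg h1, if_pos h2]
        refine ⟨⟨?_, ?_⟩, ?_⟩
        · refine Finset.insert_subset (Finset.mem_Icc.mpr (by omega))
            ((Finset.erase_subset _ _).trans hyV)
        · rw [Finset.card_insert_of_notMem (by simp [h1]), Finset.card_erase_of_mem h2, hyc]
          omega
        · refine Finset.disjoint_left.mpr fun j hj => ?_
          rcases Finset.mem_insert.mp hj with rfl | hj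
          · exact ha
          · exact Finset.disjoint_left.mp hyd (Finset.mem_of_mem_erase hj)
      · rw [if_neg h1, if_neg h2]; exact ⟨⟨hyV, hyc⟩, hyd⟩
    · -- involutive
      intro y hy
      by_cases h1 : 2 * i0 - 1 ∈ y <;> by_cases h2 : 2 * i0 ∈ y
      · simp only [if_pos h1, if_pos h2]
      · have hb' : (2 * i0) ∉ y.erase (2 * i0 - 1) := by simp [h2]
        have e1 : 2 * i0 - 1 ∉ insert (2 * i0) (y.erase (2 * i0 - 1)) := by simp [hne, h2]
        have e2 : 2 * i0 ∈ insert (2 * i0) (y.erase (2 * i0 - 1)) := Finset.mem_insert_self _ _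
        rw [if_pos h1, if_neg h2, if_neg e1, if_pos e2,
          Finset.erase_insert hb', Finset.insert_erase h1]
      · have ha' : (2 * i0 - 1) ∉ y.erase (2 * i0) := by simp [h1]
        have e1 : 2 * i0 - 1 ∈ insert (2 * i0 - 1) (y.erase (2 * i0)) := Finset.mem_insert_self _ _
        have e2 : 2 * i0 ∉ insert (2 * i0 - 1) (y.erase (2 * i0)) := by
          simp [(Ne.symm hne), h1]
        rw [if_neg h1, if_pos h2, if_pos e1, if_neg e2,
          Finset.erase_insert ha', Finset.insert_erase h2]
      · simp only [if_neg h1, if_neg h2]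
  · -- exactly one of each pair in x
    push_neg at hB hC
    have hA : ∀ i ∈ Finset.Icc 1 (k + 1), (2 * i - 1 ∈ x ↔ 2 * i ∉ x) := by
      intro i hi
      have := hB i hi
      have := hC i hi
      tauto
    set v : ℕ → ℕ := fun i => if 2 * i - 1 ∈ x then 2 * i else 2 * i - 1 with hv
    set y0 : Finset ℕ := (Finset.Icc 1 (k + 1)).image v with hy0
    have hinj : Set.InjOn v (Finset.Icc 1 (k + 1)) := by
      intro i hi j hj hij
      simp only [Finset.coe_Icc, Set.mem_Icc] at hi hj
      simp only [hv] at hij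
      split_ifs at hij <;> omega
    have hy0c : y0.card = k + 1 := by
      rw [hy0, Finset.card_image_of_injOn hinj, Nat.card_Icc]
      omega
    have hmemv : ∀ i ∈ Finset.Icc 1 (k + 1), ((2 * i - 1 ∈ y0) ↔ (2 * i - 1 ∉ x)) ∧
        ((2 * i ∈ y0) ↔ (2 * i ∉ x)) := by
      intro i hi
      have hi1 : 1 ≤ i := (Finset.mem_Icc.mp hi).1
      constructor
      · constructor
        · intro h
          obtain ⟨j, hj, hje⟩ := Finset.mem_image.mp h
          have hj1 : 1 ≤ j := (Finset.mem_Icc.mp hj).1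
          simp only [hv] at hje
          split_ifs at hje with hjx
          · omega
          · have : j = i := by omega
            subst this; exact hjx
        · intro h
          refine Finset.mem_image.mpr ⟨i, hi, ?_⟩
          simp [hv, h]
      · constructor
        · intro h
          obtain ⟨j, hj, hje⟩ := Finset.mem_image.mp h
          have hj1 : 1 ≤ j := (Finset.mem_Icc.mp hj).1
          simp only [hv] at hje
          split_ifs at hje with hjx
          · have hji : j = i := by omega
            rw [← hji]
            exact (hA j hj).mp hjx
          · omega
        · intro h
          have hax : 2 * i - 1 ∈ x := (hA i hi).mpr h
          refine Finset.mem_image.mpr ⟨i, hi, ?_⟩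
          simp [hv, hax]
    have hy0V : y0 ⊆ Finset.Icc 1 (3 * k + 2) := by
      intro j hj
      obtain ⟨i, hi, rfl⟩ := Finset.mem_image.mp hj
      have hi1 : 1 ≤ i := (Finset.mem_Icc.mp hi).1
      have hi2 : i ≤ k + 1 := (Finset.mem_Icc.mp hi).2
      simp only [hv]
      split_ifs <;> exact Finset.mem_Icc.mpr (by omega)
    have hy0d : Disjoint y0 x := by
      refine Finset.disjoint_left.mpr fun j hj => ?_
      obtain ⟨i, hi, rfl⟩ := Finset.mem_image.mp hj
      simp only [hv]
      split_ifs with hax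
      · exact (hA i hi).mp hax
      · exact hax
    have hy0mem : y0 ∈ ((Finset.Icc 1 (3 * k + 2)).powerset.filter
        (fun y => y.card = k + 1)).filter (fun y => Disjoint y x) := by
      simp only [Finset.mem_filter, Finset.mem_powerset]
      exact ⟨⟨hy0V, hy0c⟩, hy0d⟩
    rw [Finset.sum_eq_single_of_mem y0 hy0mem ?uniq]
    case uniq =>
      intro y hy hne
      simp only [Finset.mem_filter, Finset.mem_powerset] at hy
      obtain ⟨⟨hyV, hyc⟩, hyd⟩ := hy
      by_contra hfy
      have hxor : ∀ i ∈ Finset.Icc 1 (k + 1), (2 * i - 1 ∈ y ↔ 2 * i ∉ y) := by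
        intro i hi
        refine s17F_xor fun h0 => hfy (Finset.prod_eq_zero hi h0)
      have hsub : y0 ⊆ y := by
        intro j hj
        obtain ⟨i, hi, rfl⟩ := Finset.mem_image.mp hj
        simp only [hv]
        split_ifs with hax
        · have h1 : 2 * i - 1 ∉ y := Finset.disjoint_right.mp hyd hax
          by_contra h2
          exact h1 ((hxor i hi).mpr h2)
        · have hbx : 2 * i ∈ x := by
            by_contra hbx
            exact hax ((hA i hi).mpr hbx)
          have h2 : 2 * i ∉ y := Finset.disjoint_right.mp hyd hbx
          exact (hxor i hi).mpr h2
      exact hne (Finset.eq_of_subset_of_card_le hsub (by omega)).symm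
    -- now evaluate chi of y0
    have : ∀ i ∈ Finset.Icc 1 (k + 1), s17F y0 i = -1 * s17F x i := by
      intro i hi
      obtain ⟨e1, e2⟩ := hmemv i hi
      by_cases hax : 2 * i - 1 ∈ x
      · have hbx : 2 * i ∉ x := (hA i hi).mp hax
        have f1 : 2 * i - 1 ∉ y0 := fun h => (e1.mp h) hax
        have f2 : 2 * i ∈ y0 := e2.mpr hbx
        simp [s17F, hax, hbx, f1, f2]
      · have hbx : 2 * i ∈ x := by
          by_contra hbx; exact hax ((hA i hi).mpr hbx)
        have f1 : 2 * i - 1 ∈ y0 := e1.mpr hax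
        have f2 : 2 * i ∉ y0 := fun h => (e2.mp h) hbx
        simp [s17F, hax, hbx, f1, f2]
    rw [Finset.prod_congr rfl this, Finset.prod_mul_distrib, Finset.prod_const,
      Nat.card_Icc]
    norm_num

theorem s17_choose_lb (k : ℕ) (hk : 2 ≤ k) : 10 ≤ Nat.choose (2 * k + 1) (k + 1) := by
  have h1 : (10 : ℕ) = Nat.choose 5 2 := by decide
  have h2 : Nat.choose 5 2 ≤ Nat.choose (k + 3) 2 := Nat.choose_le_choose 2 (by omega)
  have h3 : Nat.choose (k + 3) 2 = Nat.choose (k + 3) (k + 1) := by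
    have := Nat.choose_symm (n := k + 3) (k := 2) (by omega)
    have he : k + 3 - 2 = k + 1 := by omega
    rw [he] at this
    exact this.symm
  have h4 : Nat.choose (k + 3) (k + 1) ≤ Nat.choose (2 * k + 1) (k + 1) :=
    Nat.choose_le_choose _ (by omega)
  omega

/-- let `n = 3k+2` and `V = {1,…,n}`. The degree-`(k+1)` harmonic
polynomial `χ(x) = ∏_{i=1}^{k+1}(1_{2i−1∈x} − 1_{2i∈x})` on the `(k+1)`-slice is an
eigenfunction of the replacement operator `T_{k+1,k+1}` (averaging over
`(k+1)`-subsets disjoint from `x`, of which there are `C(2k+1,k+1)`), with eigenvalue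
`α = (−1)^{k+1}/C(2k+1,k+1)`; and `|α|/2 ≤ 1/20 < 1/8` for `k ≥ 2`. -/
theorem stmt17 (k : ℕ) :
    let n := 3 * k + 2
    let V : Finset ℕ := Finset.Icc 1 n
    let S : Finset (Finset ℕ) := V.powerset.filter (fun x => x.card = k + 1)
    let chi : Finset ℕ → ℚ := fun x =>
      ∏ i ∈ Finset.Icc 1 (k + 1),
        ((if 2 * i - 1 ∈ x then (1 : ℚ) else 0) - (if 2 * i ∈ x then (1 : ℚ) else 0))
    let TR : (Finset ℕ → ℚ) → Finset ℕ → ℚ := fun h x =>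
      (∑ y ∈ S.filter (fun y => Disjoint y x), h y) / (Nat.choose (2 * k + 1) (k + 1) : ℚ)
    let alpha : ℚ := (-1) ^ (k + 1) / ((Nat.choose (2 * k + 1) (k + 1) : ℕ) : ℚ)
    (∀ x ∈ S, TR chi x = alpha * chi x) ∧
    (2 ≤ k → |alpha| / 2 ≤ 1 / 20) ∧ (1 / 20 : ℚ) < 1 / 8 := by
  intro n V S chi TR alpha
  have hCpos : (0 : ℚ) < ((Nat.choose (2 * k + 1) (k + 1) : ℕ) : ℚ) := by
    exact_mod_cast Nat.choose_pos (by omega)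
  refine ⟨?_, ?_, by norm_num⟩
  · intro x hx
    simp only [S, V, n, Finset.mem_filter, Finset.mem_powerset] at hx
    have hkey := s17_key k x hx.1 hx.2
    show (∑ y ∈ S.filter (fun y => Disjoint y x), chi y)
        / (Nat.choose (2 * k + 1) (k + 1) : ℚ) = alpha * chi x
    have : (∑ y ∈ S.filter (fun y => Disjoint y x), chi y)
        = (-1) ^ (k + 1) * chi x := hkey
    rw [this]
    exact (div_mul_eq_mul_div _ _ _).symm
  · intro hk
    have h10 : (10 : ℚ) ≤ ((Nat.choose (2 * k + 1) (k + 1) : ℕ) : ℚ) := by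
      exact_mod_cast s17_choose_lb k hk
    have habs : |alpha| = 1 / ((Nat.choose (2 * k + 1) (k + 1) : ℕ) : ℚ) := by
      simp only [alpha, abs_div, abs_pow, abs_neg, abs_one, one_pow]
      rw [abs_of_pos hCpos]
    rw [habs]
    have h1 : 1 / ((Nat.choose (2 * k + 1) (k + 1) : ℕ) : ℚ) ≤ 1 / 10 :=
      one_div_le_one_div_of_le (by norm_num) h10
    linarith
end
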